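/- arXiv:1009.4814 — 7 statements merged into one kernel-verified Lean document; each statement's English description precedes it below -/
import Mathlib

section
/- For all u > 0 and ν > 0, the logarithmic derivative of the modified Bessel function of the first kind satisfies the lower bound u·I_ν'(u)/I_ν(u) > √(ν/(ν+1)·u² + ν²). -/
set_option maxHeartbeats 1000000

open Real MeasureTheory Set

/-- The modified Bessel function of the first kind of order `ν`. -/
noncomputable def besselI (ν u : ℝ) : ℝ :=
  ∑' n : ℕ, (u / 2) ^ (2 * (n : ℝ) + ν) / ((n.factorial : ℝ) * Real.Gamma ((n : ℝ) + ν + 1))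

namespace BesselAux

open Filter Topology

/-- shifted-derivative coefficients -/
noncomputable def Dc (f : ℕ → ℝ) (n : ℕ) : ℝ := ((n : ℝ) + 1) * f (n + 1)

lemma Dc_pos {f : ℕ → ℝ} (hf : ∀ n, 0 < f n) (n : ℕ) : 0 < Dc f n := by
  have := hf (n + 1); unfold Dc; positivity

lemma Dc_ratio {f : ℕ → ℝ} (hf : ∀ n, 0 < f n)
    (hr : Tendsto (fun n => f (n + 1) / f n) atTop (𝓝 0)) :
    Tendsto (fun n => Dc f (n + 1) / Dc f n) atTop (𝓝 0) := by
  have h1 : Tendsto (fun n : ℕ => ((n : ℝ) + 2) / ((n : ℝ) + 1)) atTop (𝓝 1) := by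
    have h0 : Tendsto (fun n : ℕ => 1 + 1 / ((n : ℝ) + 1)) atTop (𝓝 (1 + 0)) :=
      tendsto_const_nhds.add tendsto_one_div_add_atTop_nhds_zero_nat
    rw [add_zero] at h0
    refine h0.congr fun n => ?_
    have : ((n : ℝ) + 1) ≠ 0 := by positivity
    field_simp
    ring
  have h2 : Tendsto (fun n : ℕ => f (n + 2) / f (n + 1)) atTop (𝓝 0) := by
    have := hr.comp (tendsto_add_atTop_nat 1)
    exact this
  have h3 := h1.mul h2
  rw [one_mul] at h3
  refine h3.congr fun n => ?_
  unfold Dc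
  push_cast
  rw [div_mul_div_comm]
  ring_nf

lemma summable_coeff_pow {f : ℕ → ℝ} (hf : ∀ n, 0 < f n)
    (hr : Tendsto (fun n => f (n + 1) / f n) atTop (𝓝 0)) (x : ℝ) :
    Summable (fun n => f n * x ^ n) := by
  rcases eq_or_ne x 0 with rfl | hx
  · apply summable_of_ne_finset_zero (s := {0})
    intro n hn
    simp only [Finset.mem_singleton] at hn
    simp [zero_pow hn]
  · apply summable_of_ratio_test_tendsto_lt_one (l := 0) zero_lt_one
    · exact Eventually.of_forall fun n => by
        have := (hf n).ne'
        positivity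
    · have heq : (fun n => ‖f (n + 1) * x ^ (n + 1)‖ / ‖f n * x ^ n‖)
          = fun n => f (n + 1) / f n * |x| := by
        funext n
        have hfn := (hf n)
        have hfn1 := (hf (n + 1))
        rw [norm_mul, norm_mul, norm_pow, norm_pow, Real.norm_eq_abs, Real.norm_eq_abs,
          Real.norm_eq_abs, abs_of_pos hfn, abs_of_pos hfn1, pow_succ]
        have h1 : (0:ℝ) < |x| := abs_pos.2 hx
        field_simp
      rw [heq]
      simpa using hr.mul_const |x|

lemma hasDerivAt_psum {f : ℕ → ℝ} (hf : ∀ n, 0 < f n)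
    (hr : Tendsto (fun n => f (n + 1) / f n) atTop (𝓝 0)) (x : ℝ) :
    HasDerivAt (fun y : ℝ => ∑' n, f n * y ^ n) (∑' n, Dc f n * x ^ n) x := by
  set R : ℝ := |x| + 1 with hRdef
  have hxR : x ∈ Ioo (-R) R := by
    constructor <;> [nlinarith [abs_nonneg x, neg_abs_le x]; nlinarith [le_abs_self x]]
  have hDpos := Dc_pos hf
  have hDratio := Dc_ratio hf hr
  have hsD : Summable fun n => Dc f n * R ^ n := summable_coeff_pow hDpos hDratio R
  have key : HasDerivAt (fun y : ℝ => ∑' n, f (n + 1) * y ^ (n + 1))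
      (∑' n, Dc f n * x ^ n) x := by
    refine hasDerivAt_tsum_of_isPreconnected hsD isOpen_Ioo
      (convex_Ioo (-R) R).isPreconnected
      (g := fun n (y : ℝ) => f (n + 1) * y ^ (n + 1))
      (g' := fun n y => Dc f n * y ^ n) (fun n y _ => ?_) (fun n y hy => ?_) hxR ?_ hxR
    · have h := (hasDerivAt_pow (n + 1) y).const_mul (f (n + 1))
      have : f (n + 1) * (((n : ℕ) + 1 : ℕ) * y ^ (n + 1 - 1)) = Dc f n * y ^ n := by
        unfold Dc; push_cast; ring
      rwa [this] at h
    · have hy' : |y| ≤ R := by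
        rw [abs_le]
        exact ⟨hy.1.le, hy.2.le⟩
      rw [Real.norm_eq_abs, abs_mul, abs_of_pos (hDpos n), abs_pow]
      have : |y| ^ n ≤ R ^ n := pow_le_pow_left₀ (abs_nonneg y) hy' n
      nlinarith [hDpos n]
    · have := summable_coeff_pow hf hr x
      exact (summable_nat_add_iff 1).2 this
  have h2 := key.const_add (f 0)
  have hfun : (fun y : ℝ => f 0 + ∑' n, f (n + 1) * y ^ (n + 1))
      = fun y : ℝ => ∑' n, f n * y ^ n := by
    funext y
    have hs := summable_coeff_pow hf hr y
    rw [Summable.tsum_eq_zero_add hs]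
    simp
  rwa [hfun] at h2

noncomputable def bcoef (ν : ℝ) (n : ℕ) : ℝ :=
  1 / ((n.factorial : ℝ) * Real.Gamma ((n : ℝ) + ν + 1))

variable {ν : ℝ}

lemma bcoef_pos (hν : 0 < ν) (n : ℕ) : 0 < bcoef ν n := by
  have h1 : (0 : ℝ) < n.factorial := by exact_mod_cast n.factorial_pos
  have h2 : 0 < Real.Gamma ((n : ℝ) + ν + 1) :=
    Real.Gamma_pos_of_pos (by positivity)
  unfold bcoef
  positivity

lemma bcoef_rec (hν : 0 < ν) (n : ℕ) :
    ((n : ℝ) + 1) * ((n : ℝ) + ν + 1) * bcoef ν (n + 1) = bcoef ν n := by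
  have h0 : ((n : ℝ) + ν + 1) ≠ 0 := by positivity
  have hG : Real.Gamma (((n + 1 : ℕ) : ℝ) + ν + 1)
      = ((n : ℝ) + ν + 1) * Real.Gamma ((n : ℝ) + ν + 1) := by
    push_cast
    rw [show (n : ℝ) + 1 + ν + 1 = ((n : ℝ) + ν + 1) + 1 by ring,
      Real.Gamma_add_one h0]
  have hGpos : 0 < Real.Gamma ((n : ℝ) + ν + 1) :=
    Real.Gamma_pos_of_pos (by positivity)
  have hfpos : (0 : ℝ) < n.factorial := by exact_mod_cast n.factorial_pos
  unfold bcoef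
  rw [hG, Nat.factorial_succ]
  push_cast
  field_simp

lemma bcoef_ratio (hν : 0 < ν) :
    Tendsto (fun n => bcoef ν (n + 1) / bcoef ν n) atTop (𝓝 0) := by
  have heq : ∀ n : ℕ, bcoef ν (n + 1) / bcoef ν n
      = (((n : ℝ) + 1) * ((n : ℝ) + ν + 1))⁻¹ := by
    intro n
    rw [← bcoef_rec hν n]
    have h1 : bcoef ν (n + 1) ≠ 0 := (bcoef_pos hν (n + 1)).ne'
    have h2 : ((n : ℝ) + 1) ≠ 0 := by positivity
    have h3 : ((n : ℝ) + ν + 1) ≠ 0 := by positivity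
    field_simp
  have hT : Tendsto (fun n : ℕ => ((n : ℝ) + 1) * ((n : ℝ) + ν + 1)) atTop atTop := by
    apply Tendsto.atTop_mul_atTop₀
    · exact tendsto_atTop_add_const_right atTop 1 tendsto_natCast_atTop_atTop
    · have := tendsto_atTop_add_const_right atTop (ν + 1) tendsto_natCast_atTop_atTop
      refine this.congr fun n => by ring
  have := hT.inv_tendsto_atTop
  refine this.congr fun n => (heq n).symm ▸ rfl


variable {ν : ℝ}

noncomputable def besA (ν x : ℝ) : ℝ := ∑' n, bcoef ν n * x ^ n
noncomputable def besB (ν x : ℝ) : ℝ := ∑' n, Dc (bcoef ν) n * x ^ n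
noncomputable def besC (ν x : ℝ) : ℝ := ∑' n, Dc (Dc (bcoef ν)) n * x ^ n

lemma hasDerivAt_besA (hν : 0 < ν) (x : ℝ) : HasDerivAt (besA ν) (besB ν x) x :=
  hasDerivAt_psum (bcoef_pos hν) (bcoef_ratio hν) x

lemma hasDerivAt_besB (hν : 0 < ν) (x : ℝ) : HasDerivAt (besB ν) (besC ν x) x :=
  hasDerivAt_psum (Dc_pos (bcoef_pos hν)) (Dc_ratio (bcoef_pos hν) (bcoef_ratio hν)) x

lemma besA_pos (hν : 0 < ν) {x : ℝ} (hx : 0 ≤ x) : 0 < besA ν x := by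
  refine Summable.tsum_pos (summable_coeff_pow (bcoef_pos hν) (bcoef_ratio hν) x)
    (fun n => mul_nonneg (bcoef_pos hν n).le (pow_nonneg hx n)) 0 ?_
  simpa using bcoef_pos hν 0

lemma besB_pos (hν : 0 < ν) {x : ℝ} (hx : 0 ≤ x) : 0 < besB ν x := by
  refine Summable.tsum_pos (summable_coeff_pow (Dc_pos (bcoef_pos hν))
      (Dc_ratio (bcoef_pos hν) (bcoef_ratio hν)) x)
    (fun n => mul_nonneg (Dc_pos (bcoef_pos hν) n).le (pow_nonneg hx n)) 0 ?_
  simpa using Dc_pos (bcoef_pos hν) 0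

lemma bes_ode (hν : 0 < ν) (x : ℝ) :
    x * besC ν x + (ν + 1) * besB ν x = besA ν x := by
  have hsB : Summable fun n => Dc (bcoef ν) n * x ^ n :=
    summable_coeff_pow (Dc_pos (bcoef_pos hν)) (Dc_ratio (bcoef_pos hν) (bcoef_ratio hν)) x
  have hsC : Summable fun n => Dc (Dc (bcoef ν)) n * x ^ n :=
    summable_coeff_pow (Dc_pos (Dc_pos (bcoef_pos hν)))
      (Dc_ratio (Dc_pos (bcoef_pos hν)) (Dc_ratio (bcoef_pos hν) (bcoef_ratio hν))) x
  set k : ℕ → ℝ := fun n => (n : ℝ) * Dc (bcoef ν) n * x ^ n with hk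
  have hk1 : ∀ n, k (n + 1) = Dc (Dc (bcoef ν)) n * x ^ n * x := by
    intro n
    simp only [hk, Dc]
    push_cast
    ring
  have hks : Summable k := by
    rw [← summable_nat_add_iff 1]
    exact (hsC.mul_right x).congr fun n => (hk1 n).symm
  have hk0 : k 0 = 0 := by simp [hk]
  have h1 : x * besC ν x = ∑' n, k n := by
    rw [mul_comm, besC, ← tsum_mul_right]
    have : (fun n => Dc (Dc (bcoef ν)) n * x ^ n * x) = fun n => k (n + 1) := by
      funext n; exact (hk1 n).symm
    rw [this]
    rw [Summable.tsum_eq_zero_add hks, hk0, zero_add]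
  have h2 : (ν + 1) * besB ν x = ∑' n, (ν + 1) * (Dc (bcoef ν) n * x ^ n) := by
    rw [besB, tsum_mul_left]
  rw [h1, h2, ← Summable.tsum_add hks (hsB.mul_left (ν + 1))]
  show _ = ∑' n, bcoef ν n * x ^ n
  refine tsum_congr fun n => ?_
  simp only [hk, Dc]
  linear_combination x ^ n * bcoef_rec hν n

lemma psi_pos (hν : 0 < ν) {x : ℝ} (hx : 0 < x) :
    0 < ν * besA ν x * besB ν x + x * besB ν x ^ 2 - ν / (ν + 1) * besA ν x ^ 2 := by
  have hν1 : (0 : ℝ) < ν + 1 := by linarith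
  set Φ : ℝ → ℝ := fun y => y ^ (ν + 1) *
    (ν * besA ν y * besB ν y + y * besB ν y ^ 2 - ν / (ν + 1) * besA ν y ^ 2) with hΦ
  have hcontA : Continuous (besA ν) := by
    rw [continuous_iff_continuousAt]
    exact fun y => (hasDerivAt_besA hν y).continuousAt
  have hcontB : Continuous (besB ν) := by
    rw [continuous_iff_continuousAt]
    exact fun y => (hasDerivAt_besB hν y).continuousAt
  have hcont : ContinuousOn Φ (Ici 0) := by
    apply ContinuousOn.mul
    · exact fun z _ =>
        (Real.continuousAt_rpow_const z (ν + 1) (Or.inr hν1.le)).continuousWithinAt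
    · exact ((((continuous_const.mul hcontA).mul hcontB).add
        (continuous_id.mul (hcontB.pow 2))).sub
        (continuous_const.mul (hcontA.pow 2))).continuousOn
  have hderiv : ∀ y : ℝ, 0 < y →
      HasDerivAt Φ (2 / (ν + 1) * y ^ (ν + 1) * besA ν y * besB ν y) y := by
    intro y hy
    have hA := hasDerivAt_besA hν y
    have hB := hasDerivAt_besB hν y
    have hw : HasDerivAt (fun z : ℝ => z ^ (ν + 1)) ((ν + 1) * y ^ (ν + 1 - 1)) y :=
      Real.hasDerivAt_rpow_const (Or.inl hy.ne')
    have hE := (((hA.const_mul ν).mul hB).add ((hasDerivAt_id' y).mul (hB.pow 2))).sub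
      ((hA.pow 2).const_mul (ν / (ν + 1)))
    have hΦd := hw.mul hE
    refine hΦd.congr_deriv ?_
    symm
    simp only [Pi.mul_apply, Pi.add_apply, Pi.sub_apply, Pi.pow_apply]
    have hode : y * besC ν y = besA ν y - (ν + 1) * besB ν y := by
      linear_combination bes_ode hν y
    have hw2 : y ^ (ν + 1 - 1) * y = y ^ (ν + 1) := by
      have h := Real.rpow_add hy (ν + 1 - 1) 1
      rw [Real.rpow_one] at h
      rw [show ν + 1 - 1 + 1 = ν + 1 by ring] at h
      exact h.symm
    rw [← hw2]
    push_cast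
    have hinv : (1 + ν)⁻¹ * (1 + ν) = 1 := inv_mul_cancel₀ (by linarith)
    linear_combination (-(y ^ (ν + 1 - 1) * (ν * besA ν y + 2 * y * besB ν y))) * hode
      + (ν * y ^ (ν + 1 - 1) * besA ν y ^ 2
        + 2 * y ^ (ν + 1 - 1) * y * besA ν y * besB ν y) * hinv
  have hmono : StrictMonoOn Φ (Ici 0) := by
    refine strictMonoOn_of_deriv_pos (convex_Ici 0) hcont ?_
    intro y hy
    rw [interior_Ici, mem_Ioi] at hy
    rw [(hderiv y hy).deriv]
    have hA := besA_pos hν hy.le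
    have hB := besB_pos hν hy.le
    have := Real.rpow_pos_of_pos hy (ν + 1)
    positivity
  have h0 : Φ 0 = 0 := by
    simp [hΦ, Real.zero_rpow hν1.ne']
  have hlt := hmono self_mem_Ici (mem_Ici.2 hx.le) hx
  rw [h0] at hlt
  have hxp := Real.rpow_pos_of_pos hx (ν + 1)
  have hlt' : 0 < x ^ (ν + 1) *
      (ν * besA ν x * besB ν x + x * besB ν x ^ 2 - ν / (ν + 1) * besA ν x ^ 2) := hlt
  by_contra hcon
  push_neg at hcon
  nlinarith [mul_nonpos_of_nonneg_of_nonpos hxp.le hcon]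


end BesselAux

open BesselAux Filter Topology in
theorem besselI_logDeriv_lower_bound (ν u : ℝ) (hu : 0 < u) (hν : 0 < ν) :
    Real.sqrt (ν / (ν + 1) * u ^ 2 + ν ^ 2) < u * deriv (besselI ν) u / besselI ν u := by
  have hν1 : (0 : ℝ) < ν + 1 := by linarith
  have hbes : ∀ v : ℝ, 0 < v → besselI ν v = (v / 2) ^ ν * besA ν (v ^ 2 / 4) := by
    intro v hv
    have hv2 : (0 : ℝ) < v / 2 := by linarith
    unfold besselI
    simp only [besA, bcoef]
    rw [← tsum_mul_left]
    refine tsum_congr fun n => ?_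
    have h1 : (v / 2) ^ (2 * (n : ℝ) + ν) = (v ^ 2 / 4) ^ n * (v / 2) ^ ν := by
      rw [Real.rpow_add hv2]
      congr 1
      rw [show (2 * (n : ℝ)) = ((2 * n : ℕ) : ℝ) by push_cast; ring, Real.rpow_natCast,
        pow_mul]
      congr 1
      ring
    rw [h1]
    ring
  set x : ℝ := u ^ 2 / 4 with hxdef
  have hx : 0 < x := by positivity
  have hu2 : (0 : ℝ) < u / 2 := by linarith
  have hq : HasDerivAt (fun v : ℝ => v ^ 2 / 4) (u / 2) u := by
    have h := (hasDerivAt_pow 2 u).div_const 4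
    refine h.congr_deriv ?_
    push_cast
    ring
  have hcomp : HasDerivAt (fun v : ℝ => besA ν (v ^ 2 / 4)) (besB ν x * (u / 2)) u := by
    have h := (hasDerivAt_besA hν (u ^ 2 / 4)).comp u hq
    exact h
  have hpow : HasDerivAt (fun v : ℝ => (v / 2) ^ ν) (ν * (u / 2) ^ (ν - 1) * (1 / 2)) u := by
    have h1 : HasDerivAt (fun y : ℝ => y ^ ν) (ν * (u / 2) ^ (ν - 1)) (u / 2) :=
      Real.hasDerivAt_rpow_const (Or.inl hu2.ne')
    have h2 : HasDerivAt (fun v : ℝ => v / 2) (1 / 2) u := by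
      simpa using (hasDerivAt_id u).div_const 2
    have h := h1.comp u h2
    exact h
  have hF := hpow.mul hcomp
  have hEq : besselI ν =ᶠ[𝓝 u] fun v => (v / 2) ^ ν * besA ν (v ^ 2 / 4) := by
    filter_upwards [Ioi_mem_nhds hu] with v hv
    exact hbes v hv
  have hI : HasDerivAt (besselI ν)
      (ν * (u / 2) ^ (ν - 1) * (1 / 2) * besA ν x + (u / 2) ^ ν * (besB ν x * (u / 2))) u :=
    hF.congr_of_eventuallyEq hEq
  rw [hI.deriv, hbes u hu]
  have hApos : 0 < besA ν x := besA_pos hν hx.le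
  have hBpos : 0 < besB ν x := besB_pos hν hx.le
  have hPpos : 0 < (u / 2) ^ ν := Real.rpow_pos_of_pos hu2 ν
  have hQpos : 0 < (u / 2) ^ (ν - 1) := Real.rpow_pos_of_pos hu2 (ν - 1)
  have hP : (u / 2) ^ (ν - 1) * (u / 2) = (u / 2) ^ ν := by
    have h := Real.rpow_add hu2 (ν - 1) 1
    rw [Real.rpow_one] at h
    rw [show ν - 1 + 1 = ν by ring] at h
    exact h.symm
  have hval : u * (ν * (u / 2) ^ (ν - 1) * (1 / 2) * besA ν x
        + (u / 2) ^ ν * (besB ν x * (u / 2))) / ((u / 2) ^ ν * besA ν x)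
      = ν + u ^ 2 / 2 * (besB ν x / besA ν x) := by
    rw [← hP]
    field_simp
  rw [hval]
  have hpos : 0 < ν + u ^ 2 / 2 * (besB ν x / besA ν x) := by positivity
  rw [Real.sqrt_lt' hpos]
  have hkey := psi_pos hν hx
  have hexp : (ν + u ^ 2 / 2 * (besB ν x / besA ν x)) ^ 2 - (ν / (ν + 1) * u ^ 2 + ν ^ 2)
      = (u ^ 2 / besA ν x ^ 2) *
        (ν * besA ν x * besB ν x + x * besB ν x ^ 2 - ν / (ν + 1) * besA ν x ^ 2) := by
    rw [hxdef]
    have hA4 : besA ν (u ^ 2 / 4) ≠ 0 := hApos.ne'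
    field_simp
    ring
  nlinarith [mul_pos (div_pos (pow_pos hu 2) (pow_pos hApos 2)) hkey]
end

section
/- For all u > 0 and ν > -1, the logarithmic derivative of the modified Bessel function of the first kind satisfies the upper bound u·I_ν'(u)/I_ν(u) < √(u² + ν²). -/
open Real MeasureTheory Set

private lemma besselI_gamma_pos {ν : ℝ} (hν : -1 < ν) (n : ℕ) :
    0 < Real.Gamma ((n : ℝ) + ν + 1) :=
  Real.Gamma_pos_of_pos (by have := Nat.cast_nonneg (α := ℝ) n; linarith)

private lemma besselI_summable_master {ν : ℝ} (hν : -1 < ν) {q : ℝ} (hq : 0 ≤ q) (w : ℕ → ℝ)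
    (hw : ∀ᶠ n in Filter.atTop, |w (n + 1)| ≤ 2 * |w n|) :
    Summable fun n : ℕ => w n * (q ^ n / ((n.factorial : ℝ) * Real.Gamma ((n : ℝ) + ν + 1))) := by
  have hΓ := besselI_gamma_pos hν
  set c : ℕ → ℝ := fun n => q ^ n / ((n.factorial : ℝ) * Real.Gamma ((n : ℝ) + ν + 1)) with hc
  have hDpos : ∀ n : ℕ, (0:ℝ) < (n.factorial : ℝ) * Real.Gamma ((n : ℝ) + ν + 1) := fun n =>
    mul_pos (by exact_mod_cast n.factorial_pos) (hΓ n)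
  have hcnonneg : ∀ n, 0 ≤ c n := fun n => div_nonneg (pow_nonneg hq n) (hDpos n).le
  have hrec : ∀ n : ℕ, c (n + 1) = c n * (q / (((n : ℝ) + 1) * ((n : ℝ) + ν + 1))) := by
    intro n
    have h1 : ((n : ℝ) + ν + 1) ≠ 0 := by have := Nat.cast_nonneg (α := ℝ) n; intro h; linarith
    have h2 : Real.Gamma (((n + 1 : ℕ) : ℝ) + ν + 1)
        = ((n : ℝ) + ν + 1) * Real.Gamma ((n : ℝ) + ν + 1) := by
      have h3 : ((n + 1 : ℕ) : ℝ) + ν + 1 = ((n : ℝ) + ν + 1) + 1 := by push_cast; ring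
      rw [h3, Real.Gamma_add_one h1]
    simp only [hc, h2, Nat.factorial_succ]
    have h4 : ((n.factorial : ℕ) : ℝ) ≠ 0 := by exact_mod_cast n.factorial_ne_zero
    have h5 : Real.Gamma ((n : ℝ) + ν + 1) ≠ 0 := (hΓ n).ne'
    push_cast
    field_simp
    ring
  apply summable_of_ratio_norm_eventually_le (r := 1 / 2) (by norm_num)
  have hev : ∀ᶠ n : ℕ in Filter.atTop, 4 * q ≤ (n : ℝ) := by
    filter_upwards [Filter.eventually_ge_atTop ⌈4 * q⌉₊] with n hn
    calc 4 * q ≤ (⌈4 * q⌉₊ : ℝ) := Nat.le_ceil _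
    _ ≤ n := Nat.cast_le.mpr hn
  filter_upwards [hw, hev] with n hwn hqn
  have hpos2 : (0:ℝ) < (n : ℝ) + ν + 1 := by have := Nat.cast_nonneg (α := ℝ) n; linarith
  have hratio : q / (((n : ℝ) + 1) * ((n : ℝ) + ν + 1)) ≤ 1 / 4 := by
    rw [div_le_div_iff₀ (by positivity) (by norm_num)]
    nlinarith [Nat.cast_nonneg (α := ℝ) n]
  calc ‖w (n + 1) * c (n + 1)‖ = |w (n + 1)| * c (n + 1) := by
        rw [Real.norm_eq_abs, abs_mul, abs_of_nonneg (hcnonneg _)]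
    _ ≤ (2 * |w n|) * (c n * (q / (((n : ℝ) + 1) * ((n : ℝ) + ν + 1)))) := by
        rw [hrec n]
        exact mul_le_mul hwn le_rfl (by rw [← hrec n]; exact hcnonneg _) (by positivity)
    _ ≤ (2 * |w n|) * (c n * (1 / 4)) := by
        have := hcnonneg n
        gcongr
    _ = 1 / 2 * ‖w n * c n‖ := by
        rw [Real.norm_eq_abs, abs_mul, abs_of_nonneg (hcnonneg _)]; ring

set_option maxHeartbeats 1600000 in
theorem besselI_logDeriv_upper_bound (ν u : ℝ) (hu : 0 < u) (hν : -1 < ν) :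
    u * deriv (besselI ν) u / besselI ν u < Real.sqrt (u ^ 2 + ν ^ 2) := by
  have hu2 : (0:ℝ) < u / 2 := by linarith
  have hΓ := besselI_gamma_pos hν
  set t := Real.sqrt (u ^ 2 + ν ^ 2) with htdef
  have ht2 : t ^ 2 = u ^ 2 + ν ^ 2 := Real.sq_sqrt (by positivity)
  have htpos : 0 < t := Real.sqrt_pos.mpr (by positivity)
  set D : ℕ → ℝ := fun n => (n.factorial : ℝ) * Real.Gamma ((n : ℝ) + ν + 1) with hD
  have hDpos : ∀ n : ℕ, 0 < D n := fun n =>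
    mul_pos (by exact_mod_cast n.factorial_pos) (hΓ n)
  set a : ℕ → ℝ := fun n => (u / 2) ^ (2 * (n : ℝ) + ν) / D n with haa
  have hapos : ∀ n, 0 < a n := fun n => div_pos (Real.rpow_pos_of_pos hu2 _) (hDpos n)
  have ha_eq : ∀ n, a n = (u / 2) ^ ν * (((u / 2) ^ 2) ^ n / D n) := by
    intro n
    have h1 : (u / 2) ^ (2 * (n : ℝ) + ν) = (u / 2) ^ ν * ((u / 2) ^ 2) ^ n := by
      rw [Real.rpow_add hu2]
      have h2 : (2 * (n : ℝ)) = ((2 * n : ℕ) : ℝ) := by push_cast; ring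
      rw [h2, Real.rpow_natCast, pow_mul, mul_comm]
    simp only [haa, h1]; ring
  -- eventual bound for the weights
  have hev2 : ∀ᶠ n : ℕ in Filter.atTop, (5:ℝ) ≤ 2 * (n : ℝ) + ν := by
    filter_upwards [Filter.eventually_ge_atTop ⌈5 - ν⌉₊] with n hn
    have h1 : (5 - ν : ℝ) ≤ (n : ℝ) := le_trans (Nat.le_ceil _) (Nat.cast_le.mpr hn)
    have h2 := Nat.cast_nonneg (α := ℝ) n
    linarith
  -- summabilities
  have hS0 : Summable a := by
    refine (besselI_summable_master hν (q := (u / 2) ^ 2) (by positivity)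
      (fun _ => (u / 2) ^ ν) ?_).congr fun n => ?_
    · filter_upwards with n
      have := abs_nonneg ((u / 2) ^ (ν:ℝ))
      linarith
    · rw [ha_eq n]
  have hS1 : Summable (fun n : ℕ => (2 * (n : ℝ) + ν) * a n) := by
    refine (besselI_summable_master hν (q := (u / 2) ^ 2) (by positivity)
      (fun n => (2 * (n : ℝ) + ν) * (u / 2) ^ ν) ?_).congr fun n => ?_
    · filter_upwards [hev2] with n hn
      have hK := abs_nonneg ((u / 2) ^ (ν:ℝ))
      rw [abs_mul, abs_mul]
      push_cast
      rw [abs_of_nonneg (by linarith : (0:ℝ) ≤ 2 * ((n:ℝ) + 1) + ν),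
        abs_of_nonneg (by linarith : (0:ℝ) ≤ 2 * (n:ℝ) + ν)]
      nlinarith
    · rw [ha_eq n]; ring
  have hS2 : Summable (fun n : ℕ => (2 * (n : ℝ) + ν) ^ 2 * a n) := by
    refine (besselI_summable_master hν (q := (u / 2) ^ 2) (by positivity)
      (fun n => (2 * (n : ℝ) + ν) ^ 2 * (u / 2) ^ ν) ?_).congr fun n => ?_
    · filter_upwards [hev2] with n hn
      have hK := abs_nonneg ((u / 2) ^ (ν:ℝ))
      rw [abs_mul, abs_mul]
      push_cast
      rw [abs_of_nonneg (by nlinarith : (0:ℝ) ≤ (2 * ((n:ℝ) + 1) + ν) ^ 2),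
        abs_of_nonneg (by nlinarith : (0:ℝ) ≤ (2 * (n:ℝ) + ν) ^ 2)]
      have h7 : (2 * ((n:ℝ) + 1) + ν) ^ 2 ≤ 2 * (2 * (n:ℝ) + ν) ^ 2 := by
        nlinarith [sq_nonneg (2 * (n:ℝ) + ν - 5)]
      nlinarith [mul_le_mul_of_nonneg_right h7 hK]
    · rw [ha_eq n]; ring
  -- the shift identity
  have hkey : ∀ n : ℕ, 4 * ((n : ℝ) + 1) * (((n : ℝ) + 1) + ν) * a (n + 1) = u ^ 2 * a n := by
    intro n
    have hne1 : ((n : ℝ) + ν + 1) ≠ 0 := by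
      have := Nat.cast_nonneg (α := ℝ) n; intro h; linarith
    have hne2 : ((n.factorial : ℕ) : ℝ) ≠ 0 := by exact_mod_cast n.factorial_ne_zero
    have hne3 : Real.Gamma ((n : ℝ) + ν + 1) ≠ 0 := (hΓ n).ne'
    have hD1 : D (n + 1) = (((n : ℝ) + 1) * (n.factorial : ℝ))
        * (((n : ℝ) + ν + 1) * Real.Gamma ((n : ℝ) + ν + 1)) := by
      simp only [hD, Nat.factorial_succ]
      have h3 : ((n + 1 : ℕ) : ℝ) + ν + 1 = ((n : ℝ) + ν + 1) + 1 := by push_cast; ring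
      rw [h3, Real.Gamma_add_one hne1]
      push_cast; ring
    rw [ha_eq (n + 1), ha_eq n, hD1, pow_succ]
    have hne4 : ((n : ℝ) + 1) ≠ 0 := by positivity
    have hDn : D n = (n.factorial : ℝ) * Real.Gamma ((n : ℝ) + ν + 1) := rfl
    rw [hDn]
    field_simp
    ring
  have hshift : ∑' n : ℕ, (2 * (n : ℝ) + ν) ^ 2 * a n = (u ^ 2 + ν ^ 2) * ∑' n, a n := by
    set g : ℕ → ℝ := fun n => 4 * (n : ℝ) * ((n : ℝ) + ν) * a n with hgdef
    have hgsum : Summable g := by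
      refine (hS2.sub (hS0.mul_left (ν ^ 2))).congr fun n => ?_
      simp only [hgdef]; ring
    have h2 : ∑' n : ℕ, (2 * (n : ℝ) + ν) ^ 2 * a n = ∑' n : ℕ, (ν ^ 2 * a n + g n) :=
      tsum_congr fun n => by simp only [hgdef]; ring
    rw [h2, Summable.tsum_add (hS0.mul_left _) hgsum, tsum_mul_left]
    have h3 : ∑' n, g n = u ^ 2 * ∑' n, a n := by
      rw [Summable.tsum_eq_zero_add hgsum]
      have h4 : g 0 = 0 := by simp [hgdef]
      have h5 : ∀ n : ℕ, g (n + 1) = u ^ 2 * a n := by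
        intro n
        simp only [hgdef]
        push_cast
        exact hkey n
      rw [h4, tsum_congr h5, tsum_mul_left, zero_add]
    rw [h3]; ring
  -- term-by-term differentiation
  set f' : ℕ → ℝ → ℝ :=
    fun n x => (2 * (n : ℝ) + ν) * (x / 2) ^ (2 * (n : ℝ) + ν - 1) * (1 / 2) / D n with hf'
  have hderiv_each : ∀ (n : ℕ), ∀ x ∈ Ioo (u / 2) (2 * u),
      HasDerivAt (fun y => (y / 2) ^ (2 * (n : ℝ) + ν) / D n) (f' n x) x := by
    intro n x hx
    have hx0 : 0 < x / 2 := by have := hx.1; simp only [mem_Ioo] at hx; linarith [hx.1]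
    have h1 : HasDerivAt (fun y : ℝ => y / 2) (1 / 2) x := (hasDerivAt_id x).div_const 2
    have h2 : HasDerivAt (fun y : ℝ => y ^ (2 * (n : ℝ) + ν))
        ((2 * (n : ℝ) + ν) * (x / 2) ^ (2 * (n : ℝ) + ν - 1)) (x / 2) :=
      Real.hasDerivAt_rpow_const (Or.inl hx0.ne')
    have h3 := (h2.comp x h1).div_const (D n)
    exact h3
  set C := max ((u / 4) ^ (ν - 1)) (u ^ (ν - 1)) with hC
  have hCpos : 0 < C := lt_of_lt_of_le (Real.rpow_pos_of_pos (by linarith) _) (le_max_left _ _)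
  set bnd : ℕ → ℝ := fun n => ((2 * (n : ℝ) + |ν|) * C / 2) * ((u ^ 2) ^ n / D n) with hbnd
  have hbound : ∀ (n : ℕ), ∀ x ∈ Ioo (u / 2) (2 * u), ‖f' n x‖ ≤ bnd n := by
    intro n x hx
    simp only [mem_Ioo] at hx
    obtain ⟨hx1, hx2⟩ := hx
    have hx0 : 0 < x / 2 := by linarith
    have hxu : x / 2 ≤ u := by linarith
    have hxl : u / 4 ≤ x / 2 := by linarith
    have hsplit : (x / 2) ^ (2 * (n : ℝ) + ν - 1) = ((x / 2) ^ 2) ^ n * (x / 2) ^ (ν - 1) := by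
      rw [show 2 * (n : ℝ) + ν - 1 = 2 * (n : ℝ) + (ν - 1) by ring, Real.rpow_add hx0]
      congr 1
      rw [show (2 * (n : ℝ)) = ((2 * n : ℕ) : ℝ) by push_cast; ring, Real.rpow_natCast, pow_mul]
    have hb1 : ((x / 2) ^ 2) ^ n ≤ (u ^ 2) ^ n :=
      pow_le_pow_left₀ (sq_nonneg _) (by nlinarith) n
    have hb2 : (x / 2) ^ (ν - 1) ≤ C := by
      rcases le_or_gt 0 (ν - 1) with h | h
      · exact le_trans (Real.rpow_le_rpow hx0.le hxu h) (le_max_right _ _)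
      · exact le_trans (Real.rpow_le_rpow_of_nonpos (by linarith) hxl h.le) (le_max_left _ _)
    have habs : |2 * (n : ℝ) + ν| ≤ 2 * (n : ℝ) + |ν| := by
      refine (abs_add_le _ _).trans ?_
      rw [abs_of_nonneg (by positivity : (0:ℝ) ≤ 2 * (n : ℝ))]
    have hnorm : ‖f' n x‖
        = |2 * (n : ℝ) + ν| * ((x / 2) ^ (2 * (n : ℝ) + ν - 1) * (1 / 2) / D n) := by
      simp only [hf', Real.norm_eq_abs]
      rw [abs_div, abs_mul, abs_mul, abs_of_pos (Real.rpow_pos_of_pos hx0 _),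
        abs_of_pos (hDpos n), abs_of_pos (by norm_num : (0:ℝ) < 1 / 2)]
      ring
    rw [hnorm, hsplit]
    have hrpow_pos : (0:ℝ) < (x / 2) ^ (ν - 1) := Real.rpow_pos_of_pos hx0 _
    calc |2 * (n : ℝ) + ν| * (((x / 2) ^ 2) ^ n * (x / 2) ^ (ν - 1) * (1 / 2) / D n)
        ≤ (2 * (n : ℝ) + |ν|) * ((u ^ 2) ^ n * C * (1 / 2) / D n) := by
          have hfac : ((x / 2) ^ 2) ^ n * (x / 2) ^ (ν - 1) ≤ (u ^ 2) ^ n * C :=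
            mul_le_mul hb1 hb2 hrpow_pos.le (by positivity)
          have hinner : ((x / 2) ^ 2) ^ n * (x / 2) ^ (ν - 1) * (1 / 2) / D n
              ≤ (u ^ 2) ^ n * C * (1 / 2) / D n :=
            (div_le_div_iff_of_pos_right (hDpos n)).mpr
              (mul_le_mul_of_nonneg_right hfac (by norm_num))
          exact mul_le_mul habs hinner
            (div_nonneg (mul_nonneg (mul_nonneg (pow_nonneg (sq_nonneg _) n) hrpow_pos.le)
              (by norm_num)) (hDpos n).le)
            (by positivity)
      _ = bnd n := by simp only [hbnd]; ring
  have hbnd_sum : Summable bnd := by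
    refine (besselI_summable_master hν (q := u ^ 2) (by positivity)
      (fun n => (2 * (n : ℝ) + |ν|) * C / 2) ?_).congr fun n => by simp only [hbnd, hD]
    filter_upwards [Filter.eventually_ge_atTop 1] with n hn
    have hn1 : (1:ℝ) ≤ (n : ℝ) := by exact_mod_cast hn
    have hν0 := abs_nonneg ν
    push_cast
    rw [abs_of_nonneg (by positivity : (0:ℝ) ≤ (2 * ((n:ℝ) + 1) + |ν|) * C / 2),
      abs_of_nonneg (by positivity : (0:ℝ) ≤ (2 * (n:ℝ) + |ν|) * C / 2)]
    nlinarith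
  have hmem : u ∈ Ioo (u / 2) (2 * u) := by constructor <;> [linarith; linarith]
  have hS0' : Summable fun n : ℕ => (u / 2) ^ (2 * (n : ℝ) + ν) / D n := by
    refine hS0.congr fun n => ?_; rw [haa]
  have hHD : HasDerivAt (besselI ν) (∑' n, f' n u) u := by
    have h := hasDerivAt_tsum_of_isPreconnected hbnd_sum isOpen_Ioo isPreconnected_Ioo
      hderiv_each hbound hmem hS0' hmem
    have hfun : besselI ν = fun z => ∑' n : ℕ, (z / 2) ^ (2 * (n : ℝ) + ν) / D n := by
      funext z; simp only [besselI, hD]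
    rw [hfun]
    exact h
  have hud : u * deriv (besselI ν) u = ∑' n : ℕ, (2 * (n : ℝ) + ν) * a n := by
    rw [hHD.deriv, ← tsum_mul_left]
    refine tsum_congr fun n => ?_
    simp only [hf', haa]
    have h6 : (u / 2) ^ (2 * (n : ℝ) + ν) = (u / 2) ^ (2 * (n : ℝ) + ν - 1) * (u / 2) := by
      rw [← Real.rpow_add_one hu2.ne']
      ring_nf
    rw [h6]
    field_simp
  -- the strict inequality
  have hPsum : Summable (fun n : ℕ => (t - (2 * (n : ℝ) + ν)) ^ 2 * a n) := by
    refine (((hS0.mul_left (t ^ 2)).sub (hS1.mul_left (2 * t))).add hS2).congr fun n => ?_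
    ring
  have hPeq : ∑' n : ℕ, (t - (2 * (n : ℝ) + ν)) ^ 2 * a n
      = 2 * t * (t * ∑' n, a n - ∑' n : ℕ, (2 * (n : ℝ) + ν) * a n) := by
    have h1 : ∀ n : ℕ, (t - (2 * (n : ℝ) + ν)) ^ 2 * a n
        = (t ^ 2 * a n - 2 * t * ((2 * (n : ℝ) + ν) * a n)) + (2 * (n : ℝ) + ν) ^ 2 * a n :=
      fun n => by ring
    rw [tsum_congr h1, Summable.tsum_add ((hS0.mul_left _).sub (hS1.mul_left _)) hS2,
      Summable.tsum_sub (hS0.mul_left _) (hS1.mul_left _), tsum_mul_left, tsum_mul_left, hshift, ← ht2]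
    ring
  have hPpos : 0 < ∑' n : ℕ, (t - (2 * (n : ℝ) + ν)) ^ 2 * a n := by
    have hterm : ∀ n : ℕ, 0 ≤ (t - (2 * (n : ℝ) + ν)) ^ 2 * a n :=
      fun n => mul_nonneg (sq_nonneg _) (hapos n).le
    rcases eq_or_ne t (2 * ((0 : ℕ) : ℝ) + ν) with h | h
    · refine Summable.tsum_pos hPsum hterm 1 ?_
      refine mul_pos (pow_two_pos_of_ne_zero ?_) (hapos 1)
      simp only [Nat.cast_zero] at h
      intro hc
      rw [h] at hc
      push_cast at hc
      nlinarith [sub_eq_zero.mp hc]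
    · exact Summable.tsum_pos hPsum hterm 0
        (mul_pos (pow_two_pos_of_ne_zero (sub_ne_zero.mpr h)) (hapos 0))
  have hS0pos : 0 < ∑' n, a n := Summable.tsum_pos hS0 (fun n => (hapos n).le) 0 (hapos 0)
  have hfinal : ∑' n : ℕ, (2 * (n : ℝ) + ν) * a n < t * ∑' n, a n := by
    have h0 : 0 < 2 * t * (t * ∑' n, a n - ∑' n : ℕ, (2 * (n : ℝ) + ν) * a n) := hPeq ▸ hPpos
    nlinarith
  have hbessel : besselI ν u = ∑' n, a n := by
    simp only [besselI, haa, hD]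
  rw [hbessel, hud, div_lt_iff₀ hS0pos]
  exact hfinal
end

section
/- For all u > 0 and ν > 1, the logarithmic derivative of the modified Bessel function of the second kind satisfies the lower bound u·K_ν'(u)/K_ν(u) > -√(ν/(ν-1)·u² + ν²). -/
open Real MeasureTheory Set Filter Metric
open scoped ENNReal

/-- The modified Bessel function of the second kind of order `ν`. -/
noncomputable def besselK (ν u : ℝ) : ℝ :=
  ∫ t in Ioi (0 : ℝ), Real.exp (-u * Real.cosh t) * Real.cosh (ν * t)

lemma cosh_ge_quadratic (t : ℝ) (ht : 0 ≤ t) : 1 + t^2/2 ≤ Real.cosh t := by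
  have h1 : Real.cosh t = 2 * Real.sinh (t/2)^2 + 1 := by
    have h0 := Real.cosh_two_mul (t/2)
    have h2 := Real.sinh_sq (t/2)
    rw [show (2:ℝ) * (t/2) = t by ring] at h0
    rw [h0, h2]; ring
  have h3 : t/2 ≤ Real.sinh (t/2) := Real.self_le_sinh_iff.2 (by linarith)
  nlinarith [Real.sinh_nonneg_iff.2 (by linarith : (0:ℝ) ≤ t/2)]

lemma key_exp_bound {u : ℝ} (hu : 0 < u) (a : ℝ) {t : ℝ} (ht : 0 ≤ t) :
    Real.exp (a * t - u * Real.cosh t) ≤ Real.exp ((a+1)^2/(2*u)) * Real.exp (-t) := by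
  rw [← Real.exp_add]
  apply Real.exp_le_exp.2
  have h := cosh_ge_quadratic t ht
  have h2 := mul_le_mul_of_nonneg_left h (le_of_lt hu)
  have hC : (a+1)^2 = 2*u*((a+1)^2/(2*u)) := by field_simp
  nlinarith [sq_nonneg ((a+1) - u*t)]

lemma integrable_of_exp_bound {u : ℝ} (hu : 0 < u) {f : ℝ → ℝ} (hf : Continuous f)
    (a : ℝ) (hb : ∀ t, 0 ≤ t → |f t| ≤ Real.exp (a * t - u * Real.cosh t)) :
    IntegrableOn f (Ioi (0:ℝ)) := by
  have hint : IntegrableOn (fun t => Real.exp ((a+1)^2/(2*u)) * Real.exp (-t)) (Ioi (0:ℝ)) := by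
    apply Integrable.const_mul
    simpa [IntegrableOn] using exp_neg_integrableOn_Ioi (0:ℝ) (by norm_num : (0:ℝ) < 1)
  refine hint.mono' hf.aestronglyMeasurable.restrict ?_
  filter_upwards [ae_restrict_mem measurableSet_Ioi] with t ht
  rw [Real.norm_eq_abs]
  calc |f t| ≤ Real.exp (a * t - u * Real.cosh t) := hb t (le_of_lt ht)
    _ ≤ _ := key_exp_bound hu a (le_of_lt ht)

lemma abs_le_exp_abs_mul (ν t : ℝ) (ht : 0 ≤ t) :
    |Real.cosh (ν*t)| ≤ Real.exp (|ν| * t) ∧ |Real.sinh (ν*t)| ≤ Real.exp (|ν| * t) := by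
  have h1 : |Real.cosh (ν*t)| = Real.cosh (|ν| * t) := by
    rw [abs_of_pos (Real.cosh_pos _), ← Real.cosh_abs, abs_mul, abs_of_nonneg ht]
  have h2 : |Real.sinh (ν*t)| = Real.sinh (|ν| * t) := by
    rw [abs_sinh, abs_mul, abs_of_nonneg ht]
  have key : ∀ x : ℝ, 0 ≤ x → Real.sinh x ≤ Real.cosh x ∧ Real.cosh x ≤ Real.exp x := by
    intro x hx
    rw [Real.sinh_eq, Real.cosh_eq]
    have e1 : Real.exp (-x) ≤ Real.exp x := Real.exp_le_exp.2 (by linarith)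
    have e2 : 0 < Real.exp (-x) := Real.exp_pos _
    constructor <;> linarith
  have hx : 0 ≤ |ν| * t := mul_nonneg (abs_nonneg _) ht
  have h3 := (key _ hx).1
  have h4 := (key _ hx).2
  constructor <;> [rw [h1]; rw [h2]] <;> linarith

noncomputable def KI (ν u : ℝ) (n : ℕ) : ℝ :=
  ∫ t in Ioi (0:ℝ), (Real.cosh t)^n * (Real.exp (-u * Real.cosh t) * Real.cosh (ν*t))

lemma besselK_eq_KI (ν u : ℝ) : besselK ν u = KI ν u 0 := by
  simp [besselK, KI]

lemma kern_abs_le (ν : ℝ) (m : ℕ) {v : ℝ} (hv : 0 ≤ v) {t : ℝ} (ht : 0 ≤ t) :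
    |(Real.cosh t)^m * (Real.exp (-v*Real.cosh t) * Real.cosh (ν*t))|
      ≤ Real.exp ((m+|ν|)*t - v*Real.cosh t) := by
  have hc := (abs_le_exp_abs_mul ν t ht).1
  have hce : Real.cosh t ≤ Real.exp t := by
    rw [Real.cosh_eq]
    have e1 : Real.exp (-t) ≤ Real.exp t := Real.exp_le_exp.2 (by linarith)
    linarith [Real.exp_pos t, Real.exp_pos (-t)]
  rw [abs_of_nonneg (by positivity)] at hc ⊢
  calc (Real.cosh t)^m * (Real.exp (-v*Real.cosh t) * Real.cosh (ν*t))
      ≤ (Real.exp t)^m * (Real.exp (-v*Real.cosh t) * Real.exp (|ν| * t)) := by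
        gcongr
    _ = Real.exp ((m+|ν|)*t - v*Real.cosh t) := by
        rw [← Real.exp_nat_mul, ← Real.exp_add, ← Real.exp_add]
        ring_nf

lemma integrableOn_KI (ν : ℝ) {u : ℝ} (hu : 0 < u) (n : ℕ) :
    IntegrableOn (fun t => (Real.cosh t)^n * (Real.exp (-u*Real.cosh t) * Real.cosh (ν*t)))
      (Ioi (0:ℝ)) := by
  apply integrable_of_exp_bound hu (by continuity) (n + |ν|)
  intro t ht
  exact kern_abs_le ν n hu.le ht

lemma KI_pos (ν : ℝ) {u : ℝ} (hu : 0 < u) (n : ℕ) : 0 < KI ν u n := by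
  rw [KI]
  rw [setIntegral_pos_iff_support_of_nonneg_ae ?pos (integrableOn_KI ν hu n)]
  case pos =>
    filter_upwards [ae_restrict_mem measurableSet_Ioi] with t _
    positivity
  have hsub : Ioi (0:ℝ) ⊆ Function.support
      (fun t => (Real.cosh t)^n * (Real.exp (-u*Real.cosh t) * Real.cosh (ν*t))) := by
    intro t _
    simp only [Function.mem_support]
    positivity
  calc (0:ℝ≥0∞) < volume (Ioi (0:ℝ)) := by simp
    _ ≤ _ := measure_mono (subset_inter hsub subset_rfl)

lemma hasDerivAt_KI (ν : ℝ) {u : ℝ} (hu : 0 < u) (n : ℕ) :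
    HasDerivAt (fun x => KI ν x n) (-KI ν u (n+1)) u := by
  have key := hasDerivAt_integral_of_dominated_loc_of_deriv_le
    (μ := volume.restrict (Ioi (0:ℝ))) (x₀ := u) (s := ball u (u/2))
    (F := fun x t => (Real.cosh t)^n * (Real.exp (-x*Real.cosh t) * Real.cosh (ν*t)))
    (F' := fun x t => -((Real.cosh t)^(n+1) * (Real.exp (-x*Real.cosh t) * Real.cosh (ν*t))))
    (bound := fun t => Real.exp ((n+1+|ν|)*t - (u/2)*Real.cosh t))
    (ball_mem_nhds u (by positivity)) ?meas (integrableOn_KI ν hu n) ?meas' ?bdd ?bint ?diff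
  · have h2 := key.2
    rw [integral_neg] at h2
    exact h2
  case meas =>
    filter_upwards with x
    exact (Continuous.aestronglyMeasurable (by continuity)).restrict
  case meas' => exact (Continuous.aestronglyMeasurable (by continuity)).restrict
  case bdd =>
    filter_upwards [ae_restrict_mem measurableSet_Ioi] with t ht x hx
    rw [Real.norm_eq_abs, abs_neg]
    have hx2 : u/2 ≤ x := by
      rw [Metric.mem_ball, Real.dist_eq, abs_lt] at hx
      linarith [hx.1]
    calc |(Real.cosh t)^(n+1) * (Real.exp (-x*Real.cosh t) * Real.cosh (ν*t))|
        ≤ Real.exp (((n+1:ℕ)+|ν|)*t - x*Real.cosh t) := kern_abs_le ν (n+1) (by linarith) ht.le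
      _ ≤ Real.exp ((n+1+|ν|)*t - (u/2)*Real.cosh t) := by
          apply Real.exp_le_exp.2
          have := (Real.cosh_pos t).le
          push_cast
          nlinarith
  case bint =>
    apply integrable_of_exp_bound (by positivity : (0:ℝ) < u/2) (by continuity) (n+1+|ν|)
    intro t ht
    rw [abs_of_nonneg (Real.exp_pos _).le]
  case diff =>
    filter_upwards [ae_restrict_mem measurableSet_Ioi] with t _ x _
    have h1 : HasDerivAt (fun x : ℝ => -x*Real.cosh t) (-1*Real.cosh t) x :=
      (hasDerivAt_id x).neg.mul_const _
    have h2 := ((h1.exp.mul_const (Real.cosh (ν*t))).const_mul ((Real.cosh t)^n))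
    refine h2.congr_deriv ?_
    ring

lemma sinh_kern_abs_le (ν : ℝ) {v : ℝ} (hv : 0 ≤ v) {t : ℝ} (ht : 0 ≤ t) :
    |Real.sinh t * Real.sinh (ν*t) * Real.exp (-v*Real.cosh t)|
      ≤ Real.exp ((1+|ν|)*t - v*Real.cosh t) := by
  have h1 : |Real.sinh t| ≤ Real.exp t := by
    have := (abs_le_exp_abs_mul 1 t ht).2
    simpa using this
  have h2 := (abs_le_exp_abs_mul ν t ht).2
  rw [abs_mul, abs_mul, abs_of_nonneg (Real.exp_pos _).le]
  calc |Real.sinh t| * |Real.sinh (ν*t)| * Real.exp (-v*Real.cosh t)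
      ≤ Real.exp t * Real.exp (|ν| * t) * Real.exp (-v*Real.cosh t) := by gcongr
    _ = Real.exp ((1+|ν|)*t - v*Real.cosh t) := by
        rw [← Real.exp_add, ← Real.exp_add]; ring_nf

lemma integrableOn_sinh_kern (ν : ℝ) {u : ℝ} (hu : 0 < u) :
    IntegrableOn (fun t => Real.sinh t * Real.sinh (ν*t) * Real.exp (-u*Real.cosh t))
      (Ioi (0:ℝ)) :=
  integrable_of_exp_bound hu (by continuity) (1+|ν|) (fun t ht => sinh_kern_abs_le ν hu.le ht)

lemma tendsto_kern_zero {u : ℝ} (hu : 0 < u) {f : ℝ → ℝ} (a : ℝ)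
    (hb : ∀ t, 0 ≤ t → |f t| ≤ Real.exp (a*t - u*Real.cosh t)) :
    Filter.Tendsto f Filter.atTop (nhds 0) := by
  refine squeeze_zero_norm' (a := fun t => Real.exp ((a+1)^2/(2*u)) * Real.exp (-t)) ?_ ?_
  · filter_upwards [Filter.eventually_ge_atTop (0:ℝ)] with t ht
    exact ((hb t ht).trans (key_exp_bound hu a ht))
  · simpa using Real.tendsto_exp_neg_atTop_nhds_zero.const_mul (Real.exp ((a+1)^2/(2*u)))

/-- identity (B): `u * ∫ sinh t sinh (νt) e = ν * KI ν u 0`. -/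
lemma B_id (ν : ℝ) {u : ℝ} (hu : 0 < u) :
    u * (∫ t in Ioi (0:ℝ), Real.sinh t * Real.sinh (ν*t) * Real.exp (-u*Real.cosh t))
      = ν * KI ν u 0 := by
  have hJ := integrableOn_sinh_kern ν hu
  have hK : IntegrableOn (fun t => Real.exp (-u*Real.cosh t) * Real.cosh (ν*t)) (Ioi (0:ℝ)) := by
    have := integrableOn_KI ν hu 0
    simpa using this
  have key : (∫ t in Ioi (0:ℝ),
      (u * (Real.sinh t * Real.sinh (ν*t) * Real.exp (-u*Real.cosh t))
        - ν * (Real.exp (-u*Real.cosh t) * Real.cosh (ν*t)))) = 0 := by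
    have := integral_Ioi_of_hasDerivAt_of_tendsto' (a := (0:ℝ)) (m := (0:ℝ))
      (f := fun t => -(Real.exp (-u*Real.cosh t) * Real.sinh (ν*t)))
      (f' := fun t => u * (Real.sinh t * Real.sinh (ν*t) * Real.exp (-u*Real.cosh t))
        - ν * (Real.exp (-u*Real.cosh t) * Real.cosh (ν*t))) ?deriv ?int ?tend
    · rw [this]; simp
    case deriv =>
      intro t _
      have h1 := ((Real.hasDerivAt_cosh t).const_mul (-u)).exp
      have hinner : HasDerivAt (fun x : ℝ => ν * x) ν t := by
        simpa using (hasDerivAt_id t).const_mul ν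
      have h2 : HasDerivAt (fun x : ℝ => Real.sinh (ν*x)) (Real.cosh (ν*t) * ν) t := by
        simpa [Function.comp_def] using (Real.hasDerivAt_sinh (ν*t)).comp t hinner
      have := (h1.mul h2).neg
      convert this using 1
      · ext x; simp only [Pi.neg_apply, Pi.mul_apply, neg_mul]
      ring
    case int => exact (hJ.const_mul u).sub (hK.const_mul ν)
    case tend =>
      apply tendsto_kern_zero hu (a := |ν|)
      intro t ht
      rw [abs_neg, abs_mul, abs_of_nonneg (Real.exp_pos _).le]
      calc Real.exp (-u*Real.cosh t) * |Real.sinh (ν*t)|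
          ≤ Real.exp (-u*Real.cosh t) * Real.exp (|ν| * t) := by
            gcongr
            exact (abs_le_exp_abs_mul ν t ht).2
        _ = Real.exp (|ν| * t - u*Real.cosh t) := by rw [← Real.exp_add]; congr 1; ring
  rw [integral_sub (hJ.const_mul u) (hK.const_mul ν), integral_const_mul, integral_const_mul,
    sub_eq_zero] at key
  rw [key]
  simp [KI]

lemma tendsto_kern_zero' {u : ℝ} (hu : 0 < u) {f : ℝ → ℝ} (a C : ℝ)
    (hb : ∀ t, 0 ≤ t → |f t| ≤ C * Real.exp (a*t - u*Real.cosh t)) :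
    Filter.Tendsto f Filter.atTop (nhds 0) := by
  have hC : 0 ≤ C := by
    have h := (abs_nonneg (f 0)).trans (hb 0 le_rfl)
    nlinarith [Real.exp_pos (a*0 - u*Real.cosh 0)]
  refine squeeze_zero_norm'
    (a := fun t => C * (Real.exp ((a+1)^2/(2*u)) * Real.exp (-t))) ?_ ?_
  · filter_upwards [Filter.eventually_ge_atTop (0:ℝ)] with t ht
    exact (hb t ht).trans (by
      have := key_exp_bound hu a ht
      calc C * Real.exp (a*t - u*Real.cosh t) ≤ C * (Real.exp ((a+1)^2/(2*u)) * Real.exp (-t)) :=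
        mul_le_mul_of_nonneg_left this hC)
  · have : Filter.Tendsto (fun t : ℝ => Real.exp ((a+1)^2/(2*u)) * Real.exp (-t))
        Filter.atTop (nhds 0) := by
      simpa using Real.tendsto_exp_neg_atTop_nhds_zero.const_mul (Real.exp ((a+1)^2/(2*u)))
    simpa using this.const_mul C

/-- The modified Bessel ODE in integral form. -/
lemma KI_ode (ν : ℝ) {u : ℝ} (hu : 0 < u) :
    u^2 * KI ν u 2 = u * KI ν u 1 + (u^2 + ν^2) * KI ν u 0 := by
  have h0 := integrableOn_KI ν hu 0
  have h1 := integrableOn_KI ν hu 1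
  have h2 := integrableOn_KI ν hu 2
  have hS := integrableOn_sinh_kern ν hu
  have key : (∫ t in Ioi (0:ℝ),
      (u^2 * ((Real.cosh t)^2 * (Real.exp (-u*Real.cosh t) * Real.cosh (ν*t)))
        - u^2 * ((Real.cosh t)^0 * (Real.exp (-u*Real.cosh t) * Real.cosh (ν*t)))
        - u * ((Real.cosh t)^1 * (Real.exp (-u*Real.cosh t) * Real.cosh (ν*t)))
        - (u*ν) * (Real.sinh t * Real.sinh (ν*t) * Real.exp (-u*Real.cosh t)))) = 0 := by
    have := integral_Ioi_of_hasDerivAt_of_tendsto' (a := (0:ℝ)) (m := (0:ℝ))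
      (f := fun t => -(u * Real.sinh t * Real.exp (-u*Real.cosh t) * Real.cosh (ν*t)))
      (f' := fun t =>
        u^2 * ((Real.cosh t)^2 * (Real.exp (-u*Real.cosh t) * Real.cosh (ν*t)))
        - u^2 * ((Real.cosh t)^0 * (Real.exp (-u*Real.cosh t) * Real.cosh (ν*t)))
        - u * ((Real.cosh t)^1 * (Real.exp (-u*Real.cosh t) * Real.cosh (ν*t)))
        - (u*ν) * (Real.sinh t * Real.sinh (ν*t) * Real.exp (-u*Real.cosh t)))
      ?deriv ?int ?tend
    · rw [this]; simp
    case deriv =>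
      intro t _
      have hf1 : HasDerivAt (fun t => u * Real.sinh t) (u * Real.cosh t) t :=
        (Real.hasDerivAt_sinh t).const_mul u
      have hf2 := ((Real.hasDerivAt_cosh t).const_mul (-u)).exp
      have hinner : HasDerivAt (fun x : ℝ => ν * x) ν t := by
        simpa using (hasDerivAt_id t).const_mul ν
      have hf3 : HasDerivAt (fun x : ℝ => Real.cosh (ν*x)) (Real.sinh (ν*t) * ν) t := by
        simpa [Function.comp_def] using (Real.hasDerivAt_cosh (ν*t)).comp t hinner
      have := ((hf1.mul hf2).mul hf3).neg
      convert this using 1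
      · ext x; simp only [Pi.neg_apply, Pi.mul_apply, neg_mul]
      simp only [Pi.mul_apply]
      have hs := Real.sinh_sq t
      linear_combination (-(u^2) * Real.exp (-u*Real.cosh t) * Real.cosh (ν*t)) * hs
    case int =>
      exact (((h2.const_mul _).sub (h0.const_mul _)).sub (h1.const_mul _)).sub (hS.const_mul _)
    case tend =>
      apply tendsto_kern_zero' hu (a := 1+|ν|) (C := u)
      intro t ht
      rw [abs_neg, abs_mul, abs_mul, abs_mul, abs_of_nonneg hu.le,
        abs_of_nonneg (Real.exp_pos _).le]
      have hb1 : |Real.sinh t| ≤ Real.exp t := by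
        simpa using (abs_le_exp_abs_mul 1 t ht).2
      have hb2 := (abs_le_exp_abs_mul ν t ht).1
      calc u * |Real.sinh t| * Real.exp (-u*Real.cosh t) * |Real.cosh (ν*t)|
          ≤ u * Real.exp t * Real.exp (-u*Real.cosh t) * Real.exp (|ν| * t) := by gcongr
        _ = u * Real.exp ((1+|ν|)*t - u*Real.cosh t) := by
            rw [mul_assoc u, mul_assoc, ← Real.exp_add, ← Real.exp_add]
            congr 1; ring
  have iA : IntegrableOn (fun t => u^2 * ((Real.cosh t)^2 * (Real.exp (-u*Real.cosh t) * Real.cosh (ν*t)))) (Ioi (0:ℝ)) := h2.const_mul _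
  have iB : IntegrableOn (fun t => u^2 * ((Real.cosh t)^0 * (Real.exp (-u*Real.cosh t) * Real.cosh (ν*t)))) (Ioi (0:ℝ)) := h0.const_mul _
  have iC : IntegrableOn (fun t => u * ((Real.cosh t)^1 * (Real.exp (-u*Real.cosh t) * Real.cosh (ν*t)))) (Ioi (0:ℝ)) := h1.const_mul _
  have iD : IntegrableOn (fun t => (u*ν) * (Real.sinh t * Real.sinh (ν*t) * Real.exp (-u*Real.cosh t))) (Ioi (0:ℝ)) := hS.const_mul _
  have iAB : IntegrableOn (fun t => u^2 * ((Real.cosh t)^2 * (Real.exp (-u*Real.cosh t) * Real.cosh (ν*t))) - u^2 * ((Real.cosh t)^0 * (Real.exp (-u*Real.cosh t) * Real.cosh (ν*t)))) (Ioi (0:ℝ)) := iA.sub iB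
  have iABC : IntegrableOn (fun t => u^2 * ((Real.cosh t)^2 * (Real.exp (-u*Real.cosh t) * Real.cosh (ν*t))) - u^2 * ((Real.cosh t)^0 * (Real.exp (-u*Real.cosh t) * Real.cosh (ν*t))) - u * ((Real.cosh t)^1 * (Real.exp (-u*Real.cosh t) * Real.cosh (ν*t)))) (Ioi (0:ℝ)) := iAB.sub iC
  rw [integral_sub iABC iD, integral_sub iAB iC, integral_sub iA iB,
      integral_const_mul, integral_const_mul, integral_const_mul, integral_const_mul] at key
  have e0 : (∫ t in Ioi (0:ℝ), (Real.cosh t)^0 * (Real.exp (-u*Real.cosh t) * Real.cosh (ν*t)))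
      = KI ν u 0 := rfl
  have e1 : (∫ t in Ioi (0:ℝ), (Real.cosh t)^1 * (Real.exp (-u*Real.cosh t) * Real.cosh (ν*t)))
      = KI ν u 1 := rfl
  have e2 : (∫ t in Ioi (0:ℝ), (Real.cosh t)^2 * (Real.exp (-u*Real.cosh t) * Real.cosh (ν*t)))
      = KI ν u 2 := rfl
  rw [e0, e1, e2] at key
  have hB := B_id ν hu
  set J := ∫ t in Ioi (0:ℝ), Real.sinh t * Real.sinh (ν*t) * Real.exp (-u*Real.cosh t) with hJdef
  have hJν : u*ν*J = ν^2 * KI ν u 0 := by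
    calc u*ν*J = ν*(u*J) := by ring
      _ = ν*(ν*KI ν u 0) := by rw [hB]
      _ = ν^2 * KI ν u 0 := by ring
  linarith

lemma KI1_eq (ν : ℝ) {u : ℝ} (hu : 0 < u) :
    KI ν u 1 = (KI (ν+1) u 0 + KI (ν-1) u 0)/2 := by
  have hp := integrableOn_KI (ν+1) hu 0
  have hm := integrableOn_KI (ν-1) hu 0
  have hpt : (fun t => (Real.cosh t)^1 * (Real.exp (-u*Real.cosh t) * Real.cosh (ν*t)))
      = fun t => (1/2 : ℝ) * ((Real.cosh t)^0 * (Real.exp (-u*Real.cosh t) * Real.cosh ((ν+1)*t)))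
        + (1/2 : ℝ) * ((Real.cosh t)^0 * (Real.exp (-u*Real.cosh t) * Real.cosh ((ν-1)*t))) := by
    funext t
    have h1 : (ν+1)*t = ν*t + t := by ring
    have h2 : (ν-1)*t = ν*t - t := by ring
    rw [h1, h2, Real.cosh_add, Real.cosh_sub]
    ring
  rw [KI, hpt, integral_add (hp.const_mul _) (hm.const_mul _), integral_const_mul,
    integral_const_mul]
  rw [KI, KI]
  ring

lemma KI_pm (ν : ℝ) {u : ℝ} (hu : 0 < u) :
    KI (ν+1) u 0 - KI (ν-1) u 0 = (2*ν/u) * KI ν u 0 := by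
  have hp := integrableOn_KI (ν+1) hu 0
  have hm := integrableOn_KI (ν-1) hu 0
  have key : KI (ν+1) u 0 - KI (ν-1) u 0
      = ∫ t in Ioi (0:ℝ), 2 * (Real.sinh t * Real.sinh (ν*t) * Real.exp (-u*Real.cosh t)) := by
    rw [KI, KI, ← integral_sub hp hm]
    congr 1
    funext t
    have h1 : (ν+1)*t = ν*t + t := by ring
    have h2 : (ν-1)*t = ν*t - t := by ring
    rw [h1, h2, Real.cosh_add, Real.cosh_sub]
    ring
  rw [key, integral_const_mul]
  have hB := B_id ν hu
  set J := ∫ t in Ioi (0:ℝ), Real.sinh t * Real.sinh (ν*t) * Real.exp (-u*Real.cosh t) with hJ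
  have h2 : (2:ℝ) * J = (2/u) * (u * J) := by field_simp
  rw [h2, hB]
  ring

lemma KI0_mono (ν : ℝ) (hν : 1 < ν) {u : ℝ} (hu : 0 < u) :
    KI (ν-1) u 0 < KI ν u 0 := by
  have hm := integrableOn_KI (ν-1) hu 0
  have h0 := integrableOn_KI ν hu 0
  have key : 0 < KI ν u 0 - KI (ν-1) u 0 := by
    have hd : IntegrableOn (fun t => (Real.cosh t)^0 * (Real.exp (-u*Real.cosh t) * Real.cosh (ν*t))
        - (Real.cosh t)^0 * (Real.exp (-u*Real.cosh t) * Real.cosh ((ν-1)*t))) (Ioi (0:ℝ)) :=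
      h0.sub hm
    rw [KI, KI, ← integral_sub h0 hm]
    rw [setIntegral_pos_iff_support_of_nonneg_ae ?pos hd]
    case pos =>
      filter_upwards [ae_restrict_mem measurableSet_Ioi] with t ht
      simp only [Pi.zero_apply, pow_zero, one_mul]
      have : Real.cosh ((ν-1)*t) ≤ Real.cosh (ν*t) := by
        rw [Real.cosh_le_cosh, abs_mul, abs_mul, abs_of_pos (mem_Ioi.1 ht)]
        have : |ν - 1| ≤ |ν| := by
          rw [abs_of_pos (by linarith : (0:ℝ) < ν - 1), abs_of_pos (by linarith : (0:ℝ) < ν)]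
          linarith
        nlinarith [le_of_lt (mem_Ioi.1 ht)]
      have he := Real.exp_pos (-u*Real.cosh t)
      nlinarith
    have hsub : Ioi (0:ℝ) ⊆ Function.support
        (fun t => (Real.cosh t)^0 * (Real.exp (-u*Real.cosh t) * Real.cosh (ν*t))
          - (Real.cosh t)^0 * (Real.exp (-u*Real.cosh t) * Real.cosh ((ν-1)*t))) := by
      intro t ht
      simp only [Function.mem_support, pow_zero, one_mul]
      have hlt : Real.cosh ((ν-1)*t) < Real.cosh (ν*t) := by
        rw [Real.cosh_lt_cosh, abs_mul, abs_mul, abs_of_pos (mem_Ioi.1 ht)]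
        have : |ν - 1| < |ν| := by
          rw [abs_of_pos (by linarith : (0:ℝ) < ν - 1), abs_of_pos (by linarith : (0:ℝ) < ν)]
          linarith
        have ht' : (0:ℝ) < t := ht
        nlinarith
      have he := Real.exp_pos (-u*Real.cosh t)
      intro hcon
      nlinarith
    calc (0:ℝ≥0∞) < volume (Ioi (0:ℝ)) := by simp
      _ ≤ _ := measure_mono (subset_inter hsub subset_rfl)
  linarith

lemma KI1_lt (ν : ℝ) (hν : 1 < ν) {u : ℝ} (hu : 0 < u) :
    u * KI ν u 1 < (u + ν) * KI ν u 0 := by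
  have h1 := KI1_eq ν hu
  have h2 := KI_pm ν hu
  have h3 := KI0_mono ν hν hu
  have h4 : u * KI ν u 1 = u * KI (ν-1) u 0 + ν * KI ν u 0 := by
    rw [h1]
    have : KI (ν+1) u 0 = KI (ν-1) u 0 + (2*ν/u) * KI ν u 0 := by linarith
    rw [this]
    field_simp
    ring
  nlinarith

lemma s_deriv (ν : ℝ) (hν : 1 < ν) {x : ℝ} (hx : 0 < x) :
    ∃ d, HasDerivAt (fun y => y * KI ν y 1 / KI ν y 0 - Real.sqrt (ν/(ν-1)*y^2+ν^2)) d x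
      ∧ (Real.sqrt (ν/(ν-1)*x^2+ν^2) * KI ν x 0 ≤ x * KI ν x 1 → 0 < d) := by
  have hk0 := KI_pos ν hx 0
  have hk1 := KI_pos ν hx 1
  have hd0 := hasDerivAt_KI ν hx 0
  have hd1 := hasDerivAt_KI ν hx 1
  have hnum : HasDerivAt (fun y => y * KI ν y 1)
      (1 * KI ν x 1 + x * -KI ν x 2) x := (hasDerivAt_id x).mul hd1
  have hq : HasDerivAt (fun y => y * KI ν y 1 / KI ν y 0)
      (((1 * KI ν x 1 + x * -KI ν x 2) * KI ν x 0 - x * KI ν x 1 * -KI ν x 1)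
        / (KI ν x 0)^2) x := hnum.div hd0 (ne_of_gt hk0)
  have hin : HasDerivAt (fun y : ℝ => ν/(ν-1)*y^2+ν^2) (ν/(ν-1)*(2*x)) x := by
    have h := ((hasDerivAt_pow 2 x).const_mul (ν/(ν-1))).add_const (ν^2)
    refine h.congr_deriv ?_
    ring
  have hgx : (0:ℝ) < ν/(ν-1)*x^2+ν^2 := by
    have h1 : (0:ℝ) < ν/(ν-1) := div_pos (by linarith) (by linarith)
    nlinarith
  have hsq : HasDerivAt (fun y => Real.sqrt (ν/(ν-1)*y^2+ν^2))
      ((ν/(ν-1)*(2*x)) / (2 * Real.sqrt (ν/(ν-1)*x^2+ν^2))) x := hin.sqrt (ne_of_gt hgx)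
  refine ⟨_, hq.sub hsq, ?_⟩
  intro hs
  set g := Real.sqrt (ν/(ν-1)*x^2+ν^2) with hg
  have hgpos : 0 < g := Real.sqrt_pos.2 hgx
  have hg2 : g^2 = ν/(ν-1)*x^2+ν^2 := Real.sq_sqrt hgx.le
  have hgν : ν < g := by
    have hpos : 0 < ν/(ν-1)*x^2 := mul_pos (div_pos (by linarith) (by linarith)) (by positivity)
    nlinarith [hpos, hgpos]
  have hode := KI_ode ν hx
  have hk2 := KI_pos ν hx 2
  set k0 := KI ν x 0
  set k1 := KI ν x 1
  set k2 := KI ν x 2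
  rw [sub_pos]
  rw [div_lt_div_iff₀ (by positivity) (by positivity)]
  have hsq2 : (g*k0)^2 ≤ (x*k1)^2 := by
    have h1 : 0 ≤ g*k0 := by positivity
    nlinarith
  have hν1 : (0:ℝ) < ν - 1 := by linarith
  have hg2' : (ν-1) * g^2 = ν*x^2 + (ν-1)*ν^2 := by
    rw [hg2]; field_simp
  rw [div_mul_eq_mul_div, div_mul_eq_mul_div, div_lt_iff₀ hν1]
  have e2 : x^2*k0^2 ≤ (ν-1)*(x^2*k1^2 - (x^2+ν^2)*k0^2) := by
    nlinarith [mul_le_mul_of_nonneg_left hsq2 hν1.le, hg2', sq_nonneg k0, sq_nonneg x]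
  have e1 : x * ((((1:ℝ)*k1 + x*(-k2))*k0 - x*k1*(-k1)) * (2*g) * (ν-1))
      = 2*g*((ν-1)*(x^2*k1^2 - (x^2+ν^2)*k0^2)) := by
    linear_combination (-(2*g*(ν-1)*k0)) * hode
  have e3 : x * (ν*(2*x)*k0^2) < x * ((((1:ℝ)*k1 + x*(-k2))*k0 - x*k1*(-k1)) * (2*g) * (ν-1)) := by
    rw [e1]
    nlinarith [mul_pos (mul_pos hx hx) (mul_pos hk0 hk0), e2, hgν,
      mul_lt_mul_of_pos_right hgν (mul_pos (mul_pos hx hx) (mul_pos hk0 hk0)),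
      mul_le_mul_of_nonneg_left e2 (by positivity : (0:ℝ) ≤ 2*g)]
  exact lt_of_mul_lt_mul_left e3 hx.le

theorem besselK_logDeriv_lower_bound (ν u : ℝ) (hu : 0 < u) (hν : 1 < ν) :
    -Real.sqrt (ν / (ν - 1) * u ^ 2 + ν ^ 2) < u * deriv (besselK ν) u / besselK ν u := by
  have hbK : besselK ν = fun x => KI ν x 0 := funext fun x => besselK_eq_KI ν x
  have hder : deriv (besselK ν) u = -KI ν u 1 := by
    rw [hbK]
    have := (hasDerivAt_KI ν hu 0).deriv
    simpa using this
  have hk0 := KI_pos ν hu 0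
  have hk1 := KI_pos ν hu 1
  have hsqnn : 0 ≤ Real.sqrt (ν / (ν - 1) * u ^ 2 + ν ^ 2) := Real.sqrt_nonneg _
  rw [hder, hbK]
  simp only []
  suffices h : u * KI ν u 1 / KI ν u 0 < Real.sqrt (ν/(ν-1)*u^2+ν^2) by
    have heq : u * -KI ν u 1 / KI ν u 0 = -(u * KI ν u 1 / KI ν u 0) := by ring
    rw [heq]
    linarith
  by_contra hcon
  push_neg at hcon
  set S : ℝ → ℝ := fun y => y * KI ν y 1 / KI ν y 0 - Real.sqrt (ν/(ν-1)*y^2+ν^2) with hS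
  have hSu : 0 ≤ S u := by
    simp only [hS]
    linarith
  set u1 := max u (2*ν*(ν-1)) + 1 with hu1def
  have huu1 : u ≤ u1 := le_trans (le_max_left _ _) (by linarith)
  have h2ν : 2*ν*(ν-1) < u1 := lt_of_le_of_lt (le_max_right _ _) (by linarith)
  have hu1pos : 0 < u1 := lt_of_lt_of_le hu huu1
  have hper : Icc u u1 ⊆ {y | 0 ≤ S y} := by
    apply IsClosed.Icc_subset_of_forall_exists_gt
    · have hcont : ContinuousOn S (Icc u u1) := by
        intro y hy
        have hy0 : 0 < y := lt_of_lt_of_le hu hy.1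
        obtain ⟨d, hd, -⟩ := s_deriv ν hν hy0
        exact (hd.continuousAt).continuousWithinAt
      have hcl := hcont.preimage_isClosed_of_isClosed isClosed_Icc (isClosed_Ici (a := (0:ℝ)))
      convert hcl using 1
      ext y
      simp only [mem_inter_iff, mem_setOf_eq, mem_preimage, mem_Ici, and_comm]
    · exact hSu
    · rintro x ⟨hxS, hxI⟩ y hy
      simp only [mem_setOf_eq] at hxS
      have hx0 : 0 < x := lt_of_lt_of_le hu hxI.1
      obtain ⟨d, hd, hdpos'⟩ := s_deriv ν hν hx0
      have hk0x := KI_pos ν hx0 0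
      have hd' : 0 < d := by
        apply hdpos'
        have hle : Real.sqrt (ν/(ν-1)*x^2+ν^2) ≤ x * KI ν x 1 / KI ν x 0 := by
          simp only [hS] at hxS
          linarith
        calc Real.sqrt (ν/(ν-1)*x^2+ν^2) * KI ν x 0
            ≤ (x * KI ν x 1 / KI ν x 0) * KI ν x 0 :=
              mul_le_mul_of_nonneg_right hle hk0x.le
          _ = x * KI ν x 1 := by field_simp
      have hslope := hasDerivAt_iff_tendsto_slope.mp hd
      have hev : ∀ᶠ z in nhdsWithin x (Ioi x), 0 < slope S x z := by
        have h1 : nhdsWithin x (Ioi x) ≤ nhdsWithin x {x}ᶜ :=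
          nhdsWithin_mono x (fun z hz => ne_of_gt hz)
        exact ((hslope.mono_left h1)).eventually (eventually_gt_nhds hd')
      have hmem : Ioc x y ∈ nhdsWithin x (Ioi x) := Ioc_mem_nhdsGT hy
      obtain ⟨z, hz1, hz2⟩ := (hev.and (eventually_of_mem hmem (fun z hz => hz))).exists
      refine ⟨z, ?_, hz2⟩
      have hsl : 0 < (S z - S x)/(z - x) := by rwa [slope_def_field] at hz1
      have hzx : 0 < z - x := sub_pos.2 hz2.1
      have hSzx : 0 < S z - S x := by
        have hmul := mul_pos hsl hzx
        rwa [div_mul_cancel₀ _ (ne_of_gt hzx)] at hmul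
      simp only [mem_setOf_eq]
      linarith
  have hfin : 0 ≤ S u1 := hper ⟨huu1, le_refl u1⟩
  have hk0' := KI_pos ν hu1pos 0
  have hlt := KI1_lt ν hν hu1pos
  have hge : u1 + ν ≤ Real.sqrt (ν/(ν-1)*u1^2+ν^2) := by
    apply Real.le_sqrt_of_sq_le
    have hfrac : ν/(ν-1)*u1^2 * (ν-1) = ν*u1^2 := by
      have hne : ν - 1 ≠ 0 := ne_of_gt (by linarith)
      field_simp
    nlinarith [hfrac, mul_pos hu1pos (sub_pos.2 hν), h2ν, hu1pos]
  have hneg : S u1 < 0 := by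
    simp only [hS]
    have h1 : u1 * KI ν u1 1 / KI ν u1 0 < u1 + ν := by
      rw [div_lt_iff₀ hk0']
      linarith
    linarith
  linarith
end

section
/- For all u > 0 and all ν ∈ ℝ, the logarithmic derivative of the modified Bessel function of the second kind satisfies the upper bound u·K_ν'(u)/K_ν(u) < -√(u² + ν²). -/
open Real MeasureTheory Set Filter

namespace BesselAux

lemma one_add_sq_half_le_cosh (t : ℝ) (ht : 0 ≤ t) : 1 + t ^ 2 / 2 ≤ Real.cosh t := by
  have h1 : Real.cosh t = Real.cosh (t / 2) ^ 2 + Real.sinh (t / 2) ^ 2 := by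
    rw [← Real.cosh_two_mul]; ring_nf
  have h2 : Real.cosh (t / 2) ^ 2 = Real.sinh (t / 2) ^ 2 + 1 := Real.cosh_sq _
  have h3 : t / 2 ≤ Real.sinh (t / 2) := by
    rw [Real.self_le_sinh_iff]; linarith
  nlinarith [h3]

lemma cosh_le_exp_abs (x : ℝ) : Real.cosh x ≤ Real.exp |x| := by
  rw [← Real.cosh_abs, Real.cosh_eq]
  have h : (-|x| : ℝ) ≤ |x| := by linarith [abs_nonneg x]
  linarith [Real.exp_le_exp.2 h]

lemma sinh_le_cosh (x : ℝ) : Real.sinh x ≤ Real.cosh x := by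
  rw [Real.sinh_eq, Real.cosh_eq]; linarith [Real.exp_pos (-x)]

lemma abs_sinh_le_cosh (x : ℝ) : |Real.sinh x| ≤ Real.cosh x := by
  rw [Real.abs_sinh, ← Real.cosh_abs]; exact sinh_le_cosh _

/-- The master exponential bound. -/
lemma kernel_le {c : ℝ} (hc : 0 < c) {d t : ℝ} (ht : 0 ≤ t) :
    Real.exp (-c * Real.cosh t + d * t) ≤
      Real.exp ((d + 1) ^ 2 / (2 * c)) * Real.exp (-t) := by
  rw [← Real.exp_add, Real.exp_le_exp]
  have h := one_add_sq_half_le_cosh t ht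
  have key : -c * (1 + t ^ 2 / 2) + d * t ≤ (d + 1) ^ 2 / (2 * c) + -t := by
    rw [div_add' _ _ _ (by positivity), le_div_iff₀ (by positivity)]
    nlinarith [sq_nonneg (c * t - (d + 1))]
  calc -c * Real.cosh t + d * t ≤ -c * (1 + t ^ 2 / 2) + d * t := by nlinarith
    _ ≤ _ := key

lemma integrable_kernel {c : ℝ} (hc : 0 < c) (d : ℝ) :
    IntegrableOn (fun t => Real.exp (-c * Real.cosh t + d * t)) (Ioi 0) := by
  apply Integrable.mono' ((exp_neg_integrableOn_Ioi 0 one_pos).const_mul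
    (Real.exp ((d + 1) ^ 2 / (2 * c))))
  · exact (Real.continuous_exp.comp (by continuity)).aestronglyMeasurable
  · rw [ae_restrict_iff' measurableSet_Ioi]
    filter_upwards with t ht
    rw [Real.norm_eq_abs, abs_of_pos (Real.exp_pos _)]
    simpa [neg_mul, one_mul] using kernel_le hc (le_of_lt ht) (d := d)

lemma integrable_of_le_kernel {c : ℝ} (hc : 0 < c) (d M : ℝ) {g : ℝ → ℝ}
    (hg : Continuous g)
    (hb : ∀ t ∈ Ioi (0 : ℝ), |g t| ≤ M * Real.exp (-c * Real.cosh t + d * t)) :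
    IntegrableOn g (Ioi 0) := by
  apply Integrable.mono' ((integrable_kernel hc d).const_mul M) hg.aestronglyMeasurable
  rw [ae_restrict_iff' measurableSet_Ioi]
  filter_upwards with t ht
  simpa [Real.norm_eq_abs] using hb t ht

end BesselAux

namespace BesselAux

lemma cosh_mul_le (a t : ℝ) (ht : 0 ≤ t) : Real.cosh (a * t) ≤ Real.exp (|a| * t) := by
  have := cosh_le_exp_abs (a * t)
  rwa [abs_mul, abs_of_nonneg ht] at this

lemma cosh_le_exp (t : ℝ) (ht : 0 ≤ t) : Real.cosh t ≤ Real.exp t := by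
  have := cosh_le_exp_abs t; rwa [abs_of_nonneg ht] at this

variable {u : ℝ}

lemma int_f (hu : 0 < u) (ν : ℝ) :
    IntegrableOn (fun t => Real.exp (-u * Real.cosh t) * Real.cosh (ν * t)) (Ioi 0) := by
  apply integrable_of_le_kernel hu |ν| 1 (by continuity)
  intro t ht
  have ht' : (0 : ℝ) ≤ t := le_of_lt ht
  rw [abs_of_nonneg (by positivity), one_mul, Real.exp_add]
  exact mul_le_mul_of_nonneg_left (cosh_mul_le ν t ht') (le_of_lt (Real.exp_pos _))

lemma int_cosh_f (hu : 0 < u) (ν : ℝ) :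
    IntegrableOn (fun t => Real.cosh t *
      (Real.exp (-u * Real.cosh t) * Real.cosh (ν * t))) (Ioi 0) := by
  apply integrable_of_le_kernel hu (|ν| + 1) 1 (by continuity)
  intro t ht
  have ht' : (0 : ℝ) ≤ t := le_of_lt ht
  rw [abs_of_nonneg (by positivity), one_mul, Real.exp_add]
  have h1 : Real.cosh t * (Real.exp (-u * Real.cosh t) * Real.cosh (ν * t)) ≤
      Real.exp t * (Real.exp (-u * Real.cosh t) * Real.exp (|ν| * t)) := by
    have e1 := Real.exp_pos (-u * Real.cosh t)
    have h4 : Real.cosh t * Real.cosh (ν * t) ≤ Real.exp t * Real.exp (|ν| * t) :=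
      mul_le_mul (cosh_le_exp t ht') (cosh_mul_le ν t ht')
        (le_of_lt (Real.cosh_pos _)) (le_of_lt (Real.exp_pos _))
    nlinarith [mul_le_mul_of_nonneg_left h4 (le_of_lt e1)]
  calc Real.cosh t * (Real.exp (-u * Real.cosh t) * Real.cosh (ν * t)) ≤ _ := h1
    _ = Real.exp (-u * Real.cosh t) * Real.exp ((|ν| + 1) * t) := by
        rw [← Real.exp_add, ← Real.exp_add, ← Real.exp_add]; ring_nf

lemma int_sinh_f (hu : 0 < u) (ν : ℝ) :
    IntegrableOn (fun t => Real.sinh t *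
      (Real.exp (-u * Real.cosh t) * Real.cosh (ν * t))) (Ioi 0) := by
  apply (int_cosh_f hu ν).mono' (Continuous.aestronglyMeasurable (by continuity))
  rw [ae_restrict_iff' measurableSet_Ioi]
  filter_upwards with t ht
  have hE : (0:ℝ) ≤ Real.exp (-u * Real.cosh t) * Real.cosh (ν * t) := by positivity
  rw [Real.norm_eq_abs, abs_mul, abs_of_nonneg hE]
  exact mul_le_mul_of_nonneg_right (abs_sinh_le_cosh t) hE

lemma int_sinh_sinh (hu : 0 < u) (m : ℝ) :
    IntegrableOn (fun t => Real.exp (-u * Real.cosh t) *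
      (Real.sinh t * Real.sinh (m * t))) (Ioi 0) := by
  apply (int_cosh_f hu m).mono' (Continuous.aestronglyMeasurable (by continuity))
  rw [ae_restrict_iff' measurableSet_Ioi]
  filter_upwards with t ht
  rw [Real.norm_eq_abs, abs_mul, abs_of_nonneg (le_of_lt (Real.exp_pos _)), abs_mul]
  have h1 : |Real.sinh t| ≤ Real.cosh t := abs_sinh_le_cosh t
  have h2 : |Real.sinh (m * t)| ≤ Real.cosh (m * t) := abs_sinh_le_cosh _
  have := Real.exp_pos (-u * Real.cosh t)
  have h3 : |Real.sinh t| * |Real.sinh (m * t)| ≤ Real.cosh t * Real.cosh (m * t) :=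
    mul_le_mul h1 h2 (abs_nonneg _) (le_of_lt (Real.cosh_pos _))
  nlinarith [h3]

end BesselAux

namespace BesselAux

variable {u : ℝ}

lemma besselK_pos (hu : 0 < u) (ν : ℝ) : 0 < besselK ν u := by
  rw [besselK, setIntegral_pos_iff_support_of_nonneg_ae]
  · refine lt_of_lt_of_le ?_ (measure_mono (fun t (ht : t ∈ Ioi (0:ℝ)) => ?_))
    · rw [Real.volume_Ioi]; exact ENNReal.zero_lt_top
    · refine ⟨?_, ht⟩
      simp only [Function.mem_support]
      positivity
  · exact (ae_restrict_iff' measurableSet_Ioi).mpr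
      (Eventually.of_forall fun t ht => by positivity)
  · exact int_f hu ν

lemma hasDerivAt_besselK (hu : 0 < u) (ν : ℝ) :
    HasDerivAt (besselK ν)
      (-∫ t in Ioi (0:ℝ), Real.cosh t * (Real.exp (-u * Real.cosh t) * Real.cosh (ν * t)))
      u := by
  have main := hasDerivAt_integral_of_dominated_loc_of_deriv_le
    (μ := volume.restrict (Ioi (0:ℝ))) (x₀ := u) (s := Metric.ball u (u / 2))
    (F := fun x t => Real.exp (-x * Real.cosh t) * Real.cosh (ν * t))
    (F' := fun x t => -(Real.cosh t * (Real.exp (-x * Real.cosh t) * Real.cosh (ν * t))))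
    (bound := fun t => Real.exp (-(u / 2) * Real.cosh t + (|ν| + 1) * t))
    (Metric.ball_mem_nhds u (half_pos hu))
    (Eventually.of_forall fun x => (Continuous.aestronglyMeasurable (by continuity)))
    (int_f hu ν)
    (Continuous.aestronglyMeasurable (by continuity))
    ?_ (integrable_kernel (half_pos hu) _) ?_
  · have h2 := main.2
    have : besselK ν = fun x => ∫ t in Ioi (0:ℝ),
        Real.exp (-x * Real.cosh t) * Real.cosh (ν * t) := rfl
    rw [this]
    refine h2.congr_deriv ?_
    rw [← integral_neg]
  · rw [ae_restrict_iff' measurableSet_Ioi]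
    filter_upwards with t ht
    intro x hx
    have ht' : (0:ℝ) ≤ t := le_of_lt ht
    have hx2 : u / 2 ≤ x := by
      rw [Metric.mem_ball, Real.dist_eq, abs_lt] at hx; linarith
    have hE : Real.exp (-x * Real.cosh t) ≤ Real.exp (-(u / 2) * Real.cosh t) := by
      apply Real.exp_le_exp.2
      have := le_of_lt (Real.cosh_pos (x := t))
      nlinarith
    rw [Real.norm_eq_abs, abs_neg, abs_of_nonneg (by positivity), Real.exp_add]
    have h4 : Real.cosh t * Real.cosh (ν * t) ≤ Real.exp t * Real.exp (|ν| * t) :=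
      mul_le_mul (cosh_le_exp t ht') (cosh_mul_le ν t ht')
        (le_of_lt (Real.cosh_pos _)) (le_of_lt (Real.exp_pos _))
    have h5 : Real.cosh t * (Real.exp (-x * Real.cosh t) * Real.cosh (ν * t)) ≤
        Real.exp (-(u / 2) * Real.cosh t) * (Real.cosh t * Real.cosh (ν * t)) := by
      have := mul_le_mul_of_nonneg_left hE (le_of_lt (Real.cosh_pos (x := t)))
      nlinarith [Real.cosh_pos (x := ν * t), Real.cosh_pos (x := t),
        Real.exp_pos (-x * Real.cosh t), Real.exp_pos (-(u / 2) * Real.cosh t),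
        mul_le_mul_of_nonneg_right hE (le_of_lt (mul_pos (Real.cosh_pos (x := t))
          (Real.cosh_pos (x := ν * t))))]
    calc Real.cosh t * (Real.exp (-x * Real.cosh t) * Real.cosh (ν * t)) ≤
        Real.exp (-(u / 2) * Real.cosh t) * (Real.cosh t * Real.cosh (ν * t)) := h5
      _ ≤ Real.exp (-(u / 2) * Real.cosh t) * (Real.exp t * Real.exp (|ν| * t)) := by
          exact mul_le_mul_of_nonneg_left h4 (le_of_lt (Real.exp_pos _))
      _ = Real.exp (-(u / 2) * Real.cosh t) * Real.exp ((|ν| + 1) * t) := by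
          rw [← Real.exp_add]; ring_nf
  · rw [ae_restrict_iff' measurableSet_Ioi]
    filter_upwards with t ht
    intro x hx
    have h1 : HasDerivAt (fun y : ℝ => -y * Real.cosh t) (-1 * Real.cosh t) x :=
      (hasDerivAt_id x).neg.mul_const _
    have h := (h1.exp).mul_const (Real.cosh (ν * t))
    refine h.congr_deriv ?_
    beta_reduce
    ring

lemma ibp (hu : 0 < u) {m : ℝ} (hm : 0 ≤ m) :
    m * (∫ t in Ioi (0:ℝ), Real.exp (-u * Real.cosh t) * Real.cosh (m * t)) =
      u * ∫ t in Ioi (0:ℝ),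
        Real.exp (-u * Real.cosh t) * (Real.sinh t * Real.sinh (m * t)) := by
  set g : ℝ → ℝ := fun t => Real.exp (-u * Real.cosh t) * Real.sinh (m * t) with hg
  set g' : ℝ → ℝ := fun t =>
      m * (Real.exp (-u * Real.cosh t) * Real.cosh (m * t)) -
      u * (Real.exp (-u * Real.cosh t) * (Real.sinh t * Real.sinh (m * t))) with hg'
  have i1 : IntegrableOn (fun t => m * (Real.exp (-u * Real.cosh t) * Real.cosh (m * t)))
      (Ioi 0) := (int_f hu m).const_mul m
  have i2 : IntegrableOn (fun t => u * (Real.exp (-u * Real.cosh t) *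
      (Real.sinh t * Real.sinh (m * t)))) (Ioi 0) := (int_sinh_sinh hu m).const_mul u
  have hderiv : ∀ t ∈ Ioi (0:ℝ), HasDerivAt g (g' t) t := by
    intro t ht
    have h1 : HasDerivAt (fun t => Real.exp (-u * Real.cosh t))
        (Real.exp (-u * Real.cosh t) * (-u * Real.sinh t)) t :=
      ((Real.hasDerivAt_cosh t).const_mul (-u)).exp
    have h2 : HasDerivAt (fun t => Real.sinh (m * t)) (Real.cosh (m * t) * (m * 1)) t :=
      ((hasDerivAt_id t).const_mul m).sinh
    have h3 := h1.mul h2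
    refine h3.congr_deriv ?_
    simp only [hg']; ring
  have htend : Tendsto g atTop (nhds 0) := by
    apply squeeze_zero_norm' (a := fun t =>
      Real.exp ((m + 1) ^ 2 / (2 * u)) * Real.exp (-t))
    · filter_upwards [eventually_ge_atTop (0:ℝ)] with t ht
      have h1 : ‖g t‖ ≤ Real.exp (-u * Real.cosh t + m * t) := by
        rw [hg, Real.norm_eq_abs, abs_mul, abs_of_nonneg (le_of_lt (Real.exp_pos _)),
          Real.exp_add]
        refine mul_le_mul_of_nonneg_left ?_ (le_of_lt (Real.exp_pos _))
        exact le_trans (abs_sinh_le_cosh _) (by simpa [abs_of_nonneg hm] using cosh_mul_le m t ht)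
      exact le_trans h1 (kernel_le hu ht)
    · have := tendsto_exp_neg_atTop_nhds_zero.const_mul
        (Real.exp ((m + 1) ^ 2 / (2 * u)))
      simpa using this
  have h0 : ∫ t in Ioi (0:ℝ), g' t = 0 - g 0 := by
    apply integral_Ioi_of_hasDerivAt_of_tendsto
      ((Continuous.continuousWithinAt (by continuity))) hderiv (i1.sub i2) htend
  have hg0 : g 0 = 0 := by simp [hg]
  rw [hg0, sub_zero] at h0
  have hsplit : ∫ t in Ioi (0:ℝ), g' t =
      m * (∫ t in Ioi (0:ℝ), Real.exp (-u * Real.cosh t) * Real.cosh (m * t)) -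
      u * ∫ t in Ioi (0:ℝ), Real.exp (-u * Real.cosh t) *
        (Real.sinh t * Real.sinh (m * t)) := by
    rw [hg']
    rw [integral_sub i1 i2, integral_const_mul, integral_const_mul]
  rw [hsplit] at h0
  linarith

end BesselAux

set_option maxHeartbeats 1000000 in
open BesselAux in
theorem besselK_logDeriv_upper_bound (ν u : ℝ) (hu : 0 < u) :
    u * deriv (besselK ν) u / besselK ν u < -Real.sqrt (u ^ 2 + ν ^ 2) := by
  have hKdef : besselK ν u =
      ∫ t in Ioi (0:ℝ), Real.exp (-u * Real.cosh t) * Real.cosh (ν * t) := rfl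
  set K := besselK ν u with hK
  set C := ∫ t in Ioi (0:ℝ),
      Real.cosh t * (Real.exp (-u * Real.cosh t) * Real.cosh (ν * t)) with hC
  set S := ∫ t in Ioi (0:ℝ),
      Real.sinh t * (Real.exp (-u * Real.cosh t) * Real.cosh (ν * t)) with hS
  have hKpos : 0 < K := besselK_pos hu ν
  have hSnonneg : 0 ≤ S :=
    setIntegral_nonneg measurableSet_Ioi fun t ht => by
      have : (0:ℝ) ≤ t := le_of_lt ht
      positivity
  have hderiv : deriv (besselK ν) u = -C := (hasDerivAt_besselK hu ν).deriv
  -- Step (b) : |ν| * K ≤ u * S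
  have hcongr : (∫ t in Ioi (0:ℝ), Real.exp (-u * Real.cosh t) * Real.cosh (|ν| * t)) = K := by
    rw [hKdef]
    refine setIntegral_congr_fun measurableSet_Ioi fun t ht => ?_
    rcases abs_cases ν with ⟨h, _⟩ | ⟨h, _⟩
    · rw [h]
    · rw [h, show -ν * t = -(ν * t) by ring, Real.cosh_neg]
  have hb : |ν| * K ≤ u * S := by
    have hibp := ibp hu (abs_nonneg ν)
    rw [hcongr] at hibp
    rw [hibp]
    refine mul_le_mul_of_nonneg_left ?_ (le_of_lt hu)
    refine setIntegral_mono_on (int_sinh_sinh hu |ν|) (int_sinh_f hu ν)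
      measurableSet_Ioi fun t ht => ?_
    have ht' : (0:ℝ) ≤ t := le_of_lt ht
    have h1 : Real.sinh (|ν| * t) ≤ Real.cosh (ν * t) := by
      have h2 : Real.cosh (|ν| * t) = Real.cosh (ν * t) := by
        rcases abs_cases ν with ⟨h, _⟩ | ⟨h, _⟩
        · rw [h]
        · rw [h, show -ν * t = -(ν * t) by ring, Real.cosh_neg]
      rw [← h2]; exact sinh_le_cosh _
    have hsh : 0 ≤ Real.sinh t := Real.sinh_nonneg_iff.mpr ht'
    have hE := Real.exp_pos (-u * Real.cosh t)
    nlinarith [mul_le_mul_of_nonneg_left h1 hsh]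
  -- Step (a) : C > sqrt (K ^ 2 + S ^ 2)
  set R := Real.sqrt (K ^ 2 + S ^ 2) with hR
  have hR2 : R ^ 2 = K ^ 2 + S ^ 2 := Real.sq_sqrt (by positivity)
  have hRpos : 0 < R := Real.sqrt_pos.2 (by positivity)
  have hpoint_le : ∀ t : ℝ, K + S * Real.sinh t ≤ R * Real.cosh t := by
    intro t
    have hcs : Real.cosh t ^ 2 = Real.sinh t ^ 2 + 1 := Real.cosh_sq t
    have hcp : 0 < Real.cosh t := Real.cosh_pos t
    have hsq : (R * Real.cosh t) ^ 2 = (K ^ 2 + S ^ 2) * (Real.sinh t ^ 2 + 1) := by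
      rw [mul_pow, hR2, hcs]
    nlinarith [sq_nonneg (K * Real.sinh t - S), mul_pos hRpos hcp,
      sq_nonneg (K + S * Real.sinh t - R * Real.cosh t)]
  have hpoint_lt : ∀ t : ℝ, K * Real.sinh t ≠ S → K + S * Real.sinh t < R * Real.cosh t := by
    intro t hne
    have hcs : Real.cosh t ^ 2 = Real.sinh t ^ 2 + 1 := Real.cosh_sq t
    have hcp : 0 < Real.cosh t := Real.cosh_pos t
    have hsq : (R * Real.cosh t) ^ 2 = (K ^ 2 + S ^ 2) * (Real.sinh t ^ 2 + 1) := by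
      rw [mul_pow, hR2, hcs]
    have hgap : 0 < (K * Real.sinh t - S) ^ 2 :=
      lt_of_le_of_ne (sq_nonneg _) (Ne.symm (pow_ne_zero 2 (sub_ne_zero.2 hne)))
    nlinarith [mul_pos hRpos hcp, sq_nonneg (K + S * Real.sinh t - R * Real.cosh t)]
  -- the strict integral inequality
  set h : ℝ → ℝ := fun t => (R * Real.cosh t - (K + S * Real.sinh t)) *
      (Real.exp (-u * Real.cosh t) * Real.cosh (ν * t)) with hh
  have hint_h : IntegrableOn h (Ioi 0) := by
    have h4 := (((int_cosh_f hu ν).const_mul R).sub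
      (((int_f hu ν).const_mul K).add ((int_sinh_f hu ν).const_mul S)))
    refine h4.congr ?_
    filter_upwards with t
    simp only [Pi.sub_apply, Pi.add_apply, hh]
    ring
  have hnonneg : ∀ t ∈ Ioi (0:ℝ), 0 ≤ h t := by
    intro t ht
    have ht' : (0:ℝ) ≤ t := le_of_lt ht
    have := hpoint_le t
    have hfpos : 0 < Real.exp (-u * Real.cosh t) * Real.cosh (ν * t) := by positivity
    rw [hh]
    exact mul_nonneg (by linarith) (le_of_lt hfpos)
  have hpos_int : 0 < ∫ t in Ioi (0:ℝ), h t := by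
    rw [setIntegral_pos_iff_support_of_nonneg_ae
      ((ae_restrict_iff' measurableSet_Ioi).mpr (Eventually.of_forall hnonneg)) hint_h]
    have hsub : Ioi (|Real.arsinh (S / K)| + 1) ⊆ Function.support h ∩ Ioi 0 := by
      intro t ht
      have htT : |Real.arsinh (S / K)| + 1 < t := mem_Ioi.1 ht
      have ht0 : 0 < t := by
        have := abs_nonneg (Real.arsinh (S / K))
        linarith
      have harc : Real.arsinh (S / K) < t := by
        linarith [le_abs_self (Real.arsinh (S / K))]
      have hs : S / K < Real.sinh t := by
        have := Real.sinh_lt_sinh.mpr harc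
        rwa [Real.sinh_arsinh] at this
      have hne : K * Real.sinh t ≠ S := by
        have : S < K * Real.sinh t := by
          rw [div_lt_iff₀ hKpos] at hs; nlinarith
        exact ne_of_gt this
      have hfpos : 0 < Real.exp (-u * Real.cosh t) * Real.cosh (ν * t) := by positivity
      refine ⟨?_, mem_Ioi.2 ht0⟩
      simp only [Function.mem_support, hh]
      exact ne_of_gt (mul_pos (sub_pos.2 (hpoint_lt t hne)) hfpos)
    refine lt_of_lt_of_le ?_ (measure_mono hsub)
    rw [Real.volume_Ioi]
    exact ENNReal.zero_lt_top
  have hsplit : ∫ t in Ioi (0:ℝ), h t = R * C - (K * K + S * S) := by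
    have e1 := (int_cosh_f hu ν).const_mul R
    have e2 := (int_f hu ν).const_mul K
    have e3 := (int_sinh_f hu ν).const_mul S
    have heq : ∫ t in Ioi (0:ℝ), h t = ∫ t in Ioi (0:ℝ),
        (R * (Real.cosh t * (Real.exp (-u * Real.cosh t) * Real.cosh (ν * t)))
          - (K * (Real.exp (-u * Real.cosh t) * Real.cosh (ν * t))
            + S * (Real.sinh t * (Real.exp (-u * Real.cosh t) * Real.cosh (ν * t))))) :=
      setIntegral_congr_fun measurableSet_Ioi fun t ht => by rw [hh]; ring
    have e23 : Integrable (fun x => K * (Real.exp (-u * Real.cosh x) * Real.cosh (ν * x))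
        + S * (Real.sinh x * (Real.exp (-u * Real.cosh x) * Real.cosh (ν * x))))
        (volume.restrict (Ioi 0)) := e2.add e3
    rw [heq, integral_sub e1 e23, integral_add e2 e3, integral_const_mul,
      integral_const_mul, integral_const_mul, ← hC, ← hS, ← hKdef]
  have hRC : R * R < R * C := by
    have : 0 < R * C - (K * K + S * S) := by rw [← hsplit]; exact hpos_int
    nlinarith [hR2]
  have hCR : R < C := (mul_lt_mul_iff_right₀ hRpos).mp hRC
  have hCpos : 0 < C := lt_trans hRpos hCR
  -- Final assembly
  set Q := Real.sqrt (u ^ 2 + ν ^ 2) with hQ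
  have hQ2 : Q ^ 2 = u ^ 2 + ν ^ 2 := Real.sq_sqrt (by positivity)
  have hQ0 : 0 ≤ Q := Real.sqrt_nonneg _
  have hsq1 : ν ^ 2 * K ^ 2 ≤ u ^ 2 * S ^ 2 := by
    have h1 : (|ν| * K) ^ 2 ≤ (u * S) ^ 2 := by
      have h0 : 0 ≤ |ν| * K := mul_nonneg (abs_nonneg _) (le_of_lt hKpos)
      nlinarith
    calc ν ^ 2 * K ^ 2 = (|ν| * K) ^ 2 := by rw [mul_pow, sq_abs]
      _ ≤ (u * S) ^ 2 := h1
      _ = u ^ 2 * S ^ 2 := by ring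
  have hmain : Q * K < u * C := by
    have hsq2 : (Q * K) ^ 2 < (u * C) ^ 2 := by
      have hC2 : R ^ 2 < C ^ 2 := by nlinarith
      calc (Q * K) ^ 2 = (u ^ 2 + ν ^ 2) * K ^ 2 := by rw [mul_pow, hQ2]
        _ = u ^ 2 * K ^ 2 + ν ^ 2 * K ^ 2 := by ring
        _ ≤ u ^ 2 * K ^ 2 + u ^ 2 * S ^ 2 := by linarith
        _ = u ^ 2 * R ^ 2 := by rw [hR2]; ring
        _ < u ^ 2 * C ^ 2 := mul_lt_mul_of_pos_left hC2 (by positivity)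
        _ = (u * C) ^ 2 := by ring
    exact lt_of_pow_lt_pow_left₀ 2 (le_of_lt (mul_pos hu hCpos)) hsq2
  rw [hderiv, div_lt_iff₀ hKpos]
  nlinarith [hmain]
end

section
/- For every ν ≥ 1, the function u ↦ u·I_ν'(u)/I_ν(u)² is strictly decreasing on (0, ∞). -/
open Real MeasureTheory Set

open Filter Topology

namespace BesselAux

/-- coefficient of the auxiliary entire series -/
noncomputable def c (ν : ℝ) (n : ℕ) : ℝ := 1 / (n.factorial * Real.Gamma (n + ν + 1))

lemma c_pos {ν : ℝ} (hν : 1 ≤ ν) (n : ℕ) : 0 < c ν n := by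
  have h1 : (0:ℝ) < n.factorial := by positivity
  have h2 : (0:ℝ) < Real.Gamma (n + ν + 1) :=
    Real.Gamma_pos_of_pos (by positivity)
  exact div_pos one_pos (mul_pos h1 h2)

lemma c_rec {ν : ℝ} (hν : 1 ≤ ν) (n : ℕ) :
    c ν n = (n + 1) * (n + ν + 1) * c ν (n + 1) := by
  have hne : ((n:ℝ) + ν + 1) ≠ 0 := by positivity
  have hG : Real.Gamma ((n:ℝ) + ν + 1 + 1) = ((n:ℝ) + ν + 1) * Real.Gamma ((n:ℝ) + ν + 1) :=
    Real.Gamma_add_one hne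
  have hGpos : (0:ℝ) < Real.Gamma ((n:ℝ) + ν + 1) := Real.Gamma_pos_of_pos (by positivity)
  have hfac : ((n+1).factorial : ℝ) = (n + 1) * n.factorial := by
    rw [Nat.factorial_succ]; push_cast; ring
  have harg : ((n+1:ℕ):ℝ) + ν + 1 = (n:ℝ) + ν + 1 + 1 := by push_cast; ring
  rw [c, c, hfac, harg, hG]
  have hfpos : (0:ℝ) < n.factorial := by positivity
  field_simp

end BesselAux

namespace BesselAux2
open BesselAux

/-- ratio-test helper -/
lemma summable_of_mul_ratio {f : ℕ → ℝ} (hf : ∀ n, 0 ≤ f n) {C : ℝ}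
    (h : ∀ n : ℕ, (n : ℝ) * f (n + 1) ≤ C * f n) : Summable f := by
  apply summable_of_ratio_norm_eventually_le (r := 1/2) (by norm_num)
  filter_upwards [eventually_ge_atTop (⌈2*C⌉₊ + 1)] with n hn
  have hn1 : (1:ℝ) ≤ n := by exact_mod_cast Nat.one_le_iff_ne_zero.mpr (by omega)
  have hnC : 2*C ≤ (n:ℝ) := le_trans (Nat.le_ceil _) (by exact_mod_cast (by omega : ⌈2*C⌉₊ ≤ n))
  have hpos : (0:ℝ) < n := lt_of_lt_of_le one_pos hn1
  rw [Real.norm_of_nonneg (hf _), Real.norm_of_nonneg (hf _)]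
  have := h n
  nlinarith [hf n, hf (n+1)]

/-- master summable series -/
lemma summable_master {ν : ℝ} (hν : 1 ≤ ν) {y : ℝ} (hy : 0 ≤ y) :
    Summable (fun n : ℕ => ((n:ℝ)+2)^2 * c ν n * y^n) := by
  apply summable_of_mul_ratio (C := 9*y)
  · intro n; have := c_pos hν n; positivity
  · intro n
    have hrec := c_rec hν n
    have hc1 := c_pos hν (n+1)
    have hyn : (0:ℝ) ≤ y^n := pow_nonneg hy n
    push_cast
    calc (n:ℝ) * (((n:ℝ)+1+2)^2 * c ν (n+1) * y^(n+1))
        = ((n:ℝ) * ((n:ℝ)+3)^2) * (c ν (n+1) * y^n) * y := by ring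
      _ ≤ (9*((n:ℝ)+2)^2*((n:ℝ)+1)*((n:ℝ)+ν+1)) * (c ν (n+1) * y^n) * y := by
          apply mul_le_mul_of_nonneg_right _ hy
          apply mul_le_mul_of_nonneg_right _ (by positivity)
          have hm : (0:ℝ) ≤ (n:ℝ) := Nat.cast_nonneg n
          nlinarith [mul_nonneg hm hm, mul_nonneg (mul_nonneg hm hm) hm,
            mul_nonneg (mul_nonneg (mul_nonneg hm hm) hm) hm,
            mul_nonneg hm (sub_nonneg.2 hν), mul_nonneg (mul_nonneg hm hm) (sub_nonneg.2 hν),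
            mul_nonneg (mul_nonneg (mul_nonneg hm hm) hm) (sub_nonneg.2 hν)]
      _ = 9*y * (((n:ℝ)+2)^2 * (((n:ℝ)+1)*((n:ℝ)+ν+1)* c ν (n+1)) * y^n) := by ring
      _ = 9*y * (((n:ℝ)+2)^2 * c ν n * y^n) := by rw [← hrec]

end BesselAux2

namespace BesselAux3
open BesselAux BesselAux2

variable {ν : ℝ}

noncomputable def g (ν x : ℝ) : ℝ := ∑' n : ℕ, c ν n * x ^ n
noncomputable def g1 (ν x : ℝ) : ℝ := ∑' n : ℕ, ((n:ℝ)+1) * c ν (n+1) * x ^ n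
noncomputable def g2 (ν x : ℝ) : ℝ := ∑' n : ℕ, ((n:ℝ)+2) * ((n:ℝ)+1) * c ν (n+2) * x ^ n

lemma k1 (hν : 1 ≤ ν) (n : ℕ) : ((n:ℝ)+1) * c ν (n+1) ≤ c ν n := by
  have h := c_rec hν n
  have hc := c_pos hν (n+1)
  nlinarith [Nat.cast_nonneg (α := ℝ) n, mul_pos (by positivity : (0:ℝ) < (n:ℝ)+1) hc]

lemma k2 (hν : 1 ≤ ν ) (n : ℕ) : ((n:ℝ)+2) * ((n:ℝ)+1) * c ν (n+2) ≤ c ν n := by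
  have h1 := k1 hν (n+1)
  have h2 := k1 hν n
  have hc := c_pos hν (n+2)
  push_cast at h1
  nlinarith [Nat.cast_nonneg (α := ℝ) n]

lemma summable_of_le_master (hν : 1 ≤ ν) {y : ℝ} (hy : 0 ≤ y) {f : ℕ → ℝ}
    (hf0 : ∀ n, 0 ≤ f n) (hle : ∀ n, f n ≤ ((n:ℝ)+2)^2 * c ν n * y^n) : Summable f :=
  Summable.of_nonneg_of_le hf0 hle (summable_master hν hy)

lemma summable_g (hν : 1 ≤ ν) (x : ℝ) : Summable (fun n : ℕ => c ν n * x ^ n) := by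
  apply Summable.of_abs
  apply summable_of_le_master hν (abs_nonneg x) (fun n => abs_nonneg _)
  intro n
  rw [abs_mul, abs_pow, abs_of_pos (c_pos hν n)]
  have hc := c_pos hν n
  have h2 : (1:ℝ) ≤ ((n:ℝ)+2)^2 := by nlinarith [Nat.cast_nonneg (α := ℝ) n]
  have hxn : (0:ℝ) ≤ |x|^n := pow_nonneg (abs_nonneg x) n
  exact mul_le_mul_of_nonneg_right (by nlinarith) hxn

lemma summable_g1 (hν : 1 ≤ ν) (x : ℝ) :
    Summable (fun n : ℕ => ((n:ℝ)+1) * c ν (n+1) * x ^ n) := by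
  apply Summable.of_abs
  apply summable_of_le_master hν (abs_nonneg x) (fun n => abs_nonneg _)
  intro n
  have hc := c_pos hν (n+1)
  have h := k1 hν n
  rw [abs_mul, abs_pow, abs_of_pos (by positivity : (0:ℝ) < ((n:ℝ)+1) * c ν (n+1))]
  have h2 : (1:ℝ) ≤ ((n:ℝ)+2)^2 := by nlinarith [Nat.cast_nonneg (α := ℝ) n]
  have hxn : (0:ℝ) ≤ |x|^n := pow_nonneg (abs_nonneg x) n
  refine mul_le_mul_of_nonneg_right ?_ hxn
  nlinarith [c_pos hν n]

lemma summable_g2 (hν : 1 ≤ ν) (x : ℝ) :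
    Summable (fun n : ℕ => ((n:ℝ)+2) * ((n:ℝ)+1) * c ν (n+2) * x ^ n) := by
  apply Summable.of_abs
  apply summable_of_le_master hν (abs_nonneg x) (fun n => abs_nonneg _)
  intro n
  have hc := c_pos hν (n+2)
  have h := k2 hν n
  rw [abs_mul, abs_pow, abs_of_pos (by positivity : (0:ℝ) < ((n:ℝ)+2) * ((n:ℝ)+1) * c ν (n+2))]
  have h2 : (1:ℝ) ≤ ((n:ℝ)+2)^2 := by nlinarith [Nat.cast_nonneg (α := ℝ) n]
  have hxn : (0:ℝ) ≤ |x|^n := pow_nonneg (abs_nonneg x) n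
  refine mul_le_mul_of_nonneg_right ?_ hxn
  nlinarith [c_pos hν n]

end BesselAux3

namespace BesselAux4
open BesselAux BesselAux2 BesselAux3

variable {ν : ℝ}

lemma hasDerivAt_tsum_coeff (hν : 1 ≤ ν) (a : ℕ → ℝ) (ha0 : ∀ n, 0 < a n)
    (hale : ∀ n, a n ≤ c ν n) (x : ℝ) :
    HasDerivAt (fun y => ∑' n : ℕ, a n * y ^ n) (∑' n : ℕ, ((n:ℝ)+1) * a (n+1) * x ^ n) x := by
  set R : ℝ := |x| + 1 with hR
  have hR1 : (1:ℝ) ≤ R := le_add_of_nonneg_left (abs_nonneg x)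
  have hR0 : (0:ℝ) ≤ R := by linarith
  -- summability of the a-series at any point
  have hsum : ∀ y : ℝ, Summable (fun n : ℕ => a n * y ^ n) := by
    intro y
    apply Summable.of_abs
    apply summable_of_le_master hν (abs_nonneg y) (fun n => abs_nonneg _)
    intro n
    rw [abs_mul, abs_pow, abs_of_pos (ha0 n)]
    have hxn : (0:ℝ) ≤ |y|^n := pow_nonneg (abs_nonneg y) n
    refine mul_le_mul_of_nonneg_right ?_ hxn
    have h6 := hale n; have h7 := c_pos hν n
    have h9 : (1:ℝ) ≤ ((n:ℝ)+2)^2 := by nlinarith [Nat.cast_nonneg (α := ℝ) n]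
    nlinarith [mul_le_mul_of_nonneg_right h9 h7.le]
  -- the bound series
  have hu : Summable (fun n : ℕ => (n:ℝ) * c ν n * R ^ (n-1)) := by
    apply summable_of_le_master hν hR0
    · intro n
      have := c_pos hν n
      positivity
    · intro n
      have h1 : R ^ (n-1) ≤ R ^ n := pow_le_pow_right₀ hR1 (Nat.sub_le n 1)
      have hc := (c_pos hν n).le
      have h2 : (n:ℝ) * c ν n * R ^ (n-1) ≤ (n:ℝ) * c ν n * R ^ n :=
        mul_le_mul_of_nonneg_left h1 (by positivity)
      have h3 : (n:ℝ) ≤ ((n:ℝ)+2)^2 := by nlinarith [Nat.cast_nonneg (α := ℝ) n]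
      have h4 : (n:ℝ) * c ν n * R ^ n ≤ ((n:ℝ)+2)^2 * c ν n * R ^ n := by
        have := pow_nonneg hR0 n
        nlinarith [mul_nonneg hc this]
      linarith
  have hmain : HasDerivAt (fun y => ∑' n : ℕ, a n * y ^ n)
      (∑' n : ℕ, a n * ((n:ℝ) * x ^ (n-1))) x := by
    apply hasDerivAt_tsum_of_isPreconnected hu (Metric.isOpen_ball (x := (0:ℝ)) (ε := R))
      (convex_ball (0:ℝ) R).isPreconnected
      (g' := fun n y => a n * ((n:ℝ) * y ^ (n-1))) (y₀ := 0)
    · intro n y _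
      exact (hasDerivAt_pow n y).const_mul (a n)
    · intro n y hy
      rw [Metric.mem_ball, Real.dist_eq, sub_zero] at hy
      rw [Real.norm_eq_abs, abs_mul, abs_mul, abs_pow, abs_of_pos (ha0 n),
        Nat.abs_cast]
      have h1 : |y| ^ (n-1) ≤ R ^ (n-1) := pow_le_pow_left₀ (abs_nonneg y) hy.le _
      have h2 : a n ≤ c ν n := hale n
      have hc := (c_pos hν n).le
      have := (ha0 n).le
      calc a n * ((n:ℝ) * |y| ^ (n-1)) ≤ c ν n * ((n:ℝ) * R ^ (n-1)) := by
            apply mul_le_mul h2 _ (by positivity) hc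
            exact mul_le_mul_of_nonneg_left h1 (Nat.cast_nonneg n)
        _ = (n:ℝ) * c ν n * R ^ (n-1) := by ring
    · exact Metric.mem_ball_self (by linarith)
    · exact hsum 0
    · rw [Metric.mem_ball, Real.dist_eq, sub_zero]; linarith
  convert hmain using 1
  have hs : Summable (fun n : ℕ => a n * ((n:ℝ) * x ^ (n-1))) := by
    apply Summable.of_abs
    apply summable_of_le_master hν hR0 (fun n => abs_nonneg _)
    intro n
    rw [abs_mul, abs_mul, abs_pow, abs_of_pos (ha0 n), Nat.abs_cast]
    have h1 : |x| ^ (n-1) ≤ R ^ (n-1) := pow_le_pow_left₀ (abs_nonneg x) (by rw [hR]; linarith) _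
    have h2 : R ^ (n-1) ≤ R ^ n := pow_le_pow_right₀ hR1 (Nat.sub_le n 1)
    have h3 : (n:ℝ) ≤ ((n:ℝ)+2)^2 := by nlinarith [Nat.cast_nonneg (α := ℝ) n]
    have hc := c_pos hν n
    have h4 := hale n
    have h5 : (0:ℝ) ≤ |x| ^ (n-1) := pow_nonneg (abs_nonneg x) _
    calc a n * ((n:ℝ) * |x| ^ (n-1)) ≤ c ν n * (((n:ℝ)+2)^2 * R ^ n) := by
          apply mul_le_mul h4 _ (by positivity) hc.le
          apply mul_le_mul h3 (le_trans h1 h2) h5 (by positivity)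
      _ = ((n:ℝ)+2)^2 * c ν n * R ^ n := by ring
  rw [Summable.tsum_eq_zero_add hs]
  simp only [Nat.cast_zero, Nat.cast_succ, zero_mul, mul_zero, zero_add, Nat.succ_sub_one]
  apply tsum_congr
  intro n
  push_cast
  ring

end BesselAux4

namespace BesselAux5
open BesselAux BesselAux2 BesselAux3 BesselAux4

variable {ν : ℝ}

lemma hasDerivAt_g (hν : 1 ≤ ν) (x : ℝ) : HasDerivAt (g ν) (g1 ν x) x := by
  have h := hasDerivAt_tsum_coeff hν (c ν) (c_pos hν) (fun n => le_refl _) x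
  exact h

lemma hasDerivAt_g1 (hν : 1 ≤ ν) (x : ℝ) : HasDerivAt (g1 ν) (g2 ν x) x := by
  have h := hasDerivAt_tsum_coeff hν (fun n => ((n:ℝ)+1) * c ν (n+1))
    (fun n => by have := c_pos hν (n+1); positivity) (k1 hν) x
  have hval : (∑' n : ℕ, ((n:ℝ)+1) * ((fun n : ℕ => ((n:ℝ)+1) * c ν (n+1)) (n+1)) * x ^ n)
      = g2 ν x := by
    apply tsum_congr; intro n
    show ((n:ℝ)+1) * ((((n+1:ℕ):ℝ)+1) * c ν (n+2)) * x ^ n = _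
    push_cast
    ring
  rw [← hval]
  exact h

lemma g_pos (hν : 1 ≤ ν) {x : ℝ} (hx : 0 ≤ x) : 0 < g ν x := by
  have hs := summable_g hν x
  have h0 : c ν 0 * x ^ 0 ≤ g ν x := by
    apply Summable.le_tsum hs 0
    intro j _
    have := c_pos hν j
    positivity
  have := c_pos hν 0
  simp only [pow_zero, mul_one] at h0
  linarith

lemma g1_nonneg (hν : 1 ≤ ν) {x : ℝ} (hx : 0 ≤ x) : 0 ≤ g1 ν x := by
  apply tsum_nonneg
  intro n
  have := c_pos hν (n+1)
  positivity

lemma g_ode (hν : 1 ≤ ν) (x : ℝ) : x * g2 ν x + (ν+1) * g1 ν x = g ν x := by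
  have hS2' : Summable (fun n : ℕ => ((n:ℝ)+2)*((n:ℝ)+1)*c ν (n+2) * x^(n+1)) := by
    apply ((summable_g2 hν x).mul_left x).congr
    intro n; rw [pow_succ]; ring
  have hS1' : Summable (fun n : ℕ => (ν+1) * ((((n:ℝ)+2) * c ν (n+2)) * x^(n+1))) := by
    apply (((summable_nat_add_iff 1).2 (summable_g1 hν x)).mul_left (ν+1)).congr
    intro n; push_cast; ring
  have h1 : g ν x = c ν 0 + ∑' n : ℕ, c ν (n+1) * x^(n+1) := by
    rw [g, Summable.tsum_eq_zero_add (summable_g hν x), pow_zero, mul_one]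
  have h2 : g1 ν x = c ν 1 + ∑' n : ℕ, (((n:ℝ)+2) * c ν (n+2)) * x^(n+1) := by
    rw [g1, Summable.tsum_eq_zero_add (summable_g1 hν x)]
    norm_num
    apply tsum_congr; intro n; push_cast; ring
  have h3 : x * g2 ν x = ∑' n : ℕ, ((n:ℝ)+2) * ((n:ℝ)+1) * c ν (n+2) * x^(n+1) := by
    rw [g2, ← tsum_mul_left]
    apply tsum_congr; intro n; rw [pow_succ]; ring
  have e1 : (ν+1) * (c ν 1 + ∑' n : ℕ, (((n:ℝ)+2) * c ν (n+2)) * x^(n+1))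
      = (ν+1) * c ν 1 + ∑' n : ℕ, (ν+1) * ((((n:ℝ)+2) * c ν (n+2)) * x^(n+1)) := by
    rw [mul_add, tsum_mul_left]
  have h6 : ∀ n : ℕ, ((n:ℝ)+2)*((n:ℝ)+1)*c ν (n+2) * x^(n+1) +
      (ν+1) * ((((n:ℝ)+2) * c ν (n+2)) * x^(n+1)) = c ν (n+1) * x^(n+1) := by
    intro n
    have h := c_rec hν (n+1)
    have hi : n+1+1 = n+2 := rfl
    rw [hi] at h
    push_cast at h
    linear_combination -x^(n+1) * h
  have h7 : (ν+1) * c ν 1 = c ν 0 := by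
    have h := c_rec hν 0
    push_cast at h
    linear_combination -h
  calc x * g2 ν x + (ν+1) * g1 ν x
      = (∑' n : ℕ, ((n:ℝ)+2)*((n:ℝ)+1)*c ν (n+2) * x^(n+1)) +
        ((ν+1) * c ν 1 + ∑' n : ℕ, (ν+1) * ((((n:ℝ)+2) * c ν (n+2)) * x^(n+1))) := by
        rw [h3, h2, e1]
    _ = (ν+1) * c ν 1 + ((∑' n : ℕ, ((n:ℝ)+2)*((n:ℝ)+1)*c ν (n+2) * x^(n+1)) +
        ∑' n : ℕ, (ν+1) * ((((n:ℝ)+2) * c ν (n+2)) * x^(n+1))) := by ring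
    _ = (ν+1) * c ν 1 + ∑' n : ℕ, (((n:ℝ)+2)*((n:ℝ)+1)*c ν (n+2) * x^(n+1) +
        (ν+1) * ((((n:ℝ)+2) * c ν (n+2)) * x^(n+1))) := by rw [← Summable.tsum_add hS2' hS1']
    _ = c ν 0 + ∑' n : ℕ, c ν (n+1) * x^(n+1) := by rw [tsum_congr h6, h7]
    _ = g ν x := h1.symm

end BesselAux5

namespace BesselAux6
open BesselAux BesselAux2 BesselAux3 BesselAux4 BesselAux5

variable {ν : ℝ}

noncomputable def T (ν x : ℝ) : ℝ := x * g1 ν x / g ν x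
noncomputable def psi (ν x : ℝ) : ℝ := 8*(T ν x)^2 + 8*ν*(T ν x) + ν^2 - 4*x

lemma hasDerivAt_T (hν : 1 ≤ ν) {x : ℝ} (hx : 0 ≤ x) :
    HasDerivAt (T ν)
      (((1 * g1 ν x + x * g2 ν x) * g ν x - x * g1 ν x * g1 ν x) / (g ν x)^2) x :=
  ((hasDerivAt_id x).mul (hasDerivAt_g1 hν x)).div (hasDerivAt_g hν x) (g_pos hν hx).ne'

lemma hasDerivAt_psi (hν : 1 ≤ ν) {x : ℝ} (hx : 0 ≤ x) :
    HasDerivAt (psi ν)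
      ((16 * T ν x + 8*ν) *
        (((1 * g1 ν x + x * g2 ν x) * g ν x - x * g1 ν x * g1 ν x) / (g ν x)^2) - 4) x := by
  have hT := hasDerivAt_T hν hx
  have h1 : HasDerivAt (fun y => 8*(T ν y)^2 + 8*ν*(T ν y) + ν^2 - 4*y)
      (8*(2 * T ν x ^ 1 * (((1 * g1 ν x + x * g2 ν x) * g ν x - x * g1 ν x * g1 ν x) / (g ν x)^2))
        + 8*ν*(((1 * g1 ν x + x * g2 ν x) * g ν x - x * g1 ν x * g1 ν x) / (g ν x)^2)
        + 0 - 4*1) x := by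
    exact ((((hT.pow 2).const_mul 8).add ((hT.const_mul (8*ν)))).add
      (hasDerivAt_const x (ν^2))).sub ((hasDerivAt_id x).const_mul 4)
  convert h1 using 1
  · rfl
  ring

lemma continuousAt_psi (hν : 1 ≤ ν) {x : ℝ} (hx : 0 ≤ x) : ContinuousAt (psi ν) x :=
  (hasDerivAt_psi hν hx).continuousAt

lemma T_zero : T ν 0 = 0 := by simp [T]

lemma psi_zero : psi ν 0 = ν^2 := by simp [psi, T_zero]

lemma psi_pos (hν : 1 ≤ ν) : ∀ x : ℝ, 0 < x → 0 < psi ν x := by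
  by_contra hcon
  push_neg at hcon
  obtain ⟨z, hz0, hzpsi⟩ := hcon
  set S : Set ℝ := {y : ℝ | 0 < y ∧ psi ν y ≤ 0} with hS
  have hne : S.Nonempty := ⟨z, hz0, hzpsi⟩
  have hbdd : BddBelow S := ⟨0, fun y hy => hy.1.le⟩
  set x₀ : ℝ := sInf S with hx₀def
  have hx₀0 : 0 ≤ x₀ := le_csInf hne (fun y hy => hy.1.le)
  -- psi is positive on [0, x₀)
  have hleft : ∀ y : ℝ, 0 ≤ y → y < x₀ → 0 < psi ν y := by
    intro y hy0 hyx
    rcases eq_or_lt_of_le hy0 with rfl | hy0'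
    · rw [psi_zero]; positivity
    · by_contra hpy
      push_neg at hpy
      exact absurd (csInf_le hbdd ⟨hy0', hpy⟩) (not_le.2 hyx)
  -- psi x₀ ≤ 0
  have hψx₀_le : psi ν x₀ ≤ 0 := by
    have hcl : x₀ ∈ closure S := csInf_mem_closure hne hbdd
    have hnb : (𝓝[S] x₀).NeBot := mem_closure_iff_nhdsWithin_neBot.1 hcl
    have hcont : Filter.Tendsto (psi ν) (𝓝[S] x₀) (𝓝 (psi ν x₀)) :=
      ((continuousAt_psi hν hx₀0).continuousWithinAt)
    exact le_of_tendsto hcont (eventually_mem_nhdsWithin.mono (fun y hy => hy.2))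
  -- x₀ > 0
  have hx₀pos : 0 < x₀ := by
    rcases eq_or_lt_of_le hx₀0 with h | h
    · exfalso
      rw [← h, psi_zero] at hψx₀_le
      nlinarith
    · exact h
  -- psi x₀ ≥ 0 from the left
  have hψx₀_ge : 0 ≤ psi ν x₀ := by
    have hnb : (𝓝[<] x₀).NeBot := nhdsLT_neBot x₀
    have hcont : Filter.Tendsto (psi ν) (𝓝[<] x₀) (𝓝 (psi ν x₀)) :=
      ((continuousAt_psi hν hx₀0).continuousWithinAt)
    apply ge_of_tendsto hcont
    filter_upwards [Ioo_mem_nhdsLT_of_mem (show x₀ ∈ Ioc (0:ℝ) x₀ from ⟨hx₀pos, le_refl _⟩)]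
      with y hy
    exact (hleft y hy.1.le hy.2).le
  have hψx₀ : psi ν x₀ = 0 := le_antisymm hψx₀_le hψx₀_ge
  -- the derivative of psi at x₀ is positive
  set a : ℝ := g ν x₀ with ha_def
  set b : ℝ := g1 ν x₀ with hb_def
  have ha : 0 < a := g_pos hν hx₀0
  have hb : 0 ≤ b := g1_nonneg hν hx₀0
  have hode : x₀ * g2 ν x₀ = a - (ν+1) * b := by
    have := g_ode hν x₀
    rw [← ha_def, ← hb_def] at this
    linarith
  have hTval : T ν x₀ = x₀ * b / a := rfl
  -- the constraint from psi x₀ = 0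
  have hcon : 8*x₀^2*b^2 + 8*ν*x₀*a*b + (ν^2 - 4*x₀)*a^2 = 0 := by
    have h := hψx₀
    rw [psi, hTval] at h
    have h2 : (8*(x₀*b/a)^2 + 8*ν*(x₀*b/a) + ν^2 - 4*x₀) * a^2 = 0 := by rw [h]; ring
    calc 8*x₀^2*b^2 + 8*ν*x₀*a*b + (ν^2 - 4*x₀)*a^2
        = (8*(x₀*b/a)^2 + 8*ν*(x₀*b/a) + ν^2 - 4*x₀) * a^2 := by
          field_simp
          ring
      _ = 0 := h2
  set σ : ℝ := 2*x₀*b + ν*a with hσ_def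
  have hσa : a ≤ σ := by
    nlinarith [mul_nonneg (sub_nonneg.2 hν) ha.le, mul_nonneg hx₀pos.le hb]
  have hσpos : 0 < σ := lt_of_lt_of_le ha hσa
  have hid1 : x₀ * ((16*x₀*b + 8*ν*a) * (a^2 - ν*a*b - x₀*b^2)) = 2*σ^3 - 2*σ*(8*x₀^2*b^2 + 8*ν*x₀*a*b + (ν^2 - 4*x₀)*a^2) := by
    rw [hσ_def]; ring
  have hid2 : 2*σ^2 = (4*x₀+ν^2)*a^2 + (8*x₀^2*b^2 + 8*ν*x₀*a*b + (ν^2 - 4*x₀)*a^2) := by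
    rw [hσ_def]; ring
  rw [hcon] at hid1 hid2
  have hkey : (16*x₀*b + 8*ν*a) * (a^2 - ν*a*b - x₀*b^2) > 4*a^3 := by
    have hν0 : (0:ℝ) < ν := lt_of_lt_of_le one_pos hν
    have h4 : x₀*(4*a^3) = (2*σ^2 - ν^2*a^2)*a := by linear_combination (-a) * hid2
    have e1 : (0:ℝ) ≤ 2*σ^2*(σ - a) := mul_nonneg (by positivity) (sub_nonneg.2 hσa)
    have e2 : (0:ℝ) < ν^2*a^3 := mul_pos (pow_pos hν0 2) (pow_pos ha 3)
    have h5 : 2*σ^3 > (2*σ^2 - ν^2*a^2)*a := by nlinarith [e1, e2]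
    have h6 : x₀*((16*x₀*b + 8*ν*a) * (a^2 - ν*a*b - x₀*b^2)) > x₀*(4*a^3) := by
      rw [h4, hid1]
      nlinarith [e1, e2]
    exact lt_of_mul_lt_mul_left h6 hx₀pos.le
  have hTder : ((1 * g1 ν x₀ + x₀ * g2 ν x₀) * g ν x₀ - x₀ * g1 ν x₀ * g1 ν x₀) / (g ν x₀)^2
      = (a^2 - ν*a*b - x₀*b^2)/a^2 := by
    rw [← ha_def, ← hb_def, hode]
    congr 1
    ring
  have hdpos : 0 < (16 * T ν x₀ + 8*ν) *
      (((1 * g1 ν x₀ + x₀ * g2 ν x₀) * g ν x₀ - x₀ * g1 ν x₀ * g1 ν x₀) / (g ν x₀)^2) - 4 := by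
    rw [hTder, hTval]
    have heq : (16 * (x₀*b/a) + 8*ν) * ((a^2 - ν*a*b - x₀*b^2)/a^2) - 4
        = ((16*x₀*b + 8*ν*a) * (a^2 - ν*a*b - x₀*b^2) - 4*a^3)/a^3 := by
      field_simp
    rw [heq]
    apply div_pos (by linarith) (by positivity)
  -- contradiction via the slope from the left
  have hD := hasDerivAt_psi hν hx₀0
  have hslope := hasDerivAt_iff_tendsto_slope.1 hD
  have hslope' : Filter.Tendsto (slope (psi ν) x₀) (𝓝[<] x₀) (𝓝 ((16 * T ν x₀ + 8*ν) *
      (((1 * g1 ν x₀ + x₀ * g2 ν x₀) * g ν x₀ - x₀ * g1 ν x₀ * g1 ν x₀) / (g ν x₀)^2) - 4)) :=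
    hslope.mono_left (nhdsWithin_mono _ (fun y hy => ne_of_lt hy))
  have hev : ∀ᶠ y in 𝓝[<] x₀, 0 < slope (psi ν) x₀ y :=
    hslope'.eventually (eventually_gt_nhds hdpos)
  have hev2 : ∀ᶠ y in 𝓝[<] x₀, y ∈ Ioo (0:ℝ) x₀ :=
    Ioo_mem_nhdsLT_of_mem (show x₀ ∈ Ioc (0:ℝ) x₀ from ⟨hx₀pos, le_refl _⟩)
  have hnb : (𝓝[<] x₀).NeBot := nhdsLT_neBot x₀
  obtain ⟨y, hy1, hy2⟩ := (hev.and hev2).exists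
  have hyslope : slope (psi ν) x₀ y = (psi ν y - psi ν x₀)/(y - x₀) := by
    rw [slope_def_field]
  rw [hyslope, hψx₀, sub_zero] at hy1
  have hyneg : y - x₀ < 0 := by linarith [hy2.2]
  have : psi ν y < 0 := by
    by_contra hge
    push_neg at hge
    have := div_nonpos_of_nonneg_of_nonpos hge hyneg.le
    linarith
  linarith [hleft y hy2.1.le hy2.2]

end BesselAux6

namespace BesselAux7
open BesselAux BesselAux2 BesselAux3 BesselAux4 BesselAux5 BesselAux6

variable {ν : ℝ}

lemma Phi_pos (hν : 1 ≤ ν) {x : ℝ} (hx : 0 < x) :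
    0 < 8*x^2*(g1 ν x)^2 + 8*ν*x*(g1 ν x)*(g ν x) + (ν^2 - 4*x)*(g ν x)^2 := by
  have h := psi_pos hν x hx
  have ha := g_pos hν hx.le
  have hΦ : 8*x^2*(g1 ν x)^2 + 8*ν*x*(g1 ν x)*(g ν x) + (ν^2 - 4*x)*(g ν x)^2
      = psi ν x * (g ν x)^2 := by
    rw [psi, T]
    field_simp
    ring
  rw [hΦ]
  exact mul_pos h (pow_pos ha 2)

noncomputable def G (ν x : ℝ) : ℝ := (ν * g ν x + 2*x*g1 ν x) / (x ^ (ν/2) * (g ν x)^2)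

lemma hasDerivAt_G (hν : 1 ≤ ν) {x : ℝ} (hx : 0 < x) :
    HasDerivAt (G ν)
      (((ν * g1 ν x + 2*(1 * g1 ν x + x * g2 ν x)) * (x ^ (ν/2) * (g ν x)^2) -
        (ν * g ν x + 2*x*g1 ν x) *
          ((ν/2 * x ^ (ν/2-1)) * (g ν x)^2 + x ^ (ν/2) * (2 * g ν x ^ 1 * g1 ν x)))
        / (x ^ (ν/2) * (g ν x)^2)^2) x := by
  have hN : HasDerivAt (fun y => ν * g ν y + 2*y*g1 ν y)
      (ν * g1 ν x + 2*(1 * g1 ν x + x * g2 ν x)) x := by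
    have h1 := (hasDerivAt_g hν x).const_mul ν
    have h2 := (((hasDerivAt_id x).mul (hasDerivAt_g1 hν x)).const_mul 2)
    exact (h1.add h2).congr_of_eventuallyEq
      (Filter.Eventually.of_forall fun y => by simp only [Pi.add_apply, Pi.mul_apply, id_eq]; ring)
  have hrp : HasDerivAt (fun y : ℝ => y ^ (ν/2)) (ν/2 * x ^ (ν/2-1)) x :=
    Real.hasDerivAt_rpow_const (Or.inl hx.ne')
  have hD : HasDerivAt (fun y => y ^ (ν/2) * (g ν y)^2)
      ((ν/2 * x ^ (ν/2-1)) * (g ν x)^2 + x ^ (ν/2) * (2 * g ν x ^ 1 * g1 ν x)) x :=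
    hrp.mul ((hasDerivAt_g hν x).pow 2)
  have hDne : x ^ (ν/2) * (g ν x)^2 ≠ 0 := by
    have := Real.rpow_pos_of_pos hx (ν/2)
    have := g_pos hν hx.le
    positivity
  exact hN.div hD hDne

lemma deriv_G_neg (hν : 1 ≤ ν) {x : ℝ} (hx : 0 < x) : deriv (G ν) x < 0 := by
  rw [(hasDerivAt_G hν hx).deriv]
  have ha := g_pos hν hx.le
  have hq : 0 < x ^ (ν/2-1) := Real.rpow_pos_of_pos hx _
  have hp : 0 < x ^ (ν/2) := Real.rpow_pos_of_pos hx _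
  apply div_neg_of_neg_of_pos
  · have hpq : x ^ (ν/2) = x ^ (ν/2-1) * x := by
      rw [← Real.rpow_add_one hx.ne' (ν/2-1)]
      norm_num
    have hode : x * g2 ν x = g ν x - (ν+1) * g1 ν x := by
      have := g_ode hν x
      linarith
    have hΦ := Phi_pos hν hx
    have hid : (ν * g1 ν x + 2*(1 * g1 ν x + x * g2 ν x)) * (x ^ (ν/2) * (g ν x)^2) -
        (ν * g ν x + 2*x*g1 ν x) *
          ((ν/2 * x ^ (ν/2-1)) * (g ν x)^2 + x ^ (ν/2) * (2 * g ν x ^ 1 * g1 ν x))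
        = -(x ^ (ν/2-1) * g ν x *
            (8*x^2*(g1 ν x)^2 + 8*ν*x*(g1 ν x)*(g ν x) + (ν^2 - 4*x)*(g ν x)^2))/2 := by
      rw [hpq, hode]
      ring
    rw [hid]
    have : 0 < x ^ (ν/2-1) * g ν x *
        (8*x^2*(g1 ν x)^2 + 8*ν*x*(g1 ν x)*(g ν x) + (ν^2 - 4*x)*(g ν x)^2) :=
      mul_pos (mul_pos hq ha) hΦ
    linarith
  · positivity

lemma strictAntiOn_G (hν : 1 ≤ ν) : StrictAntiOn (G ν) (Ioi 0) := by
  apply strictAntiOn_of_deriv_neg (convex_Ioi 0)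
  · intro y hy
    exact ((hasDerivAt_G hν hy).continuousAt).continuousWithinAt
  · intro y hy
    rw [interior_Ioi] at hy
    exact deriv_G_neg hν hy

end BesselAux7

namespace BesselAux8
open BesselAux BesselAux2 BesselAux3 BesselAux4 BesselAux5 BesselAux6 BesselAux7

variable {ν : ℝ}

lemma besselI_eq (hν : 1 ≤ ν) {u : ℝ} (hu : 0 < u) :
    besselI ν u = (u/2) ^ ν * g ν (u^2/4) := by
  rw [besselI]
  have hq : 0 < u/2 := by linarith
  have hterm : ∀ n : ℕ, (u / 2) ^ (2 * (n : ℝ) + ν) / ((n.factorial : ℝ) * Real.Gamma ((n : ℝ) + ν + 1))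
      = (u/2) ^ ν * (c ν n * (u^2/4)^n) := by
    intro n
    have h1 : (u / 2) ^ (2 * (n : ℝ) + ν) = (u/2) ^ (2*(n:ℝ)) * (u/2) ^ ν :=
      Real.rpow_add hq _ _
    have h2 : (u/2) ^ (2*(n:ℝ)) = ((u/2)^(2*n : ℕ) : ℝ) := by
      rw [← Real.rpow_natCast (u/2) (2*n)]
      push_cast
      ring_nf
    have h3 : ((u/2):ℝ)^(2*n : ℕ) = (u^2/4)^n := by
      rw [pow_mul]
      congr 1
      ring
    rw [h1, h2, h3, c]
    field_simp
  rw [tsum_congr hterm, tsum_mul_left]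
  rfl

lemma hasDerivAt_besselI (hν : 1 ≤ ν) {u : ℝ} (hu : 0 < u) :
    HasDerivAt (besselI ν)
      ((u/2) ^ (ν-1) * ((ν/2) * g ν (u^2/4) + (u^2/4) * g1 ν (u^2/4))) u := by
  have hq : 0 < u/2 := by linarith
  -- derivative of the explicit representative
  have hhalf : HasDerivAt (fun y : ℝ => y/2) (1/2) u := by
    simpa using (hasDerivAt_id u).div_const 2
  have hrpow : HasDerivAt (fun y : ℝ => (y/2) ^ ν) (ν * (u/2) ^ (ν-1) * (1/2)) u := by
    have h := (Real.hasDerivAt_rpow_const (x := u/2) (p := ν) (Or.inl hq.ne')).comp u hhalf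
    simpa [Function.comp_def] using h
  have hinner : HasDerivAt (fun y : ℝ => y^2/4) (2*u/4) u := by
    have := (hasDerivAt_pow 2 u).div_const 4
    simpa using this
  have hgc : HasDerivAt (fun y : ℝ => g ν (y^2/4)) (g1 ν (u^2/4) * (2*u/4)) u := by
    have h := (hasDerivAt_g hν (u^2/4)).comp u hinner
    simpa [Function.comp_def] using h
  have hmain : HasDerivAt (fun y : ℝ => (y/2) ^ ν * g ν (y^2/4))
      ((ν * (u/2) ^ (ν-1) * (1/2)) * g ν (u^2/4) + (u/2) ^ ν * (g1 ν (u^2/4) * (2*u/4))) u :=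
    hrpow.mul hgc
  have hEq : besselI ν =ᶠ[nhds u] (fun y : ℝ => (y/2) ^ ν * g ν (y^2/4)) := by
    filter_upwards [isOpen_Ioi.mem_nhds (show u ∈ Ioi (0:ℝ) from hu)] with y hy
    exact besselI_eq hν hy
  have hval : (ν * (u/2) ^ (ν-1) * (1/2)) * g ν (u^2/4) + (u/2) ^ ν * (g1 ν (u^2/4) * (2*u/4))
      = (u/2) ^ (ν-1) * ((ν/2) * g ν (u^2/4) + (u^2/4) * g1 ν (u^2/4)) := by
    have hpow : (u/2) ^ ν = (u/2) ^ (ν-1) * (u/2) := by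
      rw [← Real.rpow_add_one hq.ne' (ν-1)]
      norm_num
    rw [hpow]
    ring
  rw [← hval]
  exact hmain.congr_of_eventuallyEq hEq

lemma target_eq (hν : 1 ≤ ν) {u : ℝ} (hu : 0 < u) :
    u * deriv (besselI ν) u / (besselI ν u) ^ 2 = G ν (u^2/4) := by
  have hq : 0 < u/2 := by linarith
  have hx : 0 < u^2/4 := by positivity
  have ha := g_pos hν hx.le
  have hd : deriv (besselI ν) u
      = (u/2) ^ (ν-1) * ((ν/2) * g ν (u^2/4) + (u^2/4) * g1 ν (u^2/4)) :=
    (hasDerivAt_besselI hν hu).deriv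
  have hb : besselI ν u = (u/2) ^ ν * g ν (u^2/4) := besselI_eq hν hu
  have hxp : (u^2/4) ^ (ν/2) = (u/2) ^ ν := by
    have h1 : (u^2/4 : ℝ) = (u/2)^(2:ℕ) := by ring
    rw [h1, ← Real.rpow_natCast (u/2) 2, ← Real.rpow_mul hq.le]
    congr 1
    push_cast
    ring
  have hpow : (u/2) ^ ν = (u/2) ^ (ν-1) * (u/2) := by
    rw [← Real.rpow_add_one hq.ne' (ν-1)]
    norm_num
  rw [hd, hb, G, hxp, hpow]
  have hqq : (0:ℝ) < (u/2) ^ (ν-1) := Real.rpow_pos_of_pos hq _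
  field_simp

end BesselAux8

open BesselAux BesselAux3 BesselAux7 BesselAux8 in
theorem besselI_mul_deriv_div_sq_strictAnti (ν : ℝ) (hν : 1 ≤ ν) :
    StrictAntiOn (fun u : ℝ => u * deriv (besselI ν) u / (besselI ν u) ^ 2) (Ioi 0) := by
  intro x hx y hy hxy
  rw [mem_Ioi] at hx hy
  simp only
  rw [target_eq hν hx, target_eq hν hy]
  apply strictAntiOn_G hν (by simpa using pow_pos hx 2 : x^2/4 ∈ Ioi (0:ℝ))
    (by simpa using pow_pos hy 2 : y^2/4 ∈ Ioi (0:ℝ))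
  have : x^2 < y^2 := by nlinarith
  linarith
end

section
/- For every ν > -1, the function u ↦ u·I_ν'(u)/I_ν(u) is strictly increasing on (0, ∞); equivalently, I_ν is strictly geometrically convex on (0, ∞). -/
set_option maxHeartbeats 1000000

open Real MeasureTheory Set
open Filter

noncomputable def bc (ν : ℝ) (n : ℕ) : ℝ := 1 / ((n.factorial : ℝ) * Real.Gamma ((n : ℝ) + ν + 1))

noncomputable def bA (ν x : ℝ) : ℝ := ∑' n : ℕ, (n:ℝ) * bc ν n * x ^ n

noncomputable def bB (ν x : ℝ) : ℝ := ∑' n : ℕ, bc ν n * x ^ n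

lemma bc_pos {ν : ℝ} (hν : -1 < ν) (n : ℕ) : 0 < bc ν n := by
  have h1 : (0:ℝ) < (n:ℝ) + ν + 1 := by have : (0:ℝ) ≤ n := n.cast_nonneg; linarith
  have hG := Real.Gamma_pos_of_pos h1
  have hf : (0:ℝ) < n.factorial := by positivity
  exact div_pos one_pos (mul_pos hf hG)

lemma bc_rec {ν : ℝ} (hν : -1 < ν) (n : ℕ) :
    bc ν n = ((n:ℝ) + 1) * ((n:ℝ) + ν + 1) * bc ν (n+1) := by
  have h1 : (0:ℝ) < (n:ℝ) + ν + 1 := by have : (0:ℝ) ≤ n := n.cast_nonneg; linarith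
  have hG := Real.Gamma_pos_of_pos h1
  have hG' : Real.Gamma (((n:ℕ)+1 : ℕ) + ν + 1) = ((n:ℝ) + ν + 1) * Real.Gamma ((n:ℝ) + ν + 1) := by
    push_cast
    rw [show (n:ℝ) + 1 + ν + 1 = ((n:ℝ) + ν + 1) + 1 by ring, Real.Gamma_add_one h1.ne']
  unfold bc
  rw [hG']
  push_cast [Nat.factorial_succ]
  field_simp

lemma summable_main {ν : ℝ} (hν : -1 < ν) {x : ℝ} (hx : 0 ≤ x) :
    Summable (fun n : ℕ => ((n:ℝ) + 1) * bc ν n * x ^ n) := by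
  rcases eq_or_lt_of_le hx with rfl | hx
  · apply summable_of_ne_finset_zero (s := {0})
    intro n hn
    simp only [Finset.mem_singleton] at hn
    simp [zero_pow hn]
  · apply summable_of_ratio_norm_eventually_le (r := 1/2) (by norm_num)
    filter_upwards [eventually_atTop.2 ⟨⌈4 * x - ν - 1⌉₊, fun n hn => hn⟩] with n hn
    have hn' : 4 * x - ν - 1 ≤ (n:ℝ) := by
      calc 4 * x - ν - 1 ≤ (⌈4 * x - ν - 1⌉₊ : ℝ) := Nat.le_ceil _
      _ ≤ (n:ℝ) := Nat.cast_le.2 hn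
    have h4x : 4 * x ≤ (n:ℝ) + ν + 1 := by linarith
    have hd := bc_pos hν (n+1)
    have hc := bc_pos hν n
    have hxn : (0:ℝ) < x ^ n := pow_pos hx n
    have hnν : (0:ℝ) < (n:ℝ) + ν + 1 := by nlinarith
    rw [Real.norm_eq_abs, Real.norm_eq_abs, abs_of_pos, abs_of_pos]
    · rw [bc_rec hν n]
      push_cast
      rw [pow_succ]
      nlinarith [mul_pos hd hxn, mul_pos (mul_pos hd hxn) hnν,
        mul_nonneg (mul_nonneg hd.le hxn.le) (Nat.cast_nonneg n : (0:ℝ) ≤ n),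
        mul_pos (mul_pos hd hxn) hx,
        mul_nonneg (mul_nonneg (mul_nonneg hd.le hxn.le) (Nat.cast_nonneg n : (0:ℝ) ≤ n)) hnν.le]
    · positivity
    · positivity

lemma summable_bB {ν : ℝ} (hν : -1 < ν) {x : ℝ} (hx : 0 ≤ x) :
    Summable (fun n : ℕ => bc ν n * x ^ n) := by
  refine (summable_main hν hx).of_nonneg_of_le
    (fun n => mul_nonneg (bc_pos hν n).le (pow_nonneg hx n)) fun n => ?_
  have h := (bc_pos hν n).le
  have hp : (0:ℝ) ≤ x ^ n := pow_nonneg hx n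
  nlinarith [mul_nonneg h hp, Nat.cast_nonneg (α := ℝ) n]

lemma summable_bA {ν : ℝ} (hν : -1 < ν) {x : ℝ} (hx : 0 ≤ x) :
    Summable (fun n : ℕ => (n:ℝ) * bc ν n * x ^ n) := by
  refine (summable_main hν hx).of_nonneg_of_le
    (fun n => mul_nonneg (mul_nonneg (Nat.cast_nonneg n) (bc_pos hν n).le) (pow_nonneg hx n))
    fun n => ?_
  have h := (bc_pos hν n).le
  have hp : (0:ℝ) ≤ x ^ n := pow_nonneg hx n
  nlinarith [mul_nonneg h hp]

lemma bB_pos {ν : ℝ} (hν : -1 < ν) {x : ℝ} (hx : 0 ≤ x) : 0 < bB ν x := by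
  refine Summable.tsum_pos (summable_bB hν hx)
    (fun n => mul_nonneg (bc_pos hν n).le (pow_nonneg hx n)) 0 ?_
  simpa using bc_pos hν 0

lemma key_ineq_aux {x y : ℝ} (hx : 0 < x) (hxy : x < y) (n k : ℕ) :
    (n:ℝ) * x ^ n * y ^ (n+k) + ((n+k:ℕ):ℝ) * x ^ (n+k) * y ^ n ≤
      (n:ℝ) * y ^ n * x ^ (n+k) + ((n+k:ℕ):ℝ) * y ^ (n+k) * x ^ n := by
  have hy : 0 < y := hx.trans hxy
  have hk : x ^ k ≤ y ^ k := pow_le_pow_left₀ hx.le hxy.le k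
  have h0 : 0 ≤ (k:ℝ) * (x ^ n * y ^ n) * (y ^ k - x ^ k) :=
    mul_nonneg (mul_nonneg (Nat.cast_nonneg k)
      (mul_nonneg (pow_pos hx n).le (pow_pos hy n).le)) (sub_nonneg.2 hk)
  have heq : (n:ℝ) * y ^ n * x ^ (n+k) + ((n:ℝ)+(k:ℝ)) * y ^ (n+k) * x ^ n
      - ((n:ℝ) * x ^ n * y ^ (n+k) + ((n:ℝ)+(k:ℝ)) * x ^ (n+k) * y ^ n)
      = (k:ℝ) * (x ^ n * y ^ n) * (y ^ k - x ^ k) := by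
    rw [pow_add, pow_add]; ring
  push_cast
  linarith [heq, h0]

lemma key_ineq {x y : ℝ} (hx : 0 < x) (hxy : x < y) (n m : ℕ) :
    (n:ℝ) * x ^ n * y ^ m + (m:ℝ) * x ^ m * y ^ n ≤
      (n:ℝ) * y ^ n * x ^ m + (m:ℝ) * y ^ m * x ^ n := by
  rcases le_total n m with h | h
  · obtain ⟨k, rfl⟩ := Nat.exists_eq_add_of_le h
    linarith [key_ineq_aux hx hxy n k]
  · obtain ⟨k, rfl⟩ := Nat.exists_eq_add_of_le h
    linarith [key_ineq_aux hx hxy m k]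

lemma cross {ν : ℝ} (hν : -1 < ν) {x y : ℝ} (hx : 0 < x) (hxy : x < y) :
    bA ν x * bB ν y < bA ν y * bB ν x := by
  have hy : 0 < y := hx.trans hxy
  set L : ℕ × ℕ → ℝ := fun p => ((p.1 : ℝ) * bc ν p.1 * x ^ p.1) * (bc ν p.2 * y ^ p.2) with hL
  set R : ℕ × ℕ → ℝ := fun p => ((p.1 : ℝ) * bc ν p.1 * y ^ p.1) * (bc ν p.2 * x ^ p.2) with hR
  have hLs : Summable L := (summable_bA hν hx.le).mul_of_nonneg (summable_bB hν hy.le)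
    (fun n => mul_nonneg (mul_nonneg (Nat.cast_nonneg n) (bc_pos hν n).le) (pow_nonneg hx.le n))
    (fun n => mul_nonneg (bc_pos hν n).le (pow_nonneg hy.le n))
  have hRs : Summable R := (summable_bA hν hy.le).mul_of_nonneg (summable_bB hν hx.le)
    (fun n => mul_nonneg (mul_nonneg (Nat.cast_nonneg n) (bc_pos hν n).le) (pow_nonneg hy.le n))
    (fun n => mul_nonneg (bc_pos hν n).le (pow_nonneg hx.le n))
  have e : ℕ × ℕ ≃ ℕ × ℕ := Equiv.prodComm ℕ ℕ
  have hLsw : Summable (fun p : ℕ × ℕ => L p.swap) :=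
    ((Equiv.prodComm ℕ ℕ).summable_iff (f := L)).2 hLs
  have hRsw : Summable (fun p : ℕ × ℕ => R p.swap) :=
    ((Equiv.prodComm ℕ ℕ).summable_iff (f := R)).2 hRs
  have hLsweq : ∑' p : ℕ × ℕ, L p.swap = ∑' p, L p := (Equiv.prodComm ℕ ℕ).tsum_eq L
  have hRsweq : ∑' p : ℕ × ℕ, R p.swap = ∑' p, R p := (Equiv.prodComm ℕ ℕ).tsum_eq R
  have hAB1 : bA ν x * bB ν y = ∑' p, L p :=
    Summable.tsum_mul_tsum (summable_bA hν hx.le) (summable_bB hν hy.le) hLs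
  have hAB2 : bA ν y * bB ν x = ∑' p, R p :=
    Summable.tsum_mul_tsum (summable_bA hν hy.le) (summable_bB hν hx.le) hRs
  have hmain : ∑' p : ℕ × ℕ, (L p + L p.swap) / 2 < ∑' p : ℕ × ℕ, (R p + R p.swap) / 2 := by
    refine Summable.tsum_lt_tsum (i := ((1:ℕ), (0:ℕ))) (f := fun p => (L p + L p.swap)/2) ?_ ?_
      ((hLs.add hLsw).div_const 2) ((hRs.add hRsw).div_const 2)
    · rintro ⟨n, m⟩
      have hc : (0:ℝ) ≤ bc ν n * bc ν m := mul_nonneg (bc_pos hν n).le (bc_pos hν m).le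
      have hk := key_ineq hx hxy n m
      simp only [hL, hR, Prod.swap_prod_mk]
      have h2 : ((n : ℝ) * bc ν n * x ^ n) * (bc ν m * y ^ m)
            + ((m : ℝ) * bc ν m * x ^ m) * (bc ν n * y ^ n)
          ≤ ((n : ℝ) * bc ν n * y ^ n) * (bc ν m * x ^ m)
            + ((m : ℝ) * bc ν m * y ^ m) * (bc ν n * x ^ n) := by
        have := mul_le_mul_of_nonneg_left hk hc
        calc ((n : ℝ) * bc ν n * x ^ n) * (bc ν m * y ^ m)
              + ((m : ℝ) * bc ν m * x ^ m) * (bc ν n * y ^ n)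
            = (bc ν n * bc ν m) * ((n:ℝ) * x ^ n * y ^ m + (m:ℝ) * x ^ m * y ^ n) := by ring
          _ ≤ (bc ν n * bc ν m) * ((n:ℝ) * y ^ n * x ^ m + (m:ℝ) * y ^ m * x ^ n) := this
          _ = ((n : ℝ) * bc ν n * y ^ n) * (bc ν m * x ^ m)
              + ((m : ℝ) * bc ν m * y ^ m) * (bc ν n * x ^ n) := by ring
      linarith
    · have hc := mul_pos (bc_pos hν 1) (bc_pos hν 0)
      simp only [hL, hR, Prod.swap_prod_mk]
      push_cast
      simp only [pow_one, pow_zero]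
      nlinarith
  calc bA ν x * bB ν y = ∑' p, L p := hAB1
    _ = (∑' p, L p + ∑' p : ℕ × ℕ, L p.swap) / 2 := by rw [hLsweq]; ring
    _ = ∑' p : ℕ × ℕ, (L p + L p.swap) / 2 := by
        rw [← Summable.tsum_add hLs hLsw, ← tsum_div_const]
    _ < ∑' p : ℕ × ℕ, (R p + R p.swap) / 2 := hmain
    _ = (∑' p, R p + ∑' p : ℕ × ℕ, R p.swap) / 2 := by
        rw [← Summable.tsum_add hRs hRsw, ← tsum_div_const]
    _ = ∑' p, R p := by rw [hRsweq]; ring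
    _ = bA ν y * bB ν x := hAB2.symm

lemma rpow_split {t : ℝ} (ht : 0 < t) (ν : ℝ) (n : ℕ) :
    t ^ (2 * (n:ℝ) + ν) = (t ^ 2) ^ n * t ^ ν := by
  rw [show 2 * (n:ℝ) + ν = ((2*n : ℕ) : ℝ) + ν by push_cast; ring, Real.rpow_add ht,
    Real.rpow_natCast, pow_mul]

lemma rpow_split' {t : ℝ} (ht : 0 < t) (ν : ℝ) (n : ℕ) :
    t ^ (2 * (n:ℝ) + ν - 1) = (t ^ 2) ^ n * t ^ (ν - 1) := by
  rw [show 2 * (n:ℝ) + ν - 1 = ((2*n : ℕ) : ℝ) + (ν - 1) by push_cast; ring, Real.rpow_add ht,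
    Real.rpow_natCast, pow_mul]

lemma besselI_factor {ν : ℝ} (hν : -1 < ν) {u : ℝ} (hu : 0 < u) :
    besselI ν u = (u/2) ^ ν * bB ν ((u/2) ^ 2) := by
  have ht : (0:ℝ) < u/2 := by linarith
  unfold besselI bB
  rw [← tsum_mul_left]
  refine tsum_congr fun n => ?_
  rw [rpow_split ht, bc]
  ring

lemma sum2AB {ν : ℝ} (hν : -1 < ν) {x : ℝ} (hx : 0 ≤ x) :
    ∑' n : ℕ, (2 * (n:ℝ) + ν) * (bc ν n * x ^ n) = 2 * bA ν x + ν * bB ν x := by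
  have h : (fun n : ℕ => (2 * (n:ℝ) + ν) * (bc ν n * x ^ n))
      = fun n : ℕ => 2 * ((n:ℝ) * bc ν n * x ^ n) + ν * (bc ν n * x ^ n) :=
    funext fun n => by ring
  rw [h, Summable.tsum_add ((summable_bA hν hx).mul_left 2) ((summable_bB hν hx).mul_left ν),
    tsum_mul_left, tsum_mul_left, bA, bB]

lemma besselI_hasDerivAt {ν : ℝ} (hν : -1 < ν) {u : ℝ} (hu : 0 < u) :
    HasDerivAt (besselI ν)
      ((u/2) ^ ν * (2 * bA ν ((u/2) ^ 2) + ν * bB ν ((u/2) ^ 2)) / u) u := by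
  have hq : (0:ℝ) ≤ ((u+1)/2) ^ 2 := by positivity
  set q : ℝ := ((u+1)/2) ^ 2 with hqdef
  set M : ℝ := max ((u/4) ^ (ν-1)) (((u+1)/2) ^ (ν-1)) with hM
  have hMpos : 0 < M := lt_of_lt_of_le (Real.rpow_pos_of_pos (by linarith) (ν-1)) (le_max_left _ _)
  set g : ℕ → ℝ → ℝ := fun n y =>
    (y / 2) ^ (2 * (n : ℝ) + ν) / ((n.factorial : ℝ) * Real.Gamma ((n : ℝ) + ν + 1)) with hg
  set g' : ℕ → ℝ → ℝ := fun (n : ℕ) (y : ℝ) =>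
    (2 * (n : ℝ) + ν) * ((y / 2) ^ (2 * (n : ℝ) + ν - 1) * (1/2) * bc ν n) with hg'
  set bound : ℕ → ℝ := fun n => (2 * (n:ℝ) + |ν|) * (bc ν n * q ^ n) * (M/2) with hbound
  have hbs : Summable bound := by
    have h : bound = fun (n : ℕ) => M * ((n:ℝ) * bc ν n * q ^ n) + (|ν| * M / 2) * (bc ν n * q ^ n) :=
      funext fun n => by simp only [hbound]; ring
    rw [h]
    exact ((summable_bA hν hq).mul_left M).add ((summable_bB hν hq).mul_left _)
  have hgd : ∀ n : ℕ, ∀ y ∈ Ioo (u/2) (u+1), HasDerivAt (g n) (g' n y) y := by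
    intro n y hy
    have hy2 : (0:ℝ) < y/2 := by have := hy.1; linarith
    have h1 : HasDerivAt (fun z : ℝ => z/2) (1/2) y := (hasDerivAt_id y).div_const 2
    have h2 : HasDerivAt (fun w : ℝ => w ^ (2*(n:ℝ)+ν))
        ((2*(n:ℝ)+ν) * (y/2) ^ (2*(n:ℝ)+ν-1)) (y/2) :=
      Real.hasDerivAt_rpow_const (Or.inl hy2.ne')
    have h3 := (h2.comp y h1).div_const ((n.factorial : ℝ) * Real.Gamma ((n : ℝ) + ν + 1))
    refine h3.congr_deriv ?_
    simp only [hg', bc]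
    ring
  have hgb : ∀ n : ℕ, ∀ y ∈ Ioo (u/2) (u+1), ‖g' n y‖ ≤ bound n := by
    intro n y hy
    have hy2 : (0:ℝ) < y/2 := by have := hy.1; linarith
    have hyu : y/2 ≤ (u+1)/2 := by have := hy.2; linarith
    have hyl : u/4 ≤ y/2 := by have := hy.1; linarith
    have hbcp := bc_pos hν n
    have hsplit := rpow_split' hy2 ν n
    have h2 : ((y/2) ^ 2) ^ n ≤ q ^ n :=
      pow_le_pow_left₀ (by positivity) (by nlinarith) n
    have h3 : (y/2) ^ (ν-1) ≤ M := by
      rcases le_or_gt 0 (ν-1) with h | h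
      · exact le_trans (Real.rpow_le_rpow hy2.le hyu h) (le_max_right _ _)
      · exact le_trans (Real.rpow_le_rpow_of_nonpos (by linarith) hyl h.le) (le_max_left _ _)
    have h4 : |2*(n:ℝ)+ν| ≤ 2*(n:ℝ) + |ν| := by
      refine (abs_add_le _ _).trans ?_
      rw [abs_of_nonneg (by positivity : (0:ℝ) ≤ 2*(n:ℝ))]
    have hpos2 : (0:ℝ) ≤ (y/2) ^ (2*(n:ℝ)+ν-1) * (1/2) * bc ν n := by
      have := Real.rpow_pos_of_pos hy2 (2*(n:ℝ)+ν-1)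
      positivity
    calc ‖g' n y‖ = |2*(n:ℝ)+ν| * ((y/2) ^ (2*(n:ℝ)+ν-1) * (1/2) * bc ν n) := by
          rw [hg']
          simp only [Real.norm_eq_abs, abs_mul,
            abs_of_pos (Real.rpow_pos_of_pos hy2 (2*(n:ℝ)+ν-1)), abs_of_pos hbcp,
            abs_of_pos (by norm_num : (0:ℝ) < 1/2)]
      _ ≤ (2*(n:ℝ) + |ν|) * (q ^ n * (y/2) ^ (ν-1) * (1/2) * bc ν n) := by
          rw [hsplit]
          have hstep : ((y/2) ^ 2) ^ n * (y/2) ^ (ν-1) * (1/2) * bc ν n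
              ≤ q ^ n * (y/2) ^ (ν-1) * (1/2) * bc ν n := by
            have := Real.rpow_pos_of_pos hy2 (ν-1)
            gcongr
          exact mul_le_mul h4 hstep (by
            have := Real.rpow_pos_of_pos hy2 (ν-1); positivity) (by positivity)
      _ ≤ (2*(n:ℝ) + |ν|) * (q ^ n * M * (1/2) * bc ν n) := by
          have hq' : (0:ℝ) ≤ q ^ n := pow_nonneg hq n
          have : q ^ n * (y/2) ^ (ν-1) * (1/2) * bc ν n ≤ q ^ n * M * (1/2) * bc ν n := by
            gcongr
          exact mul_le_mul_of_nonneg_left this (by positivity)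
      _ = bound n := by rw [hbound]; ring
  have hsum_at : Summable (fun n => g n u) := by
    have h : (fun n => g n u) = fun n => (u/2) ^ ν * (bc ν n * ((u/2)^2) ^ n) := by
      funext n
      simp only [hg]
      rw [rpow_split (by linarith : (0:ℝ) < u/2), bc]
      ring
    rw [h]
    exact (summable_bB hν (by positivity)).mul_left _
  have hmem : u ∈ Ioo (u/2) (u+1) := by constructor <;> linarith
  have hder := hasDerivAt_tsum_of_isPreconnected hbs isOpen_Ioo (convex_Ioo _ _).isPreconnected
    hgd hgb hmem hsum_at hmem
  have heq : ∑' n, g' n u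
      = (u/2) ^ ν * (2 * bA ν ((u/2) ^ 2) + ν * bB ν ((u/2) ^ 2)) / u := by
    have ht : (0:ℝ) < u/2 := by linarith
    have h : (fun n => g' n u)
        = fun (n : ℕ) => ((u/2) ^ (ν-1) / 2) * ((2 * (n:ℝ) + ν) * (bc ν n * ((u/2)^2) ^ n)) := by
      funext n
      simp only [hg']
      rw [rpow_split' ht]
      ring
    rw [h, tsum_mul_left, sum2AB hν (by positivity)]
    rw [Real.rpow_sub ht, Real.rpow_one]
    field_simp
  rw [← heq]
  exact hder

lemma besselI_pos {ν : ℝ} (hν : -1 < ν) {u : ℝ} (hu : 0 < u) : 0 < besselI ν u := by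
  rw [besselI_factor hν hu]
  exact mul_pos (Real.rpow_pos_of_pos (by linarith) ν) (bB_pos hν (by positivity))

lemma G_eq {ν : ℝ} (hν : -1 < ν) {u : ℝ} (hu : 0 < u) :
    u * deriv (besselI ν) u / besselI ν u
      = ν + 2 * (bA ν ((u/2) ^ 2) / bB ν ((u/2) ^ 2)) := by
  rw [(besselI_hasDerivAt hν hu).deriv, besselI_factor hν hu]
  have hB := bB_pos hν (by positivity : (0:ℝ) ≤ (u/2)^2)
  have hr : (0:ℝ) < (u/2) ^ ν := Real.rpow_pos_of_pos (by linarith) ν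
  set a := bA ν ((u/2) ^ 2) with ha
  set b := bB ν ((u/2) ^ 2) with hb
  set r := (u/2) ^ ν with hrr
  field_simp
  ring

theorem besselI_logDeriv_strictMono_geomConvex (ν : ℝ) (hν : -1 < ν) :
    StrictMonoOn (fun u : ℝ => u * deriv (besselI ν) u / besselI ν u) (Ioi 0) ∧
    ∀ u₁ ∈ Ioi (0 : ℝ), ∀ u₂ ∈ Ioi (0 : ℝ), u₁ ≠ u₂ → ∀ l ∈ Ioo (0 : ℝ) 1,
      besselI ν (u₁ ^ l * u₂ ^ (1 - l)) < besselI ν u₁ ^ l * besselI ν u₂ ^ (1 - l) := by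
  have hmono : StrictMonoOn (fun u : ℝ => u * deriv (besselI ν) u / besselI ν u) (Ioi 0) := by
    intro u₁ h1 u₂ h2 h12
    have h1' : (0:ℝ) < u₁ := h1
    have h2' : (0:ℝ) < u₂ := h2
    simp only
    rw [G_eq hν h1', G_eq hν h2']
    have hx1 : (0:ℝ) < (u₁/2) ^ 2 := by positivity
    have hx12 : (u₁/2) ^ 2 < (u₂/2) ^ 2 := by nlinarith
    have hc := cross hν hx1 hx12
    have hB1 := bB_pos hν hx1.le
    have hB2 := bB_pos hν (by positivity : (0:ℝ) ≤ (u₂/2)^2)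
    have hdiv : bA ν ((u₁/2) ^ 2) / bB ν ((u₁/2) ^ 2)
        < bA ν ((u₂/2) ^ 2) / bB ν ((u₂/2) ^ 2) :=
      (div_lt_div_iff₀ hB1 hB2).2 (by linarith)
    linarith
  refine ⟨hmono, ?_⟩
  set F : ℝ → ℝ := fun t => Real.log (besselI ν (Real.exp t)) with hF
  have hFd : ∀ t : ℝ, HasDerivAt F
      ((fun u : ℝ => u * deriv (besselI ν) u / besselI ν u) (Real.exp t)) t := by
    intro t
    have hu : (0:ℝ) < Real.exp t := Real.exp_pos t
    have h2 := besselI_hasDerivAt hν hu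
    have h3 := h2.comp t (Real.hasDerivAt_exp t)
    have h4 := (Real.hasDerivAt_log (besselI_pos hν hu).ne').comp t h3
    refine h4.congr_deriv ?_
    simp only
    rw [h2.deriv, div_eq_mul_inv, div_eq_mul_inv]
    ring
  have hconv : StrictConvexOn ℝ univ F := by
    refine StrictMono.strictConvexOn_univ_of_deriv
      (Differentiable.continuous fun t => (hFd t).differentiableAt) ?_
    intro t1 t2 h
    rw [(hFd t1).deriv, (hFd t2).deriv]
    exact hmono (mem_Ioi.2 (Real.exp_pos t1)) (mem_Ioi.2 (Real.exp_pos t2)) (Real.exp_lt_exp.2 h)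
  intro u₁ hu₁ u₂ hu₂ hne l hl
  have hu₁' : (0:ℝ) < u₁ := hu₁
  have hu₂' : (0:ℝ) < u₂ := hu₂
  have hlog : Real.log u₁ ≠ Real.log u₂ := fun h =>
    hne (by rw [← Real.exp_log hu₁', ← Real.exp_log hu₂', h])
  have hb' : (0:ℝ) < 1 - l := by have := hl.2; linarith
  have hab' : l + (1 - l) = 1 := by ring
  have h := hconv.2 (mem_univ (Real.log u₁)) (mem_univ (Real.log u₂)) hlog hl.1 hb' hab'
  simp only [smul_eq_mul, hF] at h
  rw [Real.exp_log hu₁', Real.exp_log hu₂'] at h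
  have key : ∀ a b : ℝ, 0 < a → 0 < b →
      Real.exp (l * Real.log a + (1-l) * Real.log b) = a ^ l * b ^ (1-l) := by
    intro a b ha hb
    rw [Real.rpow_def_of_pos ha, Real.rpow_def_of_pos hb, ← Real.exp_add]
    congr 1
    ring
  have h' := Real.exp_lt_exp.2 h
  rw [Real.exp_log (besselI_pos hν (Real.exp_pos _)), key u₁ u₂ hu₁' hu₂',
    Real.exp_add] at h'
  calc besselI ν (u₁ ^ l * u₂ ^ (1 - l)) < Real.exp (l * Real.log (besselI ν u₁)) *
        Real.exp ((1-l) * Real.log (besselI ν u₂)) := h'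
    _ = besselI ν u₁ ^ l * besselI ν u₂ ^ (1 - l) := by
        rw [Real.rpow_def_of_pos (besselI_pos hν hu₁'),
          Real.rpow_def_of_pos (besselI_pos hν hu₂')]
        congr 1 <;> (congr 1; ring)
end

section
/- For every ν ≥ 1/2, the function u ↦ √u·I_ν(u) is strictly log-concave on (0, ∞), i.e., u ↦ ln(√u·I_ν(u)) is strictly concave on (0, ∞). -/
open Real MeasureTheory Set

namespace SqrtBesselAux

/-- Coefficient family: `bb μ n = 1/(n! Γ(n+μ+1))`. -/
noncomputable def bb (μ : ℝ) (n : ℕ) : ℝ :=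
  1 / ((n.factorial : ℝ) * Real.Gamma ((n : ℝ) + μ + 1))

lemma gamma_arg_pos {μ : ℝ} (hμ : 0 < μ + 1) (n : ℕ) : 0 < (n : ℝ) + μ + 1 := by
  have : (0:ℝ) ≤ n := Nat.cast_nonneg n
  linarith

lemma bb_pos {μ : ℝ} (hμ : 0 < μ + 1) (n : ℕ) : 0 < bb μ n := by
  have h := Real.Gamma_pos_of_pos (gamma_arg_pos hμ n)
  have : (0:ℝ) < n.factorial := by exact_mod_cast n.factorial_pos
  unfold bb; positivity

/-- Downward recurrence. -/
lemma bb_rec {μ : ℝ} (hμ : 0 < μ + 1) (n : ℕ) :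
    bb μ n = ((n : ℝ) + 1) * ((n : ℝ) + μ + 1) * bb μ (n + 1) := by
  have h1 : ((n:ℝ) + μ + 1) ≠ 0 := (gamma_arg_pos hμ n).ne'
  have h2 : Real.Gamma ((↑(n+1):ℝ) + μ + 1) = ((n:ℝ)+μ+1) * Real.Gamma ((n:ℝ)+μ+1) := by
    rw [show ((↑(n+1):ℝ) + μ + 1) = ((n:ℝ)+μ+1) + 1 by push_cast; ring, Real.Gamma_add_one h1]
  have hG : Real.Gamma ((n:ℝ)+μ+1) ≠ 0 := (Real.Gamma_pos_of_pos (gamma_arg_pos hμ n)).ne'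
  have hf : ((n.factorial:ℝ)) ≠ 0 := by exact_mod_cast n.factorial_pos.ne'
  have h3 : (((n+1).factorial : ℕ):ℝ) = ((n:ℝ)+1) * n.factorial := by
    rw [Nat.factorial_succ]; push_cast; ring
  unfold bb
  rw [h2, h3]
  field_simp

/-- Shift of order. -/
lemma bb_shift {μ : ℝ} (hμ : 0 < μ + 1) (n : ℕ) :
    bb μ n = ((n : ℝ) + μ + 1) * bb (μ + 1) n := by
  have h1 : ((n:ℝ) + μ + 1) ≠ 0 := (gamma_arg_pos hμ n).ne'
  have h2 : Real.Gamma ((n:ℝ) + (μ+1) + 1) = ((n:ℝ)+μ+1) * Real.Gamma ((n:ℝ)+μ+1) := by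
    rw [show ((n:ℝ) + (μ+1) + 1) = ((n:ℝ)+μ+1) + 1 by ring, Real.Gamma_add_one h1]
  have hG : Real.Gamma ((n:ℝ)+μ+1) ≠ 0 := (Real.Gamma_pos_of_pos (gamma_arg_pos hμ n)).ne'
  have hf : ((n.factorial:ℝ)) ≠ 0 := by exact_mod_cast n.factorial_pos.ne'
  unfold bb
  rw [h2]
  field_simp

/-- Derivative coefficient identity. -/
lemma bb_deriv_coeff {μ : ℝ} (n : ℕ) :
    ((n : ℝ) + 1) * bb μ (n + 1) = bb (μ + 1) n := by
  have h2 : ((↑(n+1):ℝ) + μ + 1) = ((n:ℝ) + (μ+1) + 1) := by push_cast; ring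
  have h3 : (((n+1).factorial : ℕ):ℝ) = ((n:ℝ)+1) * n.factorial := by
    rw [Nat.factorial_succ]; push_cast; ring
  have hf : ((n.factorial:ℝ)) ≠ 0 := by exact_mod_cast n.factorial_pos.ne'
  unfold bb
  rw [h2, h3]
  rcases eq_or_ne (Real.Gamma ((n:ℝ) + (μ+1) + 1)) 0 with h | h
  · rw [h]; simp
  · field_simp

lemma bb_le {μ : ℝ} (hμ : 0 ≤ μ) (n : ℕ) :
    bb μ n ≤ bb μ 0 / n.factorial := by
  have hμ1 : (0:ℝ) < μ + 1 := by linarith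
  induction n with
  | zero => simp
  | succ n ih =>
    have hp := bb_pos hμ1 (n+1)
    have hrec := bb_rec hμ1 n
    have hn1 : (0:ℝ) < (n:ℝ) + 1 := by positivity
    have hfpos : (0:ℝ) < (n.factorial:ℝ) := by exact_mod_cast n.factorial_pos
    have h1 : bb μ (n+1) * ((n:ℝ)+1) ≤ bb μ n := by
      rw [hrec]
      nlinarith [mul_nonneg (mul_nonneg hn1.le hp.le)
        (show (0:ℝ) ≤ (n:ℝ) + μ by positivity)]
    have h2 : bb μ (n+1) ≤ bb μ n / ((n:ℝ)+1) := by
      rw [le_div_iff₀ hn1]; exact h1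
    have h3 : bb μ n / ((n:ℝ)+1) ≤ (bb μ 0 / n.factorial) / ((n:ℝ)+1) := by gcongr
    have h4 : (bb μ 0 / (n.factorial:ℝ)) / ((n:ℝ)+1) = bb μ 0 / ((n+1).factorial : ℕ) := by
      rw [Nat.factorial_succ]; push_cast; rw [div_div]; ring_nf
    calc bb μ (n+1) ≤ bb μ n / ((n:ℝ)+1) := h2
      _ ≤ (bb μ 0 / n.factorial) / ((n:ℝ)+1) := h3
      _ = bb μ 0 / ((n+1).factorial : ℕ) := h4

lemma summable_bb {μ : ℝ} (hμ : 0 ≤ μ) (x : ℝ) :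
    Summable (fun n : ℕ => bb μ n * x ^ n) := by
  have hμ1 : (0:ℝ) < μ + 1 := by linarith
  have hb : Summable (fun n : ℕ => bb μ 0 * (|x| ^ n / n.factorial)) :=
    (Real.summable_pow_div_factorial |x|).mul_left _
  have hbound : ∀ n : ℕ, ‖bb μ n * x ^ n‖ ≤ bb μ 0 * (|x| ^ n / n.factorial) := by
    intro n
    have hfpos : (0:ℝ) < (n.factorial:ℝ) := by exact_mod_cast n.factorial_pos
    rw [norm_mul, norm_pow, Real.norm_eq_abs, Real.norm_eq_abs,
      abs_of_pos (bb_pos hμ1 n)]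
    calc bb μ n * |x| ^ n ≤ (bb μ 0 / n.factorial) * |x| ^ n := by
          exact mul_le_mul_of_nonneg_right (bb_le hμ n) (by positivity)
      _ = bb μ 0 * (|x| ^ n / n.factorial) := by ring
  exact Summable.of_norm (Summable.of_nonneg_of_le (fun n => norm_nonneg _) hbound hb)

/-- The entire function `FF μ x = ∑ x^n/(n! Γ(n+μ+1))`. -/
noncomputable def FF (μ : ℝ) (x : ℝ) : ℝ := ∑' n : ℕ, bb μ n * x ^ n

lemma FF_pos {μ : ℝ} (hμ : 0 ≤ μ) {x : ℝ} (hx : 0 ≤ x) : 0 < FF μ x := by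
  have hμ1 : (0:ℝ) < μ + 1 := by linarith
  apply Summable.tsum_pos (summable_bb hμ x)
    (fun n => mul_nonneg (bb_pos hμ1 n).le (pow_nonneg hx n)) 0
  simpa using bb_pos hμ1 0

lemma hasDerivAt_FF {μ : ℝ} (hμ : 0 ≤ μ) (x : ℝ) :
    HasDerivAt (FF μ) (FF (μ + 1) x) x := by
  have hμ1 : (0:ℝ) < μ + 1 := by linarith
  set M : ℝ := |x| + 1 with hMdef
  have hxM : x ∈ Ioo (-M) M :=
    ⟨by simp only [hMdef]; linarith [neg_abs_le x], by simp only [hMdef]; linarith [le_abs_self x]⟩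
  have hMnn : 0 ≤ M := by positivity
  -- the dominating sequence
  set u : ℕ → ℝ := fun n => Nat.casesOn n 0 (fun m => bb (μ+1) m * M ^ m) with hudef
  have hu : Summable u := by
    apply (summable_nat_add_iff 1).mp
    exact summable_bb (by linarith) M
  have hbound : ∀ (n : ℕ) (y : ℝ), y ∈ Ioo (-M) M →
      ‖bb μ n * ((n:ℝ) * y ^ (n-1))‖ ≤ u n := by
    intro n y hy
    have hyM : |y| ≤ M := by
      rw [abs_le]; exact ⟨hy.1.le, hy.2.le⟩
    cases n with
    | zero => simp [hudef]
    | succ m =>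
      have : ‖bb μ (m+1) * ((↑(m+1):ℝ) * y ^ (m+1-1))‖
          = (((m:ℝ)+1) * bb μ (m+1)) * |y| ^ m := by
        rw [norm_mul, norm_mul, norm_pow, Real.norm_eq_abs, Real.norm_eq_abs,
          Real.norm_eq_abs, abs_of_pos (bb_pos hμ1 (m+1))]
        push_cast
        rw [abs_of_nonneg (by positivity : (0:ℝ) ≤ (m:ℝ)+1)]
        ring_nf
      rw [this, bb_deriv_coeff (m)]
      show bb (μ+1) m * |y| ^ m ≤ bb (μ+1) m * M ^ m
      exact mul_le_mul_of_nonneg_left (pow_le_pow_left₀ (abs_nonneg y) hyM m)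
        (bb_pos (by linarith) m).le
  have hder := hasDerivAt_tsum_of_isPreconnected hu isOpen_Ioo
    (convex_Ioo (-M) M).isPreconnected
    (fun n y _ => (hasDerivAt_pow n y).const_mul (bb μ n))
    hbound hxM (summable_bb hμ x) hxM
  have hsum' : Summable (fun n : ℕ => bb μ n * ((n:ℝ) * x ^ (n-1))) :=
    Summable.of_norm (hu.of_nonneg_of_le (fun n => norm_nonneg _)
      (fun n => hbound n x hxM))
  have hval : (∑' n : ℕ, bb μ n * ((n:ℝ) * x ^ (n-1))) = FF (μ+1) x := by
    rw [Summable.tsum_eq_zero_add hsum']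
    simp only [Nat.cast_zero, zero_mul, mul_zero, zero_add]
    unfold FF
    apply tsum_congr
    intro n
    rw [show (n+1) - 1 = n from rfl, ← bb_deriv_coeff n]
    push_cast
    ring
  rw [← hval]
  exact hder

/-- The three-term recurrence between consecutive orders. -/
lemma FF_identity {μ : ℝ} (hμ : 0 ≤ μ) (x : ℝ) :
    x * FF (μ + 2) x = FF μ x - (μ + 1) * FF (μ + 1) x := by
  have hμ1 : (0:ℝ) < μ + 1 := by linarith
  have hμ2 : (0:ℝ) < (μ+1) + 1 := by linarith
  have h0 : Summable (fun n : ℕ => bb μ n * x ^ n) := summable_bb hμ x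
  have h1 : Summable (fun n : ℕ => bb (μ+1) n * x ^ n) := summable_bb (by linarith) x
  have hn : Summable (fun n : ℕ => (n:ℝ) * bb (μ+1) n * x ^ n) := by
    apply Summable.congr (f := fun n => bb μ n * x ^ n - (μ+1) * (bb (μ+1) n * x ^ n))
    · exact h0.sub (h1.mul_left _)
    · intro n
      rw [bb_shift hμ1 n]
      ring
  have hRHS : FF μ x - (μ + 1) * FF (μ + 1) x
      = ∑' n : ℕ, (n:ℝ) * bb (μ+1) n * x ^ n := by
    unfold FF
    rw [← tsum_mul_left, ← Summable.tsum_sub h0 (h1.mul_left _)]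
    apply tsum_congr
    intro n
    rw [bb_shift hμ1 n]
    ring
  have hLHS : x * FF (μ + 2) x = ∑' n : ℕ, bb (μ+2) n * x ^ (n+1) := by
    unfold FF
    rw [← tsum_mul_left]
    apply tsum_congr
    intro n
    ring
  rw [hRHS, hLHS, Summable.tsum_eq_zero_add hn]
  simp only [Nat.cast_zero, zero_mul, zero_add]
  apply tsum_congr
  intro n
  have := bb_deriv_coeff (μ := μ+1) n
  rw [show μ + 1 + 1 = μ + 2 by ring] at this
  rw [← this]
  push_cast
  ring

/-! ### Cauchy product coefficients -/

/-- Convolution of coefficient sequences. -/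
noncomputable def SP (f g : ℕ → ℝ) (n : ℕ) : ℝ :=
  ∑ i ∈ Finset.range (n + 1), f i * g (n - i)

set_option maxHeartbeats 1000000 in
lemma cauchy_SP (f g : ℕ → ℝ) (x : ℝ) (hf : Summable (fun n => f n * x ^ n))
    (hf' : Summable (fun n => ‖f n * x ^ n‖)) (hg : Summable (fun n => g n * x ^ n))
    (hg' : Summable (fun n => ‖g n * x ^ n‖)) :
    ((∑' n : ℕ, f n * x ^ n) * (∑' n : ℕ, g n * x ^ n) = ∑' n : ℕ, SP f g n * x ^ n)
      ∧ Summable (fun n : ℕ => SP f g n * x ^ n) := by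
  have hfg := summable_mul_of_summable_norm (f := fun n => f n * x ^ n)
    (g := fun n => g n * x ^ n) hf' hg'
  have hdiag : ∀ n : ℕ, ∑ k ∈ Finset.range (n+1),
      (f k * x ^ k) * (g (n-k) * x ^ (n-k)) = SP f g n * x ^ n := by
    intro n
    simp only [SP, Finset.sum_mul]
    apply Finset.sum_congr rfl
    intro k hk
    have hk' : k ≤ n := Finset.mem_range_succ_iff.mp hk
    rw [mul_mul_mul_comm, ← pow_add, Nat.add_sub_cancel' hk']
  constructor
  · rw [Summable.tsum_mul_tsum_eq_tsum_sum_range hf hg hfg]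
    exact tsum_congr hdiag
  · have hsum0 := summable_sum_mul_range_of_summable_mul
      (f := fun n => f n * x ^ n) (g := fun n => g n * x ^ n) hfg
    exact hsum0.congr hdiag

section Coeff

variable (ν : ℝ)

noncomputable def DD (n : ℕ) : ℝ := SP (bb (ν + 1)) (bb (ν + 1)) n
noncomputable def EE (n : ℕ) : ℝ := SP (bb (ν + 1)) (bb ν) n
noncomputable def AA (n : ℕ) : ℝ := SP (bb ν) (bb ν) n

/-- Coefficients of the positivity series. -/
noncomputable def cc : ℕ → ℝ
  | 0 => (ν + 1/2) * AA ν 0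
  | 1 => (4*ν + 2) * EE ν 0 + (ν + 1/2) * AA ν 1 - 4 * AA ν 0
  | (n+2) => 4 * DD ν n + (4*ν + 2) * EE ν (n+1) + (ν + 1/2) * AA ν (n+2) - 4 * AA ν (n+1)

end Coeff

/-- The logarithmic derivative. -/
noncomputable def GG (ν u : ℝ) : ℝ :=
  (ν + 1/2) * u⁻¹ + u * FF (ν+1) (u^2/4) / (2 * FF ν (u^2/4))

lemma hasDerivAt_q (u : ℝ) : HasDerivAt (fun v : ℝ => v^2/4) (u/2) u := by
  have := (hasDerivAt_pow 2 u).div_const 4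
  refine this.congr_deriv ?_
  norm_num
  ring

section Combinatorics

variable {ν : ℝ} (hν : (1:ℝ)/2 ≤ ν)
include hν

lemma hν1 : (0:ℝ) < ν + 1 := by linarith
lemma hν2 : (0:ℝ) < (ν + 1) + 1 := by linarith

lemma DD_pos (n : ℕ) : 0 < DD ν n := by
  have hb2 : (0:ℝ) < (ν + 1) + 1 := by linarith
  simp only [DD, SP]
  apply Finset.sum_pos
  · exact fun i _ => mul_pos (bb_pos hb2 i) (bb_pos hb2 _)
  · exact Finset.nonempty_range_add_one

lemma AA_zero_pos : 0 < AA ν 0 := by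
  have hb1 : (0:ℝ) < ν + 1 := by linarith
  simp only [AA, SP, zero_add, Finset.sum_range_one, Nat.sub_zero]
  exact mul_pos (bb_pos hb1 0) (bb_pos hb1 0)

/-- Weighted sum reduction (L4). -/
lemma weighted_sum (n : ℕ) :
    ∑ i ∈ Finset.range (n + 2),
      bb (ν+1) i * bb (ν+1) (n + 1 - i) *
        (((n:ℝ) + 1 - i) * ((n:ℝ) + 1 - i + ν + 1)) = DD ν n := by
  have hb2 : (0:ℝ) < (ν + 1) + 1 := by linarith
  rw [Finset.sum_range_succ]
  push_cast
  simp only [sub_self, zero_mul, mul_zero, add_zero]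
  simp only [DD, SP]
  apply Finset.sum_congr rfl
  intro i hi
  have hi' : i ≤ n := Finset.mem_range_succ_iff.mp hi
  have hidx : n + 1 - i = (n - i) + 1 := by omega
  rw [hidx, bb_rec hb2 (n - i), Nat.cast_sub hi']
  ring

/-- Reflection of weighted sums. -/
lemma reflect_sum (n : ℕ) (w : ℕ → ℝ) :
    ∑ i ∈ Finset.range (n + 1), bb (ν+1) i * bb (ν+1) (n - i) * w i
      = ∑ i ∈ Finset.range (n + 1), bb (ν+1) i * bb (ν+1) (n - i) * w (n - i) := by
  rw [← Finset.sum_range_reflect (fun i => bb (ν+1) i * bb (ν+1) (n - i) * w i) (n+1)]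
  apply Finset.sum_congr rfl
  intro i hi
  have hi' : i ≤ n := Finset.mem_range_succ_iff.mp hi
  have h1 : n + 1 - 1 - i = n - i := by omega
  have h2 : n - (n - i) = i := Nat.sub_sub_self hi'
  rw [h1, h2]
  ring

/-- The key recurrence for `DD` (creative telescoping). -/
lemma DD_rec (n : ℕ) :
    2 * (2*((n:ℝ)+1) + 2*ν + 1) * DD ν n
      = ((n:ℝ)+1) * (((n:ℝ)+1) + ν + 1) * (((n:ℝ)+1) + 2*ν + 2) * DD ν (n+1) := by
  have hb2 : (0:ℝ) < (ν + 1) + 1 := by linarith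
  set s : ℕ → ℝ := fun i => bb (ν+1) i * bb (ν+1) (n+2-i) *
      ((i:ℝ) * ((i:ℝ)+ν+1) * ((n:ℝ)+2-i) * ((n:ℝ)+3+ν-i)
        * (3*((n:ℝ)+1)+2*ν+2-2*(i:ℝ))) with hs
  have key : ∀ i ∈ Finset.range (n+2), s (i+1) - s i =
      bb (ν+1) i * bb (ν+1) (n+1-i) *
        (2*(2*((n:ℝ)+1)+2*ν+1) * (((n:ℝ) + 1 - i) * ((n:ℝ) + 1 - i + ν + 1))
          - ((n:ℝ)+1)*(((n:ℝ)+1) + ν+1)*(((n:ℝ)+1) + 2*ν+2)) := by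
    intro i hi
    have hi' : i ≤ n + 1 := Finset.mem_range_succ_iff.mp hi
    have hidx1 : n + 2 - (i+1) = n + 1 - i := by omega
    have hidx2 : (n + 1 - i) + 1 = n + 2 - i := by omega
    have hcast : ((n + 1 - i : ℕ):ℝ) = (n:ℝ) + 1 - i := by
      rw [Nat.cast_sub hi']; push_cast; ring
    have h1 : bb (ν+1) i = ((i:ℝ)+1)*((i:ℝ)+(ν+1)+1) * bb (ν+1) (i+1) := bb_rec hb2 i
    have h2 : bb (ν+1) (n+1-i)
        = (((n+1-i : ℕ):ℝ)+1)*(((n+1-i : ℕ):ℝ)+(ν+1)+1) * bb (ν+1) (n+2-i) := by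
      rw [← hidx2]; exact bb_rec hb2 (n+1-i)
    simp only [hs, hidx1]
    rw [h1, h2, hcast]
    push_cast
    ring
  have tel : ∑ i ∈ Finset.range (n+2),
      (bb (ν+1) i * bb (ν+1) (n+1-i) *
        (2*(2*((n:ℝ)+1)+2*ν+1) * (((n:ℝ) + 1 - i) * ((n:ℝ) + 1 - i + ν + 1))
          - ((n:ℝ)+1)*(((n:ℝ)+1) + ν+1)*(((n:ℝ)+1) + 2*ν+2))) = 0 := by
    rw [← Finset.sum_congr rfl key, Finset.sum_range_sub s (n+2)]
    have hs0 : s 0 = 0 := by simp only [hs]; push_cast; ring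
    have hsN : s (n+2) = 0 := by simp only [hs]; push_cast; ring
    rw [hs0, hsN, sub_zero]
  have split : ∑ i ∈ Finset.range (n+2),
      (bb (ν+1) i * bb (ν+1) (n+1-i) *
        (2*(2*((n:ℝ)+1)+2*ν+1) * (((n:ℝ) + 1 - i) * ((n:ℝ) + 1 - i + ν + 1))
          - ((n:ℝ)+1)*(((n:ℝ)+1) + ν+1)*(((n:ℝ)+1) + 2*ν+2)))
      = 2*(2*((n:ℝ)+1)+2*ν+1) *
          (∑ i ∈ Finset.range (n+2), bb (ν+1) i * bb (ν+1) (n+1-i) *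
            (((n:ℝ) + 1 - i) * ((n:ℝ) + 1 - i + ν + 1)))
        - ((n:ℝ)+1)*(((n:ℝ)+1) + ν+1)*(((n:ℝ)+1) + 2*ν+2) *
          (∑ i ∈ Finset.range (n+2), bb (ν+1) i * bb (ν+1) (n+1-i)) := by
    rw [Finset.mul_sum, Finset.mul_sum, ← Finset.sum_sub_distrib]
    apply Finset.sum_congr rfl
    intro i _
    ring
  rw [split, weighted_sum hν n] at tel
  have hDD : DD ν (n+1) = ∑ i ∈ Finset.range (n+2), bb (ν+1) i * bb (ν+1) (n+1-i) := rfl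
  rw [← hDD] at tel
  linarith

lemma EE_eq (n : ℕ) : 2 * EE ν n = ((n:ℝ) + 2*ν + 2) * DD ν n := by
  have hb1 : (0:ℝ) < ν + 1 := by linarith
  have hE1 : EE ν n = ∑ i ∈ Finset.range (n+1),
      bb (ν+1) i * bb (ν+1) (n - i) * (((n:ℝ) - i) + ν + 1) := by
    simp only [EE, SP]
    apply Finset.sum_congr rfl
    intro i hi
    have hi' : i ≤ n := Finset.mem_range_succ_iff.mp hi
    rw [bb_shift hb1 (n - i), Nat.cast_sub hi']
    ring
  have hE2 : EE ν n = ∑ i ∈ Finset.range (n+1),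
      bb (ν+1) i * bb (ν+1) (n - i) * (((n:ℝ) - ((n - i : ℕ):ℝ)) + ν + 1) := by
    rw [hE1]
    exact reflect_sum hν n (fun j => ((n:ℝ) - j) + ν + 1)
  have hE3 : EE ν n = ∑ i ∈ Finset.range (n+1),
      bb (ν+1) i * bb (ν+1) (n - i) * ((i:ℝ) + ν + 1) := by
    rw [hE2]
    apply Finset.sum_congr rfl
    intro i hi
    have hi' : i ≤ n := Finset.mem_range_succ_iff.mp hi
    rw [Nat.cast_sub hi']
    ring
  have : 2 * EE ν n = ∑ i ∈ Finset.range (n+1),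
      bb (ν+1) i * bb (ν+1) (n - i) * ((n:ℝ) + 2*ν + 2) := by
    rw [two_mul]
    nth_rewrite 1 [hE1]
    nth_rewrite 1 [hE3]
    rw [← Finset.sum_add_distrib]
    apply Finset.sum_congr rfl
    intro i _
    ring
  rw [this, ← Finset.sum_mul]
  have hDD : DD ν n = ∑ i ∈ Finset.range (n+1), bb (ν+1) i * bb (ν+1) (n-i) := rfl
  rw [hDD]
  ring

lemma AA_succ (n : ℕ) :
    2 * AA ν (n+1)
      = ((((n:ℝ)+1))^2 + 3*(ν+1)*(((n:ℝ)+1)) + 2*(ν+1)^2) * DD ν (n+1) - 2 * DD ν n := by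
  have hb1 : (0:ℝ) < ν + 1 := by linarith
  -- express AA (n+1) as a weighted DD-sum
  have hA1 : AA ν (n+1) = ∑ i ∈ Finset.range (n+2),
      bb (ν+1) i * bb (ν+1) (n+1 - i) *
        (((i:ℝ) + ν + 1) * (((n:ℝ) + 1 - i) + ν + 1)) := by
    simp only [AA, SP]
    apply Finset.sum_congr rfl
    intro i hi
    have hi' : i ≤ n + 1 := Finset.mem_range_succ_iff.mp hi
    rw [bb_shift hb1 i, bb_shift hb1 (n+1-i), Nat.cast_sub hi']
    push_cast
    ring
  -- the combined weight
  have hsum : AA ν (n+1) + DD ν n = ∑ i ∈ Finset.range (n+2),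
      bb (ν+1) i * bb (ν+1) (n+1 - i) *
        ((((i:ℝ) + ν + 1) * (((n:ℝ) + 1 - i) + ν + 1))
          + (((n:ℝ) + 1 - i) * ((n:ℝ) + 1 - i + ν + 1))) := by
    rw [hA1, ← weighted_sum hν n, ← Finset.sum_add_distrib]
    apply Finset.sum_congr rfl
    intro i _
    ring
  -- reflection
  have hrefl : AA ν (n+1) + DD ν n = ∑ i ∈ Finset.range (n+2),
      bb (ν+1) i * bb (ν+1) (n+1 - i) *
        (((((n:ℝ) + 1 - i) + ν + 1) * ((i:ℝ) + ν + 1))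
          + ((i:ℝ) * ((i:ℝ) + ν + 1))) := by
    rw [hsum]
    have := reflect_sum hν (n+1)
      (fun j => (((j:ℝ) + ν + 1) * (((n:ℝ) + 1 - j) + ν + 1))
          + (((n:ℝ) + 1 - j) * ((n:ℝ) + 1 - j + ν + 1)))
    rw [this]
    apply Finset.sum_congr rfl
    intro i hi
    have hi' : i ≤ n + 1 := Finset.mem_range_succ_iff.mp hi
    have hcast : ((n + 1 - i : ℕ):ℝ) = (n:ℝ) + 1 - i := by
      rw [Nat.cast_sub hi']; push_cast; ring
    rw [hcast]
    ring
  have h2 : 2 * (AA ν (n+1) + DD ν n) = ∑ i ∈ Finset.range (n+2),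
      bb (ν+1) i * bb (ν+1) (n+1 - i) *
        ((((n:ℝ)+1))^2 + 3*(ν+1)*(((n:ℝ)+1)) + 2*(ν+1)^2) := by
    rw [two_mul]
    nth_rewrite 1 [hsum]
    nth_rewrite 1 [hrefl]
    rw [← Finset.sum_add_distrib]
    apply Finset.sum_congr rfl
    intro i _
    ring
  rw [← Finset.sum_mul] at h2
  have hDD : DD ν (n+1) = ∑ i ∈ Finset.range (n+2), bb (ν+1) i * bb (ν+1) (n+1-i) := rfl
  rw [← hDD] at h2
  linarith

lemma AA_eq_zero : AA ν 0 = (ν+1)^2 * DD ν 0 := by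
  have hb1 : (0:ℝ) < ν + 1 := by linarith
  simp only [AA, DD, SP, zero_add, Finset.sum_range_one, Nat.sub_zero]
  rw [bb_shift hb1 0]
  push_cast
  ring

lemma cc_zero_pos : 0 < cc ν 0 := by
  show 0 < (ν + 1/2) * AA ν 0
  exact mul_pos (by linarith) (AA_zero_pos hν)

lemma cc_one_nonneg : 0 ≤ cc ν 1 := by
  have h1 := DD_rec hν 0
  have h2 := EE_eq hν 0
  have h3 := AA_succ hν 0
  have h4 := AA_eq_zero hν
  have hD0 := DD_pos hν 0
  push_cast at h1 h2 h3
  have hA1 : AA ν 1 = (2*ν+2) * DD ν 0 := by linear_combination (1/2)*h3 - (1/2)*h1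
  have hgoal : cc ν 1 = (ν+1)*(2*ν-1) * DD ν 0 := by
    show (4*ν + 2) * EE ν 0 + (ν + 1/2) * AA ν 1 - 4 * AA ν 0 = (ν+1)*(2*ν-1) * DD ν 0
    linear_combination (2*ν+1)*h2 + (ν+1/2)*hA1 - 4*h4
  rw [hgoal]
  have : (0:ℝ) ≤ (ν+1)*(2*ν-1) := by nlinarith
  exact mul_nonneg this hD0.le

set_option maxHeartbeats 1000000 in
lemma cc_nonneg (n : ℕ) : 0 ≤ cc ν n := by
  match n with
  | 0 => exact (cc_zero_pos hν).le
  | 1 => exact cc_one_nonneg hν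
  | (m+2) =>
    have h1 := DD_rec hν (m+1)
    have h2 := DD_rec hν m
    have h3 := EE_eq hν (m+1)
    have h4 := AA_succ hν (m+1)
    have h5 := AA_succ hν m
    push_cast at h1 h2 h3 h4 h5
    have hm : (0:ℝ) ≤ (m:ℝ) := Nat.cast_nonneg m
    have hv : (0:ℝ) ≤ ν := by linarith
    show 0 ≤ 4 * DD ν m + (4*ν + 2) * EE ν (m+1) + (ν + 1/2) * AA ν (m+2) - 4 * AA ν (m+1)
    have key : (4*(2*((m:ℝ)+2)+2*ν+1)*(2*((m:ℝ)+2)+2*ν-1)) *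
        (4 * DD ν m + (4*ν + 2) * EE ν (m+1) + (ν + 1/2) * AA ν (m+2) - 4 * AA ν (m+1))
        = (2*ν-1) *
          (36 + 126*ν + 134*ν^2 + 56*ν^3 + 8*ν^4 + 33*(m:ℝ) + 99*(m:ℝ)*ν + 74*(m:ℝ)*ν^2
            + 16*(m:ℝ)*ν^3 + 10*(m:ℝ)^2 + 25*(m:ℝ)^2*ν + 10*(m:ℝ)^2*ν^2 + (m:ℝ)^3
            + 2*(m:ℝ)^3*ν) * DD ν (m+2) := by
      linear_combination
        (-9 - 24*ν - 12*ν^2 - 4*(m:ℝ) - 8*(m:ℝ)*ν) * h1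
        + (80 + 32*ν + 32*(m:ℝ)) * h2
        + (60 + 184*ν + 144*ν^2 + 32*ν^3 + 64*(m:ℝ) + 160*(m:ℝ)*ν + 64*(m:ℝ)*ν^2
            + 16*(m:ℝ)^2 + 32*(m:ℝ)^2*ν) * h3
        + (15 + 46*ν + 36*ν^2 + 8*ν^3 + 16*(m:ℝ) + 40*(m:ℝ)*ν + 16*(m:ℝ)*ν^2
            + 4*(m:ℝ)^2 + 8*(m:ℝ)^2*ν) * h4
        + (-120 - 128*ν - 32*ν^2 - 128*(m:ℝ) - 64*(m:ℝ)*ν - 32*(m:ℝ)^2) * h5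
    have hQ : (0:ℝ) ≤ 36 + 126*ν + 134*ν^2 + 56*ν^3 + 8*ν^4 + 33*(m:ℝ) + 99*(m:ℝ)*ν
        + 74*(m:ℝ)*ν^2 + 16*(m:ℝ)*ν^3 + 10*(m:ℝ)^2 + 25*(m:ℝ)^2*ν + 10*(m:ℝ)^2*ν^2
        + (m:ℝ)^3 + 2*(m:ℝ)^3*ν := by
      have l1 : (0:ℝ) ≤ (m:ℝ)*ν := mul_nonneg hm hv
      have l2 : (0:ℝ) ≤ (m:ℝ)*ν^2 := mul_nonneg hm (by positivity)
      have l3 : (0:ℝ) ≤ (m:ℝ)*ν^3 := mul_nonneg hm (by positivity)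
      have l4 : (0:ℝ) ≤ (m:ℝ)^2*ν := mul_nonneg (by positivity) hv
      have l5 : (0:ℝ) ≤ (m:ℝ)^2*ν^2 := mul_nonneg (by positivity) (by positivity)
      have l6 : (0:ℝ) ≤ (m:ℝ)^3 := by positivity
      have l7 : (0:ℝ) ≤ (m:ℝ)^3*ν := mul_nonneg l6 hv
      have l8 : (0:ℝ) ≤ ν^3 := by positivity
      have l9 : (0:ℝ) ≤ (m:ℝ)^2 := by positivity
      have l10 : (0:ℝ) ≤ ν^2 := by positivity
      have l11 : (0:ℝ) ≤ ν^4 := by positivity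
      linarith
    have hfac : (0:ℝ) < 4*(2*((m:ℝ)+2)+2*ν+1)*(2*((m:ℝ)+2)+2*ν-1) := by
      have hA : (0:ℝ) < 2*((m:ℝ)+2)+2*ν+1 := by linarith
      have hB : (0:ℝ) < 2*((m:ℝ)+2)+2*ν-1 := by linarith
      have : (0:ℝ) < 4 := by norm_num
      nlinarith
    have hkey' : (0:ℝ) ≤ (4*(2*((m:ℝ)+2)+2*ν+1)*(2*((m:ℝ)+2)+2*ν-1)) *
        (4 * DD ν m + (4*ν + 2) * EE ν (m+1) + (ν + 1/2) * AA ν (m+2) - 4 * AA ν (m+1)) := by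
      rw [key]
      exact mul_nonneg (mul_nonneg (by linarith) hQ) (DD_pos hν (m+2)).le
    exact (mul_nonneg_iff_of_pos_left hfac).mp hkey'

set_option maxHeartbeats 1000000 in
/-- The main series inequality. -/
lemma key_ineq {x : ℝ} (hx : 0 < x) :
    4*x*(FF ν x)^2
      < 4*x^2*(FF (ν+1) x)^2 + (4*ν+2)*x*(FF (ν+1) x)*(FF ν x) + (ν+1/2)*(FF ν x)^2 := by
  have hν0 : (0:ℝ) ≤ ν := by linarith
  have hν1' : (0:ℝ) ≤ ν + 1 := by linarith
  have hsa : Summable (fun n : ℕ => bb ν n * x ^ n) := summable_bb hν0 x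
  have hsb : Summable (fun n : ℕ => bb (ν+1) n * x ^ n) := summable_bb hν1' x
  have hsa' : Summable (fun n : ℕ => ‖bb ν n * x ^ n‖) := by
    simpa only [Real.norm_eq_abs] using hsa.abs
  have hsb' : Summable (fun n : ℕ => ‖bb (ν+1) n * x ^ n‖) := by
    simpa only [Real.norm_eq_abs] using hsb.abs
  obtain ⟨hFFeq₀, hFFsum₀⟩ := cauchy_SP (bb ν) (bb ν) x hsa hsa' hsa hsa'
  obtain ⟨hTFeq₀, hTFsum₀⟩ := cauchy_SP (bb (ν+1)) (bb ν) x hsb hsb' hsa hsa'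
  obtain ⟨hTTeq₀, hTTsum₀⟩ := cauchy_SP (bb (ν+1)) (bb (ν+1)) x hsb hsb' hsb hsb'
  have hFFeq : FF ν x * FF ν x = ∑' n : ℕ, AA ν n * x ^ n := hFFeq₀
  have hFFsum : Summable (fun n : ℕ => AA ν n * x ^ n) := hFFsum₀
  have hTFeq : FF (ν+1) x * FF ν x = ∑' n : ℕ, EE ν n * x ^ n := hTFeq₀
  have hTFsum : Summable (fun n : ℕ => EE ν n * x ^ n) := hTFsum₀
  have hTTeq : FF (ν+1) x * FF (ν+1) x = ∑' n : ℕ, DD ν n * x ^ n := hTTeq₀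
  have hTTsum : Summable (fun n : ℕ => DD ν n * x ^ n) := hTTsum₀
  clear hFFeq₀ hFFsum₀ hTFeq₀ hTFsum₀ hTTeq₀ hTTsum₀
  -- shifted series
  let g1 : ℕ → ℝ := fun n =>
    if n = 0 then 0 else ((4*ν+2) * EE ν (n-1) - 4 * AA ν (n-1)) * x ^ n
  let g2 : ℕ → ℝ := fun n => if n ≤ 1 then 0 else 4 * DD ν (n-2) * x ^ n
  have hg1succ : ∀ m : ℕ, g1 (m+1) = (4*ν+2) * x * (EE ν m * x ^ m)
      - 4 * x * (AA ν m * x ^ m) := by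
    intro m
    show (if m+1 = 0 then (0:ℝ) else ((4*ν+2) * EE ν (m+1-1) - 4 * AA ν (m+1-1)) * x ^ (m+1)) = _
    rw [if_neg (Nat.succ_ne_zero m), Nat.add_sub_cancel]
    ring
  have hg2succ : ∀ m : ℕ, g2 (m+2) = 4 * x^2 * (DD ν m * x ^ m) := by
    intro m
    show (if m+2 ≤ 1 then (0:ℝ) else 4 * DD ν (m+2-2) * x ^ (m+2)) = _
    rw [if_neg (by omega : ¬ (m+2 ≤ 1))]
    have : m + 2 - 2 = m := by omega
    rw [this]
    ring
  have hg1s : Summable g1 := by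
    apply (summable_nat_add_iff 1).mp
    exact Summable.congr ((hTFsum.mul_left ((4*ν+2)*x)).sub (hFFsum.mul_left (4*x)))
      (fun m => (hg1succ m).symm)
  have hg2s : Summable g2 := by
    apply (summable_nat_add_iff 2).mp
    exact Summable.congr (hTTsum.mul_left (4*x^2)) (fun m => (hg2succ m).symm)
  have hg1eq : ∑' n, g1 n = (4*ν+2) * x * (∑' n, EE ν n * x ^ n)
      - 4 * x * (∑' n, AA ν n * x ^ n) := by
    rw [Summable.tsum_eq_zero_add hg1s]
    have h0 : g1 0 = 0 := rfl
    rw [h0, zero_add, tsum_congr hg1succ,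
      Summable.tsum_sub (hTFsum.mul_left _) (hFFsum.mul_left _), tsum_mul_left, tsum_mul_left]
  have hg2eq : ∑' n, g2 n = 4 * x^2 * (∑' n, DD ν n * x ^ n) := by
    rw [Summable.tsum_eq_zero_add hg2s, Summable.tsum_eq_zero_add ((summable_nat_add_iff 1).mpr hg2s)]
    have h0 : g1 0 = 0 := rfl
    have e0 : g2 0 = 0 := rfl
    have e1 : g2 (0 + 1) = 0 := rfl
    rw [e0, e1, zero_add, zero_add, tsum_congr (fun n => hg2succ n), tsum_mul_left]
  have hccterm : ∀ n : ℕ, cc ν n * x ^ n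
      = (ν+1/2) * (AA ν n * x ^ n) + g1 n + g2 n := by
    intro n
    match n with
    | 0 =>
      have e1 : g1 0 = 0 := rfl
      have e2 : g2 0 = 0 := rfl
      rw [e1, e2]
      show ((ν + 1/2) * AA ν 0) * x ^ 0 = _
      ring
    | 1 =>
      have e2 : g2 1 = 0 := rfl
      rw [hg1succ 0, e2]
      show ((4*ν + 2) * EE ν 0 + (ν + 1/2) * AA ν 1 - 4 * AA ν 0) * x ^ 1 = _
      ring
    | (m+2) =>
      rw [hg1succ (m+1), hg2succ m]
      show (4 * DD ν m + (4*ν + 2) * EE ν (m+1) + (ν + 1/2) * AA ν (m+2)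
        - 4 * AA ν (m+1)) * x ^ (m+2) = _
      ring
  have hccsum : Summable (fun n : ℕ => cc ν n * x ^ n) :=
    Summable.congr (((hFFsum.mul_left (ν+1/2)).add hg1s).add hg2s)
      (fun n => (hccterm n).symm)
  have hcceq : ∑' n, cc ν n * x ^ n
      = (ν+1/2) * (∑' n, AA ν n * x ^ n) + (∑' n, g1 n) + (∑' n, g2 n) := by
    rw [tsum_congr hccterm,
      Summable.tsum_add ((hFFsum.mul_left _).add hg1s) hg2s,
      Summable.tsum_add (hFFsum.mul_left _) hg1s, tsum_mul_left]
  have hpos : 0 < ∑' n, cc ν n * x ^ n := by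
    apply Summable.tsum_pos hccsum
      (fun n => mul_nonneg (cc_nonneg hν n) (pow_nonneg hx.le n)) 0
    simpa using cc_zero_pos hν
  rw [hcceq, hg1eq, hg2eq, ← hFFeq, ← hTFeq, ← hTTeq] at hpos
  nlinarith [hpos]

lemma besselI_eq {u : ℝ} (hu : 0 < u) :
    besselI ν u = (u/2) ^ ν * FF ν (u^2/4) := by
  have hu2 : 0 < u / 2 := by linarith
  unfold besselI FF
  rw [← tsum_mul_left]
  apply tsum_congr
  intro n
  have h1 : (u/2) ^ (2*(n:ℝ) + ν) = (u/2) ^ ν * (u^2/4) ^ n := by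
    rw [Real.rpow_add hu2, show (2*(n:ℝ)) = ((2*n : ℕ):ℝ) by push_cast; ring,
      Real.rpow_natCast, pow_mul]
    have : (u/2)^2 = u^2/4 := by ring
    rw [this]
    ring
  rw [h1]
  unfold bb
  field_simp

lemma log_eq {u : ℝ} (hu : 0 < u) :
    Real.log (Real.sqrt u * besselI ν u)
      = (ν + 1/2) * Real.log u - ν * Real.log 2 + Real.log (FF ν (u^2/4)) := by
  have hν0 : (0:ℝ) ≤ ν := by linarith
  have hu2 : 0 < u / 2 := by linarith
  have hFpos : 0 < FF ν (u^2/4) := FF_pos hν0 (by positivity)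
  have hrpos : 0 < (u/2) ^ ν := Real.rpow_pos_of_pos hu2 ν
  rw [besselI_eq hν hu, ← mul_assoc, Real.log_mul (by positivity) hFpos.ne',
    Real.log_mul (Real.sqrt_pos.mpr hu).ne' hrpos.ne', Real.log_sqrt hu.le,
    Real.log_rpow hu2, Real.log_div hu.ne' two_ne_zero]
  ring

lemma hasDerivAt_g {u : ℝ} (hu : 0 < u) :
    HasDerivAt (fun v : ℝ => (ν + 1/2) * Real.log v - ν * Real.log 2
      + Real.log (FF ν (v^2/4))) (GG ν u) u := by
  have hν0 : (0:ℝ) ≤ ν := by linarith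
  have hFpos : 0 < FF ν (u^2/4) := FF_pos hν0 (by positivity)
  have hcompF : HasDerivAt (fun v : ℝ => FF ν (v^2/4)) (FF (ν+1) (u^2/4) * (u/2)) u :=
    by have h := (hasDerivAt_FF hν0 (u^2/4)).comp u (hasDerivAt_q u); exact h
  have hlog : HasDerivAt (fun v : ℝ => Real.log (FF ν (v^2/4)))
      (FF (ν+1) (u^2/4) * (u/2) / FF ν (u^2/4)) u := hcompF.log hFpos.ne'
  have hlogu : HasDerivAt (fun v : ℝ => (ν + 1/2) * Real.log v - ν * Real.log 2)
      ((ν + 1/2) * u⁻¹) u := by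
    simpa using ((Real.hasDerivAt_log hu.ne').const_mul (ν + 1/2)).sub_const (ν * Real.log 2)
  have := hlogu.add hlog
  refine this.congr_deriv ?_
  unfold GG
  field_simp

set_option maxHeartbeats 1000000 in
lemma hasDerivAt_GG_neg {u : ℝ} (hu : 0 < u) :
    ∃ w, HasDerivAt (GG ν) w u ∧ w < 0 := by
  have hν0 : (0:ℝ) ≤ ν := by linarith
  have hν1 : (0:ℝ) ≤ ν + 1 := by linarith
  set F := FF ν (u^2/4) with hF
  set T := FF (ν+1) (u^2/4) with hT
  set R := FF (ν+2) (u^2/4) with hR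
  have hFpos : 0 < F := FF_pos hν0 (by positivity)
  have hcompF : HasDerivAt (fun v : ℝ => FF ν (v^2/4)) (T * (u/2)) u :=
    by have h := (hasDerivAt_FF hν0 (u^2/4)).comp u (hasDerivAt_q u); exact h
  have hcompT : HasDerivAt (fun v : ℝ => FF (ν+1) (v^2/4)) (R * (u/2)) u := by
    have := (hasDerivAt_FF hν1 (u^2/4)).comp u (hasDerivAt_q u)
    rw [show ν + 1 + 1 = ν + 2 by ring] at this
    exact this
  have hnum : HasDerivAt (fun v : ℝ => v * FF (ν+1) (v^2/4))
      (1 * T + u * (R * (u/2))) u := (hasDerivAt_id u).mul hcompT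
  have hden : HasDerivAt (fun v : ℝ => 2 * FF ν (v^2/4)) (2 * (T * (u/2))) u :=
    hcompF.const_mul 2
  have hdenne : 2 * F ≠ 0 := by positivity
  have hquot := hnum.div hden hdenne
  have hinv : HasDerivAt (fun v : ℝ => (ν + 1/2) * v⁻¹)
      ((ν + 1/2) * (-(u^2)⁻¹)) u := (hasDerivAt_inv hu.ne').const_mul _
  have hGG : HasDerivAt (GG ν)
      ((ν + 1/2) * (-(u^2)⁻¹) +
        ((1 * T + u * (R * (u/2))) * (2 * F) - u * T * (2 * (T * (u/2)))) / (2 * F)^2) u := by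
    have := hinv.add hquot
    exact this
  refine ⟨_, hGG, ?_⟩
  -- show the second derivative is negative
  have hid := FF_identity hν0 (u^2/4)
  rw [← hF, ← hT] at hid
  have hid' : u^2/4 * R = F - (ν+1) * T := by
    rw [← hid]
  have hkey := key_ineq hν (show (0:ℝ) < u^2/4 by positivity)
  rw [← hF, ← hT] at hkey
  have hW : -(4*ν+2)*F^2 + 2*u^2*T*F + u^4*R*F - u^4*T^2 < 0 := by
    have hid2 : u^4*R*F = 4*u^2*F^2 - 4*(ν+1)*u^2*T*F := by
      linear_combination (4*u^2*F) * hid'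
    nlinarith [hkey]
  have heq : (ν + 1/2) * (-(u^2)⁻¹) +
      ((1 * T + u * (R * (u/2))) * (2 * F) - u * T * (2 * (T * (u/2)))) / (2 * F)^2
      = (-(4*ν+2)*F^2 + 2*u^2*T*F + u^4*R*F - u^4*T^2) / (4 * u^2 * F^2) := by
    field_simp
    ring
  rw [heq]
  exact div_neg_of_neg_of_pos hW (by positivity)

end Combinatorics

end SqrtBesselAux

open SqrtBesselAux in
theorem sqrt_mul_besselI_strictLogConcave (ν : ℝ) (hν : 1 / 2 ≤ ν) :
    StrictConcaveOn ℝ (Ioi 0) (fun u : ℝ => Real.log (Real.sqrt u * besselI ν u)) := by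
  set g : ℝ → ℝ := fun v => (ν + 1/2) * Real.log v - ν * Real.log 2
      + Real.log (FF ν (v^2/4)) with hg
  have hder : ∀ u ∈ Ioi (0:ℝ), HasDerivAt g (GG ν u) u := fun u hu => hasDerivAt_g hν hu
  have hcont : ContinuousOn g (Ioi 0) :=
    fun u hu => (hder u hu).continuousAt.continuousWithinAt
  have h2nd : ∀ u ∈ interior (Ioi (0:ℝ)), deriv^[2] g u < 0 := by
    intro u hu
    rw [interior_Ioi] at hu
    obtain ⟨w, hw, hwneg⟩ := hasDerivAt_GG_neg hν hu
    have hEq : deriv g =ᶠ[nhds u] GG ν :=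
      (isOpen_Ioi.eventually_mem hu).mono (fun v hv => (hder v hv).deriv)
    have h2 : deriv^[2] g u = deriv (deriv g) u := by
      rw [Function.iterate_succ_apply', Function.iterate_one]
    rw [h2, Filter.EventuallyEq.deriv_eq hEq, hw.deriv]
    exact hwneg
  have hconc : StrictConcaveOn ℝ (Ioi 0) g :=
    strictConcaveOn_of_deriv2_neg (convex_Ioi 0) hcont h2nd
  obtain ⟨hc, hineq⟩ := hconc
  refine ⟨hc, fun x hx y hy hxy a b ha hb hab => ?_⟩
  have hmem : a • x + b • y ∈ Ioi (0:ℝ) := hc hx hy ha.le hb.le hab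
  have e1 : Real.log (Real.sqrt x * besselI ν x) = g x := log_eq hν hx
  have e2 : Real.log (Real.sqrt y * besselI ν y) = g y := log_eq hν hy
  have e3 : Real.log (Real.sqrt (a • x + b • y) * besselI ν (a • x + b • y))
      = g (a • x + b • y) := log_eq hν hmem
  simp only [e1, e2, e3]
  exact hineq hx hy hxy ha hb hab
end
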